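/- arXiv:2206.04555 — 12 statements merged into one kernel-verified Lean document; each statement's English description precedes it below -/
import Mathlib

section
/- For every prime p with p ≥ 13 and p ≡ 1 (mod 4), there exists a weight w on the additive cyclic group ZMod p such that no weight on ZMod p that is 𝒫-equivalent to w is gapless (that is, ℤ_p has at least one invariant metric that is not 𝒫-interval). -/
/-- A weight on a group `G`: vanishes exactly at the identity, is symmetric
under inversion, and satisfies the triangle inequality. -/
def IsWeight {G : Type*} [Group G] (w : G → ℕ) : Prop :=
  (∀ x, w x = 0 ↔ x = 1) ∧ (∀ x, w x⁻¹ = w x) ∧ ∀ x y, w (x * y) ≤ w x + w y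

/-- A weight is gapless if its set of values is an initial segment of `ℕ`. -/
def Gapless {G : Type*} (w : G → ℕ) : Prop :=
  ∀ g : G, ∀ m : ℕ, m ≤ w g → ∃ h : G, w h = m

/-- Two weights are `𝒫`-equivalent if they induce the same partition of `G`
into level sets. -/
def PEquivW {G : Type*} (w w' : G → ℕ) : Prop :=
  ∀ g h : G, w g = w h ↔ w' g = w' h

/-- A weight on an additive group `G`. -/
def IsAddWeight {G : Type*} [AddGroup G] (w : G → ℕ) : Prop :=
  (∀ x, w x = 0 ↔ x = 0) ∧ (∀ x, w (-x) = w x) ∧ ∀ x y, w (x + y) ≤ w x + w y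

/-!
Take the weight on `ℤ/p` with value `2` on `±1, ±2`, value `3` on `±3, ±(p-1)/2` and value `4`
elsewhere; since all nonzero values lie in `[2, 4]`, the triangle inequality is automatic.
Each of its three nonzero level sets meets `L + L` for each other nonzero level set `L`, so for
any `𝒫`-equivalent weight `w'` the triangle inequality forces `w' g ≤ 2 * w' h` whenever
`g, h ≠ 0`. A gapless weight with three distinct nonzero values would attain both `1` and `3`,
which is impossible since `3 > 2 * 1`.
-/

def TwoBalanced {G : Type*} (w : G → ℕ) : Prop :=
  ∀ x y, w x ≠ 0 → w y ≠ 0 → w x ≤ 2 * w y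

section AddGroup

variable {G : Type*} [AddGroup G]

def LevelsMeetDoubles (w : G → ℕ) : Prop :=
  ∀ g h : G, g ≠ 0 → h ≠ 0 → w g ≠ w h → ∃ x y, w x = w h ∧ w y = w h ∧ w (x + y) = w g

theorem isAddWeight_of_twoBalanced {w : G → ℕ} (hzero : ∀ x, w x = 0 ↔ x = 0)
    (hneg : ∀ x, w (-x) = w x) (hb : TwoBalanced w) : IsAddWeight w := by
  refine ⟨hzero, hneg, fun x y => ?_⟩
  by_cases hxy : w (x + y) = 0
  · omega
  by_cases hx : x = 0
  · simp [hx]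
  by_cases hy : y = 0
  · simp [hy]
  have hx' := (hzero x).not.mpr hx
  have hy' := (hzero y).not.mpr hy
  have := hb _ _ hxy hx'
  have := hb _ _ hxy hy'
  omega

theorem PEquivW.twoBalanced {w w' : G → ℕ} (hP : PEquivW w w') (hw' : IsAddWeight w')
    (hlev : LevelsMeetDoubles w) : TwoBalanced w' := by
  intro g h hg hh
  by_cases hgh : w g = w h
  · rw [(hP g h).mp hgh]
    omega
  obtain ⟨x, y, hx, hy, hxy⟩ :=
    hlev g h ((hw'.1 g).not.mp hg) ((hw'.1 h).not.mp hh) hgh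
  calc w' g = w' (x + y) := ((hP _ _).mp hxy).symm
    _ ≤ w' x + w' y := hw'.2.2 x y
    _ = 2 * w' h := by rw [(hP _ _).mp hx, (hP _ _).mp hy, two_mul]

end AddGroup

theorem Gapless.le_two_of_twoBalanced {G : Type*} {w : G → ℕ} (hgap : Gapless w)
    (hb : TwoBalanced w) (g : G) : w g ≤ 2 := by
  by_contra! hg
  obtain ⟨x, hx⟩ := hgap g 1 (by omega)
  obtain ⟨y, hy⟩ := hgap g 3 hg
  have := hb y x (by omega) (by omega)
  omega

theorem PEquivW.not_gapless {G : Type*} [AddGroup G] {w w' : G → ℕ} (hP : PEquivW w w')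
    (hw' : IsAddWeight w') (hlev : LevelsMeetDoubles w) {a b c : G} (ha : a ≠ 0) (hb : b ≠ 0)
    (hc : c ≠ 0) (hab : w a ≠ w b) (hac : w a ≠ w c) (hbc : w b ≠ w c) : ¬ Gapless w' := by
  intro hgap
  have hle := hgap.le_two_of_twoBalanced (hP.twoBalanced hw' hlev)
  have := (hP a b).not.mp hab
  have := (hP a c).not.mp hac
  have := (hP b c).not.mp hbc
  have := (hw'.1 a).not.mpr ha
  have := (hw'.1 b).not.mpr hb
  have := (hw'.1 c).not.mpr hc
  have := hle a
  have := hle b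
  have := hle c
  omega

/-- The value of `nonIntervalWeight m` at the elements at distance `d` from `0`. -/
def nonIntervalLevel (m d : ℕ) : ℕ :=
  if d = 0 then 0 else if d ≤ 2 then 2 else if d = 3 ∨ d = m / 2 then 3 else 4

def nonIntervalWeight (m : ℕ) (x : ZMod m) : ℕ :=
  nonIntervalLevel m x.valMinAbs.natAbs

section nonIntervalWeight

variable {m : ℕ}

theorem nonIntervalLevel_eq_zero_iff {d : ℕ} : nonIntervalLevel m d = 0 ↔ d = 0 := by
  rw [nonIntervalLevel]
  split_ifs <;> simp_all

theorem nonIntervalLevel_mem_Icc {d : ℕ} (hd : nonIntervalLevel m d ≠ 0) :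
    nonIntervalLevel m d ∈ Set.Icc 2 4 := by
  rw [nonIntervalLevel] at *
  split_ifs at * <;> simp_all

theorem nonIntervalWeight_eq_zero_iff (x : ZMod m) : nonIntervalWeight m x = 0 ↔ x = 0 := by
  rw [nonIntervalWeight, nonIntervalLevel_eq_zero_iff, Int.natAbs_eq_zero, ZMod.valMinAbs_eq_zero]

theorem nonIntervalWeight_neg (x : ZMod m) : nonIntervalWeight m (-x) = nonIntervalWeight m x := by
  rw [nonIntervalWeight, ZMod.natAbs_valMinAbs_neg, nonIntervalWeight]

theorem isAddWeight_nonIntervalWeight : IsAddWeight (nonIntervalWeight m) := by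
  refine isAddWeight_of_twoBalanced nonIntervalWeight_eq_zero_iff nonIntervalWeight_neg ?_
  intro x y hx hy
  unfold nonIntervalWeight at hx hy ⊢
  have := (nonIntervalLevel_mem_Icc hx).2
  have := (nonIntervalLevel_mem_Icc hy).1
  omega

theorem nonIntervalWeight_natCast [NeZero m] {k : ℕ} (hk : k < m) :
    nonIntervalWeight m k = nonIntervalLevel m (min k (m - k)) := by
  rw [nonIntervalWeight, ZMod.valMinAbs_natAbs_eq_min, ZMod.val_cast_of_lt hk]

theorem levelsMeetDoubles_nonIntervalWeight (hm : 13 ≤ m) (hodd : Odd m) :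
    LevelsMeetDoubles (nonIntervalWeight m) := by
  obtain ⟨n, rfl⟩ := hodd
  intro g h hg hh hgh
  have hg' := nonIntervalLevel_mem_Icc ((nonIntervalWeight_eq_zero_iff g).not.mpr hg)
  have hh' := nonIntervalLevel_mem_Icc ((nonIntervalWeight_eq_zero_iff h).not.mpr hh)
  suffices key : ∀ i ∈ Set.Icc 2 4, ∀ j ∈ Set.Icc 2 4, i ≠ j → ∃ a b : ℕ,
      nonIntervalWeight (2 * n + 1) a = j ∧ nonIntervalWeight (2 * n + 1) b = j ∧
        nonIntervalWeight (2 * n + 1) (a + b : ℕ) = i by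
    obtain ⟨a, b, ha, hb, hab⟩ := key _ hg' _ hh' hgh
    exact ⟨a, b, ha, hb, by rwa [← Nat.cast_add]⟩
  rintro i ⟨hi2, hi4⟩ j ⟨hj2, hj4⟩ hij
  interval_cases i <;> interval_cases j <;> try exact absurd rfl hij
  -- `(i, j)` runs through `(2, 3), (2, 4), (3, 2), (3, 4), (4, 2), (4, 3)`; the sums `2n`,
  -- `n + 3` and `2n - 2` sit at distance `1`, `n - 2` and `3` from `0`.
  on_goal 1 => refine ⟨n, n, ?_⟩
  on_goal 2 => refine ⟨n - 2, n + 2, ?_⟩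
  on_goal 3 => refine ⟨1, 2, ?_⟩
  on_goal 4 => refine ⟨n - 1, n - 1, ?_⟩
  on_goal 5 => refine ⟨2, 2, ?_⟩
  on_goal 6 => refine ⟨n, 3, ?_⟩
  all_goals
    refine ⟨?_, ?_, ?_⟩ <;> rw [nonIntervalWeight_natCast (by omega), nonIntervalLevel] <;>
      split_ifs <;> omega

end nonIntervalWeight

theorem zmod_p_has_non_interval_weight_general (p : ℕ) (h13 : 13 ≤ p)
    (hmod : p % 4 = 1) :
    ∃ w : ZMod p → ℕ, IsAddWeight w ∧
      ∀ w' : ZMod p → ℕ, IsAddWeight w' → PEquivW w w' → ¬ Gapless w' := by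
  have : NeZero p := ⟨by omega⟩
  refine ⟨nonIntervalWeight p, isAddWeight_nonIntervalWeight, fun w' hw' hP => ?_⟩
  obtain ⟨h1, h3, h4⟩ : nonIntervalWeight p (1 : ℕ) = 2 ∧ nonIntervalWeight p (3 : ℕ) = 3 ∧
      nonIntervalWeight p (4 : ℕ) = 4 := by
    refine ⟨?_, ?_, ?_⟩ <;> rw [nonIntervalWeight_natCast (by omega), nonIntervalLevel] <;>
      split_ifs <;> omega
  have hne (x : ZMod p) : nonIntervalWeight p x ≠ 0 → x ≠ 0 :=
    (nonIntervalWeight_eq_zero_iff x).not.mp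
  exact hP.not_gapless (a := (1 : ℕ)) (b := (3 : ℕ)) (c := (4 : ℕ)) hw'
    (levelsMeetDoubles_nonIntervalWeight h13 (Nat.odd_iff.mpr (by omega)))
    (hne _ (by omega)) (hne _ (by omega)) (hne _ (by omega)) (by omega) (by omega) (by omega)

/-- For every prime `p ≥ 13` with `p ≡ 1 (mod 4)`, the cyclic group `ℤ/p` has
a weight no `𝒫`-equivalent weight of which is gapless; i.e. `ℤ_p` has an
invariant metric that is not `𝒫`-interval. -/
theorem zmod_p_has_non_interval_weight (p : ℕ) (hp : p.Prime) (h13 : 13 ≤ p)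
    (hmod : p % 4 = 1) :
    ∃ w : ZMod p → ℕ, IsAddWeight w ∧
      ∀ w' : ZMod p → ℕ, IsAddWeight w' → PEquivW w w' → ¬ Gapless w' :=
  zmod_p_has_non_interval_weight_general p h13 hmod
end

section
/- Let G be a group and w a weight on G. (a) If w takes exactly three distinct values (equivalently, the partition of G into level sets of w has exactly two non-identity parts), then w is 𝒫-equivalent to some gapless weight. (b) If w takes exactly four distinct values and some non-identity level set of w equals {g, g⁻¹} for some g ∈ G, then w is 𝒫-equivalent to some gapless weight. -/
/-- Core construction for three values. -/
lemma core3 {G : Type*} [Group G] (w : G → ℕ) (hw : IsWeight w) (a b : ℕ)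
    (ha0 : a ≠ 0) (hb0 : b ≠ 0) (hab : a ≠ b)
    (hvals : ∀ x : G, w x = 0 ∨ w x = a ∨ w x = b)
    (hamem : ∃ h : G, w h = a) (hbmem : ∃ h : G, w h = b) :
    ∃ w' : G → ℕ, IsWeight w' ∧ Gapless w' ∧ PEquivW w w' := by
  obtain ⟨hz, hs, ht⟩ := hw
  set f : ℕ → ℕ := fun n => if n = 0 then 0 else if n = a then 1 else 2 with hf
  have v0 : f 0 = 0 := by simp [hf]
  have va : f a = 1 := by simp [hf, ha0]
  have vb : f b = 2 := by simp [hf, hb0, Ne.symm hab]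
  have hf0 : ∀ n, f n = 0 ↔ n = 0 := by
    intro n
    simp only [hf]
    split
    · simp_all
    · split <;> simp_all
  have hfle : ∀ n, f n ≤ 2 := by
    intro n
    simp only [hf]
    split
    · omega
    · split <;> omega
  have hw1 : w (1 : G) = 0 := (hz 1).2 rfl
  refine ⟨fun x => f (w x), ⟨?_, ?_, ?_⟩, ?_, ?_⟩
  · intro x
    exact (hf0 _).trans (hz x)
  · intro x
    dsimp only
    rw [hs]
  · intro x y
    dsimp only
    by_cases hx : w x = 0
    · have hx1 : x = 1 := (hz x).1 hx
      subst hx1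
      rw [one_mul, hw1, v0, zero_add]
    by_cases hy : w y = 0
    · have hy1 : y = 1 := (hz y).1 hy
      subst hy1
      rw [mul_one, hw1, v0, add_zero]
    have h1 : f (w x) ≠ 0 := fun h => hx ((hf0 _).1 h)
    have h2 : f (w y) ≠ 0 := fun h => hy ((hf0 _).1 h)
    have h3 := hfle (w (x * y))
    omega
  · intro x m hm
    dsimp only at hm ⊢
    have hm2 : m ≤ 2 := le_trans hm (hfle _)
    interval_cases m
    · exact ⟨1, by simp only [hw1, v0]⟩
    · obtain ⟨h, hh⟩ := hamem
      exact ⟨h, by simp only [hh, va]⟩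
    · obtain ⟨h, hh⟩ := hbmem
      exact ⟨h, by simp only [hh, vb]⟩
  · intro x y
    constructor
    · intro h
      dsimp only
      rw [h]
    · intro h
      dsimp only at h
      rcases hvals x with h1 | h1 | h1 <;> rcases hvals y with h2 | h2 | h2 <;>
        rw [h1, h2] at h ⊢ <;> simp only [v0, va, vb] at h <;> omega

/-- Core construction for four values, with the level of `p` equal to `{g, g⁻¹}`. -/
lemma core4 {G : Type*} [Group G] (w : G → ℕ) (hw : IsWeight w) (p q r : ℕ) (g : G)
    (hgp : w g = p)
    (hp0 : p ≠ 0) (hq0 : q ≠ 0) (hr0 : r ≠ 0)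
    (hpq : p ≠ q) (hpr : p ≠ r) (hqr : q ≠ r)
    (hvals : ∀ x : G, w x = 0 ∨ w x = p ∨ w x = q ∨ w x = r)
    (hqmem : ∃ h : G, w h = q) (hrmem : ∃ h : G, w h = r)
    (hlev : {x : G | w x = p} = {g, g⁻¹})
    (hsq : w (g * g) ≠ q) :
    ∃ w' : G → ℕ, IsWeight w' ∧ Gapless w' ∧ PEquivW w w' := by
  obtain ⟨hz, hs, ht⟩ := hw
  set f : ℕ → ℕ := fun n => if n = 0 then 0 else if n = p then 1 else if n = q then 3 else 2
    with hf
  have v0 : f 0 = 0 := by simp [hf]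
  have vp : f p = 1 := by simp [hf, hp0]
  have vq : f q = 3 := by simp [hf, hq0, Ne.symm hpq]
  have vr : f r = 2 := by simp [hf, hr0, Ne.symm hpr, Ne.symm hqr]
  have hf0 : ∀ n, f n = 0 ↔ n = 0 := by
    intro n
    simp only [hf]
    split
    · simp_all
    · split
      · simp_all
      · split <;> simp_all
  have hfle : ∀ n, f n ≤ 3 := by
    intro n
    simp only [hf]
    split
    · omega
    · split
      · omega
      · split <;> omega
  have hfle2 : ∀ n, n ≠ q → f n ≤ 2 := by
    intro n hn
    simp only [hf, if_neg hn]
    split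
    · omega
    · split <;> omega
  have hw1 : w (1 : G) = 0 := (hz 1).2 rfl
  refine ⟨fun x => f (w x), ⟨?_, ?_, ?_⟩, ?_, ?_⟩
  · intro x
    exact (hf0 _).trans (hz x)
  · intro x
    dsimp only
    rw [hs]
  · intro x y
    dsimp only
    by_cases hx : w x = 0
    · have hx1 : x = 1 := (hz x).1 hx
      subst hx1
      rw [one_mul, hw1, v0, zero_add]
    by_cases hy : w y = 0
    · have hy1 : y = 1 := (hz y).1 hy
      subst hy1
      rw [mul_one, hw1, v0, add_zero]
    by_cases hxy : w x = p ∧ w y = p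
    · -- x, y ∈ {g, g⁻¹}, so x * y ∈ {g², 1, g⁻²}
      have hxm : x ∈ ({g, g⁻¹} : Set G) := by rw [← hlev]; exact hxy.1
      have hym : y ∈ ({g, g⁻¹} : Set G) := by rw [← hlev]; exact hxy.2
      simp only [Set.mem_insert_iff, Set.mem_singleton_iff] at hxm hym
      have hkey : w (x * y) = 0 ∨ w (x * y) = w (g * g) := by
        rcases hxm with rfl | rfl <;> rcases hym with rfl | rfl
        · exact Or.inr rfl
        · left; rw [mul_inv_cancel]; exact hw1
        · left; rw [inv_mul_cancel]; exact hw1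
        · right
          have h' : g⁻¹ * g⁻¹ = (g * g)⁻¹ := by group
          rw [h', hs]
      rw [hxy.1, hxy.2, vp]
      rcases hkey with h | h
      · rw [h, v0]; omega
      · rw [h]
        exact hfle2 _ hsq
    · have key : ∀ z : G, w z ≠ 0 → w z ≠ p → 2 ≤ f (w z) := by
        intro z h0 h1
        rcases hvals z with h | h | h | h
        · exact absurd h h0
        · exact absurd h h1
        · rw [h, vq]; omega
        · rw [h, vr]
      have h1 : f (w x) ≠ 0 := fun h => hx ((hf0 _).1 h)
      have h2 : f (w y) ≠ 0 := fun h => hy ((hf0 _).1 h)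
      have h3 := hfle (w (x * y))
      rcases not_and_or.mp hxy with h | h
      · have := key x hx h; omega
      · have := key y hy h; omega
  · intro x m hm
    dsimp only at hm ⊢
    have hm3 : m ≤ 3 := le_trans hm (hfle _)
    interval_cases m
    · exact ⟨1, by simp only [hw1, v0]⟩
    · exact ⟨g, by simp only [hgp, vp]⟩
    · obtain ⟨h, hh⟩ := hrmem
      exact ⟨h, by simp only [hh, vr]⟩
    · obtain ⟨h, hh⟩ := hqmem
      exact ⟨h, by simp only [hh, vq]⟩
  · intro x y
    constructor
    · intro h
      dsimp only
      rw [h]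
    · intro h
      dsimp only at h
      rcases hvals x with h1 | h1 | h1 | h1 <;> rcases hvals y with h2 | h2 | h2 | h2 <;>
        rw [h1, h2] at h ⊢ <;> simp only [v0, vp, vq, vr] at h <;> omega

/-- (a) A weight with exactly three distinct values is `𝒫`-equivalent to a
gapless weight. (b) A weight with exactly four distinct values, one of whose
non-identity level sets is of the form `{g, g⁻¹}`, is `𝒫`-equivalent to a
gapless weight. -/
theorem pinterval_of_few_values {G : Type*} [Group G] (w : G → ℕ)
    (hw : IsWeight w) :
    ((Set.range w).ncard = 3 →
      ∃ w' : G → ℕ, IsWeight w' ∧ Gapless w' ∧ PEquivW w w') ∧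
    ((Set.range w).ncard = 4 →
      (∃ g : G, g ≠ 1 ∧ {x : G | w x = w g} = {g, g⁻¹}) →
      ∃ w' : G → ℕ, IsWeight w' ∧ Gapless w' ∧ PEquivW w w') := by
  have h0mem : (0 : ℕ) ∈ Set.range w := ⟨1, (hw.1 1).2 rfl⟩
  constructor
  · intro h3
    have hfin : (Set.range w).Finite := Set.finite_of_ncard_ne_zero (by omega)
    have h2 : (Set.range w \ {0}).ncard = 2 := by
      rw [Set.ncard_diff_singleton_of_mem h0mem, h3]
    obtain ⟨a, b, hab, hset⟩ := Set.ncard_eq_two.mp h2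
    have ha : a ∈ Set.range w \ {0} := by rw [hset]; left; rfl
    have hb : b ∈ Set.range w \ {0} := by rw [hset]; right; rfl
    obtain ⟨⟨xa, hxa⟩, ha0⟩ := ha
    obtain ⟨⟨xb, hxb⟩, hb0⟩ := hb
    refine core3 w hw a b ha0 hb0 hab ?_ ⟨xa, hxa⟩ ⟨xb, hxb⟩
    intro x
    by_cases hx : w x = 0
    · exact Or.inl hx
    · have hmem : w x ∈ Set.range w \ {0} := ⟨⟨x, rfl⟩, hx⟩
      rw [hset] at hmem
      rcases hmem with h | h
      · exact Or.inr (Or.inl h)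
      · exact Or.inr (Or.inr h)
  · rintro h4 ⟨g, hg1, hlev⟩
    have hfin : (Set.range w).Finite := Set.finite_of_ncard_ne_zero (by omega)
    have hfin1 : (Set.range w \ {0}).Finite := hfin.diff
    set p := w g with hp
    have hp0 : p ≠ 0 := fun h => hg1 ((hw.1 g).1 h)
    have hpmem : p ∈ Set.range w \ {0} := ⟨⟨g, rfl⟩, hp0⟩
    have h3 : (Set.range w \ {0}).ncard = 3 := by
      rw [Set.ncard_diff_singleton_of_mem h0mem, h4]
    have h2 : ((Set.range w \ {0}) \ {p}).ncard = 2 := by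
      rw [Set.ncard_diff_singleton_of_mem hpmem, h3]
    obtain ⟨a, b, hab, hset⟩ := Set.ncard_eq_two.mp h2
    have ha : a ∈ (Set.range w \ {0}) \ {p} := by rw [hset]; left; rfl
    have hb : b ∈ (Set.range w \ {0}) \ {p} := by rw [hset]; right; rfl
    obtain ⟨⟨⟨xa, hxa⟩, ha0⟩, hap⟩ := ha
    obtain ⟨⟨⟨xb, hxb⟩, hb0⟩, hbp⟩ := hb
    have hap' : p ≠ a := fun h => hap h.symm
    have hbp' : p ≠ b := fun h => hbp h.symm
    have hvals : ∀ x : G, w x = 0 ∨ w x = p ∨ w x = a ∨ w x = b := by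
      intro x
      by_cases hx : w x = 0
      · exact Or.inl hx
      by_cases hxp : w x = p
      · exact Or.inr (Or.inl hxp)
      have hmem : w x ∈ (Set.range w \ {0}) \ {p} := ⟨⟨⟨x, rfl⟩, hx⟩, hxp⟩
      rw [hset] at hmem
      rcases hmem with h | h
      · exact Or.inr (Or.inr (Or.inl h))
      · exact Or.inr (Or.inr (Or.inr h))
    by_cases hsq : w (g * g) = a
    · refine core4 w hw p b a g rfl hp0 hb0 ha0 hbp' hap' (Ne.symm hab) ?_
        ⟨xb, hxb⟩ ⟨xa, hxa⟩ hlev (by rw [hsq]; exact hab)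
      intro x
      rcases hvals x with h | h | h | h <;> tauto
    · exact core4 w hw p a b g rfl hp0 ha0 hb0 hap' hbp' hab hvals
        ⟨xa, hxa⟩ ⟨xb, hxb⟩ hlev hsq
end

section
/- There is no gapless weight w on the dihedral group of order 8 (DihedralGroup 4 in Mathlib, with rotations r^i and reflections s·r^i) such that w(r) = w(r²) = w(r³), the four values w(s), w(rs), w(r²s), w(r³s) are pairwise distinct, and w(r^i s) ≠ w(r) for all i = 0,1,2,3. Equivalently, the unitary symmetric partition {{1}, {r, r², r³}, {s}, {rs}, {r²s}, {r³s}} of D₄ admits no interval metric. -/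
open DihedralGroup in
/-- The unitary symmetric partition `{{1}, {r, r², r³}, {s}, {rs}, {r²s}, {r³s}}`
of the dihedral group of order 8 admits no interval metric: there is no gapless
weight constant on the rotations `r, r², r³`, taking pairwise distinct values on
the four reflections, each of them different from the common rotation value. -/
theorem dihedral4_no_gapless_weight :
    ¬ ∃ w : DihedralGroup 4 → ℕ, IsWeight w ∧ Gapless w ∧
      w (r 1) = w (r 2) ∧ w (r 1) = w (r 3) ∧
      (Function.Injective fun i : ZMod 4 => w (sr i)) ∧
      ∀ i : ZMod 4, w (sr i) ≠ w (r 1) := by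
  rintro ⟨w, ⟨hw0, _hwinv, hwtri⟩, hgap, h12, h13, hinj, hne⟩
  -- w (r 0) = 0
  have hr0 : w (r (0 : ZMod 4)) = 0 := (hw0 _).mpr rfl
  -- rotations nonzero have weight a
  have hrk : ∀ k : ZMod 4, k ≠ 0 → w (r k) = w (r 1) := by
    intro k hk
    fin_cases k
    · exact absurd rfl hk
    · rfl
    · exact h12.symm
    · exact h13.symm
  have ha : w (r 1) ≠ 0 := by
    intro h
    have := (hw0 _).mp h
    rw [DihedralGroup.one_def] at this
    exact absurd (DihedralGroup.r.inj this) (by decide)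
  have hb0 : ∀ i : ZMod 4, w (sr i) ≠ 0 := by
    intro i h
    have := (hw0 _).mp h
    rw [DihedralGroup.one_def] at this
    cases this
  -- triangle 1 : a ≤ b i + b j for i ≠ j
  have tri1 : ∀ i j : ZMod 4, i ≠ j → w (r 1) ≤ w (sr i) + w (sr j) := by
    intro i j hij
    have h := hwtri (sr i) (sr j)
    rw [sr_mul_sr] at h
    rwa [hrk (j - i) (by intro h'; exact hij (by linear_combination -h'))] at h
  -- triangle 2 : b i ≤ b j + a
  have tri2 : ∀ i j : ZMod 4, w (sr i) ≤ w (sr j) + w (r 1) := by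
    intro i j
    rcases eq_or_ne i j with rfl | hij
    · omega
    have h := hwtri (sr j) (r (i - j))
    rw [sr_mul_r] at h
    simp only [add_sub_cancel] at h
    rwa [hrk (i - j) (by intro h'; exact hij (by linear_combination h'))] at h
  -- every value of w lies in the 6-element set
  set S : Finset ℕ := {0, w (r 1), w (sr 0), w (sr 1), w (sr 2), w (sr 3)} with hS
  have hmem : ∀ h : DihedralGroup 4, w h ∈ S := by
    rintro (i | i) <;> fin_cases i <;> simp [hS, hr0, h12.symm, h13.symm] <;> tauto
  have hScard : S.card ≤ 6 := by
    refine (Finset.card_insert_le _ _).trans (Nat.succ_le_succ ?_)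
    refine (Finset.card_insert_le _ _).trans (Nat.succ_le_succ ?_)
    refine (Finset.card_insert_le _ _).trans (Nat.succ_le_succ ?_)
    refine (Finset.card_insert_le _ _).trans (Nat.succ_le_succ ?_)
    exact (Finset.card_insert_le _ _).trans (Nat.succ_le_succ (Finset.card_singleton _).le)
  have hbound : ∀ g : DihedralGroup 4, w g ≤ 5 := by
    intro g
    have hsub : Finset.range (w g + 1) ⊆ S := by
      intro m hm
      rw [Finset.mem_range] at hm
      obtain ⟨h, hh⟩ := hgap g m (by omega)
      rw [← hh]; exact hmem h
    have := (Finset.card_le_card hsub).trans hScard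
    simp at this; omega
  -- distinctness
  have hd : ∀ i j : ZMod 4, i ≠ j → w (sr i) ≠ w (sr j) := fun i j hij h => hij (hinj h)
  -- collect numeric facts and finish
  have B0 := hbound (sr 0); have B1 := hbound (sr 1)
  have B2 := hbound (sr 2); have B3 := hbound (sr 3)
  have Ba := hbound (r 1)
  have n0 := hb0 0; have n1 := hb0 1; have n2 := hb0 2; have n3 := hb0 3
  have e0 := hne 0; have e1 := hne 1; have e2 := hne 2; have e3 := hne 3
  have d01 := hd 0 1 (by decide); have d02 := hd 0 2 (by decide)
  have d03 := hd 0 3 (by decide); have d12 := hd 1 2 (by decide)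
  have d13 := hd 1 3 (by decide); have d23 := hd 2 3 (by decide)
  have t01 := tri1 0 1 (by decide); have t02 := tri1 0 2 (by decide)
  have t03 := tri1 0 3 (by decide); have t12 := tri1 1 2 (by decide)
  have t13 := tri1 1 3 (by decide); have t23 := tri1 2 3 (by decide)
  have u01 := tri2 0 1; have u10 := tri2 1 0
  have u02 := tri2 0 2; have u20 := tri2 2 0
  have u03 := tri2 0 3; have u30 := tri2 3 0
  have u12 := tri2 1 2; have u21 := tri2 2 1
  have u13 := tri2 1 3; have u31 := tri2 3 1
  have u23 := tri2 2 3; have u32 := tri2 3 2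
  -- values are 6 distinct naturals in {0,...,5}, hence {1,...,5} minus nothing;
  -- omega finds the contradiction
  omega
end

section
/- Every weight on the quaternion group Q₈ (QuaternionGroup 2 in Mathlib, the dicyclic group of order 8) is 𝒫-equivalent to some gapless weight; that is, every invariant metric on Q₈ is 𝒫-interval. -/
/-!
A weight on `Q₈` is constant on each of the sets `{1}, {-1}, {±i}, {±j}, {±k}`, which are the
sets `{g, g⁻¹}`. So it is determined by its values `m, i, j, k` on `-1, i, j, k`, and conversely
positive values `m, i, j, k` define a weight as soon as `m ≤ 2 min(i, j, k)` (from `i² = -1`) and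
`i, j, k` satisfy the triangle inequalities (from `ij = ±k` etc.). Only the level sets matter, so
we may renumber the distinct values among `m, i, j, k` as `1, 2, …` in order of first occurrence:
this has no gaps, `m` becomes `1`, and the labels of `i, j, k` either all lie in `{2, 3, 4}` or,
when one of them equals `m`, the other two differ by at most one. Either way the inequalities hold.
-/

section Weights

variable {G : Type*}

theorem IsWeight.pos [Group G] {w : G → ℕ} (hw : IsWeight w) {g : G} (hg : g ≠ 1) : 0 < w g :=
  Nat.pos_of_ne_zero fun h => hg ((hw.1 g).1 h)

theorem gapless_iff_isLowerSet_range {w : G → ℕ} : Gapless w ↔ IsLowerSet (Set.range w) :=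
  ⟨fun h _ _ hba ⟨g, hg⟩ => h g _ (hg ▸ hba), fun h g _ hm => h hm ⟨g, rfl⟩⟩

theorem pEquivW_comp_of_injOn {w : G → ℕ} {f : ℕ → ℕ} (hf : Set.InjOn f (Set.range w)) :
    PEquivW w (f ∘ w) :=
  fun g h => ⟨congrArg f, fun hgh => hf ⟨g, rfl⟩ ⟨h, rfl⟩ hgh⟩

end Weights

/-- Numbers `0, m, i, j` and then any other value by `0, 1, 2, …` in order of first occurrence,
so that on `{0, m, i, j, k}` it renumbers the distinct values consecutively. -/
def firstOccurrenceLabel (m i j x : ℕ) : ℕ :=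
  if x = 0 then 0
  else if x = m then 1
  else if x = i then 2
  else if x = j then (if i = m then 2 else 3)
  else if i = m then (if j = m then 2 else 3) else if j = m ∨ j = i then 3 else 4

section FirstOccurrenceLabel

variable {m i j k : ℕ}

theorem firstOccurrenceLabel_zero : firstOccurrenceLabel m i j 0 = 0 := rfl

theorem injOn_firstOccurrenceLabel :
    Set.InjOn (firstOccurrenceLabel m i j) {0, m, i, j, k} := by
  intro x hx y hy hxy
  simp only [Set.mem_insert_iff, Set.mem_singleton_iff] at hx hy
  unfold firstOccurrenceLabel at hxy
  split_ifs at hxy <;> omega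

theorem isLowerSet_image_firstOccurrenceLabel (hm : 0 < m) (hi : 0 < i) (hj : 0 < j) :
    IsLowerSet (firstOccurrenceLabel m i j '' {0, m, i, j, k}) := by
  simp only [Set.image_insert_eq, Set.image_singleton]
  -- Once it is known which of `m, i, j, k` coincide, every label is a numeral.
  rcases eq_or_ne i m with h1 | h1 <;> rcases eq_or_ne j m with h2 | h2 <;>
    rcases eq_or_ne j i with h3 | h3 <;> rcases eq_or_ne k m with h4 | h4 <;>
    rcases eq_or_ne k i with h5 | h5 <;> rcases eq_or_ne k j with h6 | h6 <;>
    rcases eq_or_ne k 0 with h7 | h7 <;>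
    simp only [firstOccurrenceLabel, h1, h2, h3, h4, h5, h6, h7, hm.ne', hi.ne', hj.ne',
      if_true, if_false, true_or, or_true, or_false] <;>
    intro x y hyx hx <;> simp only [Set.mem_insert_iff, Set.mem_singleton_iff] at hx ⊢ <;> omega

end FirstOccurrenceLabel

namespace QuaternionGroup

/-- With `i = a 1`, `j = xa 0`, `k = xa 1`, the classes `0, …, 4` are
`{1}, {-1}, {±i}, {±j}, {±k}`. -/
def quatClass : QuaternionGroup 2 → Fin 5
  | .a n => if n = 0 then 0 else if n = 2 then 1 else 2
  | .xa n => if n = 0 ∨ n = 2 then 3 else 4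

theorem quatClass_eq_zero_iff (g : QuaternionGroup 2) : quatClass g = 0 ↔ g = 1 := by
  revert g; decide

theorem quatClass_inv (g : QuaternionGroup 2) : quatClass g⁻¹ = quatClass g := by
  revert g; decide

theorem eq_or_eq_inv_of_quatClass_eq {g h : QuaternionGroup 2} :
    quatClass g = quatClass h → g = h ∨ g = h⁻¹ := by
  revert g h; decide

theorem quatClass_mul (x y : QuaternionGroup 2) :
    quatClass (x * y) = quatClass x ∨ quatClass (x * y) = quatClass y ∨ x * y = 1 ∨
      (quatClass (x * y) = 1 ∧ quatClass x = quatClass y ∧ 2 ≤ quatClass x) ∨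
      (2 ≤ quatClass x ∧ 2 ≤ quatClass y ∧ 2 ≤ quatClass (x * y) ∧
        quatClass x ≠ quatClass y ∧ quatClass (x * y) ≠ quatClass x ∧
        quatClass (x * y) ≠ quatClass y) := by
  revert x y; decide

def classValue (m i j k : ℕ) : Fin 5 → ℕ
  | 0 => 0
  | 1 => m
  | 2 => i
  | 3 => j
  | 4 => k

def quatWeight (m i j k : ℕ) : QuaternionGroup 2 → ℕ :=
  classValue m i j k ∘ quatClass

theorem quatWeight_apply (m i j k : ℕ) (g : QuaternionGroup 2) :
    quatWeight m i j k g = classValue m i j k (quatClass g) := rfl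

theorem range_quatWeight (m i j k : ℕ) : Set.range (quatWeight m i j k) = {0, m, i, j, k} := by
  ext x
  constructor
  · rintro ⟨g, rfl⟩
    rw [quatWeight_apply]
    generalize quatClass g = c
    fin_cases c <;> simp only [classValue, Set.mem_insert_iff, Set.mem_singleton_iff] <;> tauto
  · rintro (rfl | rfl | rfl | rfl | rfl)
    exacts [⟨1, rfl⟩, ⟨a 2, rfl⟩, ⟨a 1, rfl⟩, ⟨xa 0, rfl⟩, ⟨xa 1, rfl⟩]

theorem comp_quatWeight {f : ℕ → ℕ} (hf : f 0 = 0) (m i j k : ℕ) :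
    f ∘ quatWeight m i j k = quatWeight (f m) (f i) (f j) (f k) := by
  funext g
  simp only [Function.comp_apply, quatWeight_apply]
  generalize quatClass g = c
  fin_cases c <;> simp only [classValue, hf]

theorem _root_.IsWeight.eq_of_quatClass_eq {w : QuaternionGroup 2 → ℕ} (hw : IsWeight w)
    {g h : QuaternionGroup 2} (hgh : quatClass g = quatClass h) : w g = w h := by
  rcases eq_or_eq_inv_of_quatClass_eq hgh with rfl | rfl
  exacts [rfl, hw.2.1 h]

theorem _root_.IsWeight.exists_eq_quatWeight {w : QuaternionGroup 2 → ℕ} (hw : IsWeight w) :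
    ∃ m i j k, 0 < m ∧ 0 < i ∧ 0 < j ∧ 0 < k ∧ w = quatWeight m i j k := by
  refine ⟨_, _, _, _, hw.pos (g := a 2) (by decide), hw.pos (g := a 1) (by decide),
    hw.pos (g := xa 0) (by decide), hw.pos (g := xa 1) (by decide), funext fun g => ?_⟩
  have hrep : quatClass (![1, a 2, a 1, xa 0, xa 1] (quatClass g)) = quatClass g := by
    revert g; decide
  rw [quatWeight_apply, ← hw.eq_of_quatClass_eq hrep]
  generalize quatClass g = c
  fin_cases c <;> simp [classValue, (hw.1 1).2 rfl]

theorem isWeight_quatWeight {m i j k : ℕ} (hm : 0 < m) (hi : 0 < i) (hj : 0 < j) (hk : 0 < k)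
    (hmi : m ≤ 2 * i) (hmj : m ≤ 2 * j) (hmk : m ≤ 2 * k)
    (hijk : i ≤ j + k) (hjik : j ≤ i + k) (hkij : k ≤ i + j) :
    IsWeight (quatWeight m i j k) := by
  refine ⟨fun g => ?_, fun g => by simp only [quatWeight_apply, quatClass_inv], fun x y => ?_⟩
  · rw [quatWeight_apply, ← quatClass_eq_zero_iff]
    generalize quatClass g = c
    fin_cases c <;> simp only [classValue, Fin.ext_iff, Fin.val_zero] <;> omega
  simp only [quatWeight_apply]
  rcases quatClass_mul x y with h | h | h | ⟨h, hxy, hx⟩ | ⟨hx, hy, hz, hxy, hzx, hzy⟩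
  · rw [h]; omega
  · rw [h]; omega
  · simp only [h, (quatClass_eq_zero_iff 1).2 rfl, classValue]; omega
  · rw [h, ← hxy]
    generalize quatClass x = c at hx ⊢
    fin_cases c <;> simp only [classValue, Fin.le_def] at hx ⊢ <;> omega
  · generalize quatClass x = c at *
    generalize quatClass y = c' at *
    generalize quatClass (x * y) = c'' at *
    fin_cases c <;> fin_cases c' <;> fin_cases c'' <;> simp only [classValue, Fin.le_def] at * <;>
      omega

theorem isWeight_quatWeight_firstOccurrenceLabel {m i j k : ℕ}
    (hm : 0 < m) (hi : 0 < i) (hj : 0 < j) (hk : 0 < k) :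
    IsWeight (quatWeight (firstOccurrenceLabel m i j m) (firstOccurrenceLabel m i j i)
      (firstOccurrenceLabel m i j j) (firstOccurrenceLabel m i j k)) := by
  rcases eq_or_ne i m with h1 | h1 <;> rcases eq_or_ne j m with h2 | h2 <;>
    rcases eq_or_ne j i with h3 | h3 <;> rcases eq_or_ne k m with h4 | h4 <;>
    rcases eq_or_ne k i with h5 | h5 <;> rcases eq_or_ne k j with h6 | h6 <;>
    simp only [firstOccurrenceLabel, h1, h2, h3, h4, h5, h6, hm.ne', hi.ne', hj.ne', hk.ne',
      if_true, if_false, true_or, or_true, or_false] <;>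
    apply isWeight_quatWeight <;> omega

end QuaternionGroup

open QuaternionGroup

/-- Every weight on the quaternion group `Q₈` is `𝒫`-equivalent to some
gapless weight; i.e. every invariant metric on `Q₈` is `𝒫`-interval. -/
theorem quaternion_all_weights_pinterval (w : QuaternionGroup 2 → ℕ)
    (hw : IsWeight w) :
    ∃ w' : QuaternionGroup 2 → ℕ, IsWeight w' ∧ Gapless w' ∧ PEquivW w w' := by
  obtain ⟨m, i, j, k, hm, hi, hj, hk, rfl⟩ := hw.exists_eq_quatWeight
  refine ⟨firstOccurrenceLabel m i j ∘ quatWeight m i j k, ?_, ?_, pEquivW_comp_of_injOn ?_⟩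
  · rw [comp_quatWeight firstOccurrenceLabel_zero]
    exact isWeight_quatWeight_firstOccurrenceLabel hm hi hj hk
  · rw [gapless_iff_isLowerSet_range, Set.range_comp, range_quatWeight]
    exact isLowerSet_image_firstOccurrenceLabel hm hi hj
  · rw [range_quatWeight]
    exact injOn_firstOccurrenceLabel
end

section
/- Let G be a finite group having a subgroup H of index 2 such that k(G) − k(H) ≥ 4. Then there exists a weight w on G such that no weight on G that is 𝒫-equivalent to w is gapless (i.e. G has an invariant metric that is not 𝒫-interval). -/
/-- For a finite group `G`, `kOf G = (|G| + #{x : x² = 1})/2 - 1`, the number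
of non-trivial parts of the finest unitary symmetric partition of `G`. -/
noncomputable def kOf (G : Type*) [Group G] : ℕ :=
  (Nat.card G + Nat.card {x : G // x ^ 2 = 1}) / 2 - 1

/-!
Write `T = G \ H`. Since `|H| + #{x ∈ H | x² = 1}` is even (inversion is an involution of `H`
whose fixed points are the solutions of `x² = 1`), `k(G) - k(H)` is at most the number of inverse
classes `{x, x⁻¹}` contained in `T`; so `T` meets four distinct classes, say those of
`x₀, …, x₃`. Let `w` be `0` at `1`, `4` on `H \ {1}`, `10 + i` on the class of `xᵢ` and `13` on the
rest of `T`; as `H` has index two, this is a weight with six level sets.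

A `𝒫`-equivalent weight `w'` has the same six level sets, so if it were gapless its values would
be exactly `0, …, 5`. But `w'` is a constant `a` on `H \ {1}`, and `xᵢxⱼ, xⱼ⁻¹xᵢ ∈ H \ {1}` for
`i ≠ j` give `a ≤ w' xᵢ + w' xⱼ` and `w' xᵢ ≤ w' xⱼ + a`, which no bijection from
`{a, w' x₀, …, w' x₃}` to `{1, …, 5}` satisfies.
-/

open Finset

section InvClass
variable {G : Type*} [Group G]

def invClass (x : G) : Sym2 G := s(x, x⁻¹)

@[simp] lemma invClass_inv (x : G) : invClass x⁻¹ = invClass x := by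
  simp [invClass, Sym2.eq_swap]

lemma invClass_eq_iff {x y : G} : invClass x = invClass y ↔ x = y ∨ x = y⁻¹ := by
  simp only [invClass, Sym2.eq_iff, inv_eq_iff_eq_inv, inv_inv, and_self]

lemma mul_ne_one_of_invClass_ne {x y : G} (h : invClass x ≠ invClass y) : x * y ≠ 1 :=
  fun hxy => h (invClass_eq_iff.2 (Or.inr (eq_inv_of_mul_eq_one_left hxy)))

variable [DecidableEq G]

lemma card_fiber_invClass_add_card_fiber_sq_le_two (S : Finset G) (y : G) :
    #{x ∈ S | invClass x = invClass y} + #{x ∈ S | x ^ 2 = 1 ∧ invClass x = invClass y} ≤ 2 := by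
  have hsub : {x ∈ S | invClass x = invClass y} ⊆ {y, y⁻¹} := fun x hx => by
    simpa [invClass_eq_iff] using (mem_filter.1 hx).2
  by_cases hy : y ^ 2 = 1
  · have hyy : y⁻¹ = y := by rwa [inv_eq_iff_mul_eq_one, ← pow_two]
    rw [hyy, pair_eq_singleton] at hsub
    have hsub' : {x ∈ S | x ^ 2 = 1 ∧ invClass x = invClass y} ⊆ {y} :=
      fun x hx => hsub (by simp_all)
    have h₁ := (card_le_card hsub).trans (card_singleton y).le
    have h₂ := (card_le_card hsub').trans (card_singleton y).le
    omega
  · have hempty : {x ∈ S | x ^ 2 = 1 ∧ invClass x = invClass y} = ∅ := by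
      refine filter_eq_empty_iff.2 fun x _ ⟨hx, hxy⟩ => hy ?_
      rcases invClass_eq_iff.1 hxy with rfl | rfl
      · exact hx
      · simpa using hx
    rw [hempty, card_empty, add_zero]
    exact (card_le_card hsub).trans card_le_two

lemma card_add_card_filter_sq_le_two_mul_card_image_invClass (S : Finset G) :
    #S + #{x ∈ S | x ^ 2 = 1} ≤ 2 * #(S.image invClass) := by
  rw [card_eq_sum_card_image invClass S,
    card_eq_sum_card_fiberwise (t := S.image invClass)
      fun x hx => mem_image_of_mem _ (mem_of_mem_filter x hx),
    ← sum_add_distrib, mul_comm, ← smul_eq_mul, ← sum_const]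
  refine sum_le_sum fun c hc => ?_
  obtain ⟨y, -, rfl⟩ := mem_image.1 hc
  rw [filter_filter]
  exact card_fiber_invClass_add_card_fiber_sq_le_two S y

end InvClass

section Counting
variable {G : Type*} [Group G]

variable (G) in
lemma even_natCard_add_natCard_sq_eq_one [Finite G] :
    Even (Nat.card G + Nat.card {x : G // x ^ 2 = 1}) := by
  classical
  have : Fintype G := Fintype.ofFinite G
  let f : Function.End G := Inv.inv
  have hf : f ^ 2 ^ 1 = 1 := by
    funext x
    exact inv_inv x
  have hfix : Nat.card {x : G // x ^ 2 = 1} = Fintype.card (Function.fixedPoints f) := by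
    rw [← Nat.card_eq_fintype_card]
    refine Nat.card_congr (Equiv.subtypeEquivRight fun x => ?_)
    simp [f, Function.IsFixedPt, pow_two, inv_eq_iff_mul_eq_one]
  rw [hfix, Nat.card_eq_fintype_card, Nat.even_add, Nat.even_iff, Nat.even_iff]
  exact Iff.of_eq (congrArg (· = 0) (Equiv.Perm.card_fixedPoints_modEq hf))

variable [Fintype G] [DecidableEq G] (H : Subgroup G) [DecidablePred (· ∈ H)]

lemma Subgroup.natCard_sq_eq_one :
    Nat.card {x : H // x ^ 2 = 1} = #{x : G | x ∈ H ∧ x ^ 2 = 1} := by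
  rw [← Fintype.card_subtype, ← Nat.card_eq_fintype_card]
  refine Nat.card_congr ((Equiv.subtypeEquivRight fun x => ?_).trans
    (Equiv.subtypeSubtypeEquivSubtypeInter (· ∈ H) (fun x : G => x ^ 2 = 1)))
  rw [← Subgroup.coe_pow, OneMemClass.coe_eq_one]

lemma natCard_add_natCard_sq_eq_one_eq_subgroup_add_compl :
    Nat.card G + Nat.card {x : G // x ^ 2 = 1} =
      (Nat.card H + Nat.card {x : H // x ^ 2 = 1}) + (#{x | x ∉ H} + #{x | x ∉ H ∧ x ^ 2 = 1}) := by
  have hG := card_filter_add_card_filter_not (s := univ) (· ∈ H)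
  have hsq : #{x | x ∈ H ∧ x ^ 2 = 1} + #{x | x ∉ H ∧ x ^ 2 = 1} = #{x : G | x ^ 2 = 1} := by
    simpa only [filter_filter, and_comm] using
      card_filter_add_card_filter_not (s := {x : G | x ^ 2 = 1}) (· ∈ H)
  rw [Subgroup.natCard_sq_eq_one, Nat.card_eq_fintype_card, Nat.card_eq_fintype_card,
    Nat.card_eq_fintype_card, Fintype.card_subtype, Fintype.card_subtype, ← card_univ, ← hG, ← hsq]
  ring

lemma kOf_sub_kOf_le_card_image_invClass :
    kOf G - kOf H ≤ #(({x | x ∉ H} : Finset G).image invClass) := by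
  have hsplit := natCard_add_natCard_sq_eq_one_eq_subgroup_add_compl H
  obtain ⟨r, hr⟩ := even_natCard_add_natCard_sq_eq_one H
  have hpos : 0 < Nat.card H := Nat.card_pos
  have hT := card_add_card_filter_sq_le_two_mul_card_image_invClass ({x | x ∉ H} : Finset G)
  rw [filter_filter] at hT
  unfold kOf
  omega

end Counting

lemma Finset.exists_fin_injective_comp_of_le_card_image {α β : Type*} [DecidableEq β]
    {f : α → β} {s : Finset α} {n : ℕ} (h : n ≤ #(s.image f)) :
    ∃ x : Fin n → α, (∀ i, x i ∈ s) ∧ Function.Injective (f ∘ x) := by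
  obtain ⟨e⟩ := Function.Embedding.nonempty_of_card_le (α := Fin n) (β := s.image f)
    (by rwa [Fintype.card_fin, Fintype.card_coe])
  choose x hxs hx using fun i => mem_image.1 (e i).2
  exact ⟨x, hxs, fun i j hij => e.injective (Subtype.ext (by simpa [hx] using hij))⟩

lemma Gapless.lt_card {G : Type*} {w : G → ℕ} (hw : Gapless w) {s : Finset ℕ}
    (hs : ∀ g, w g ∈ s) (g : G) : w g < #s := by
  have hsub : range (w g + 1) ⊆ s := fun m hm => by
    obtain ⟨h, rfl⟩ := hw g m (Nat.lt_succ_iff.1 (mem_range.1 hm))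
    exact hs h
  simpa using card_le_card hsub

-- The five values fill `{1, …, 5}`: if `a ≤ 3`, `hdiff` fails for the largest and smallest `b`;
-- if `a ≥ 4`, `hsum` fails for the two smallest.
lemma false_of_five_distinct (a : ℕ) (b : Fin 4 → ℕ) (hb : Function.Injective b)
    (hab : ∀ i, b i ≠ a) (ha : 0 < a) (hb0 : ∀ i, 0 < b i) (ha5 : a ≤ 5) (hb5 : ∀ i, b i ≤ 5)
    (hsum : ∀ i j, i ≠ j → a ≤ b i + b j) (hdiff : ∀ i j, b i ≤ b j + a) : False := by
  simp only [Fin.forall_fin_succ, Function.Injective, IsEmpty.forall_iff, Fin.succ_zero_eq_one,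
    Fin.succ_one_eq_two, Fin.reduceSucc, Fin.isValue, Fin.reduceEq, Fin.succ_ne_zero,
    zero_ne_one, ne_eq, not_true_eq_false, not_false_eq_true,
    imp_false, forall_const, and_true, true_and] at hb hab hb0 hb5 hsum hdiff
  omega

section IndexTwo
variable {G : Type*} [Group G] {H : Subgroup G}

lemma isWeight_of_index_two (hH : H.index = 2) {w : G → ℕ} {a b c : ℕ} (h1 : w 1 = 0)
    (hwH : ∀ x ∈ H, x ≠ 1 → w x = a) (hwT : ∀ x ∉ H, b ≤ w x ∧ w x ≤ c)
    (hinv : ∀ x, w x⁻¹ = w x) (ha : 0 < a) (hab : a ≤ 2 * b) (hca : c ≤ a + b) : IsWeight w := by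
  have hle : ∀ x ∈ H, w x ≤ a := fun x hx => by
    rcases eq_or_ne x 1 with rfl | h
    · simp [h1]
    · exact (hwH x hx h).le
  refine ⟨fun x => ⟨fun h0 => ?_, fun h => h ▸ h1⟩, hinv, fun x y => ?_⟩
  · by_contra hx
    by_cases hxH : x ∈ H
    · linarith [hwH x hxH hx]
    · linarith [hwT x hxH]
  rcases eq_or_ne x 1 with rfl | hx
  · simp [h1]
  rcases eq_or_ne y 1 with rfl | hy
  · simp [h1]
  have hxy := Subgroup.mul_mem_iff_of_index_two hH (a := x) (b := y)
  by_cases hxH : x ∈ H <;> by_cases hyH : y ∈ H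
  · linarith [hle _ (hxy.2 (iff_of_true hxH hyH)), hwH x hxH hx]
  · linarith [(hwT _ fun h => hyH ((hxy.1 h).1 hxH)).2, hwH x hxH hx, hwT y hyH]
  · linarith [(hwT _ fun h => hxH ((hxy.1 h).2 hyH)).2, hwT x hxH, hwH y hyH hy]
  · linarith [hle _ (hxy.2 (iff_of_false hxH hyH)), hwT x hxH, hwT y hyH]

lemma exists_isWeight_of_index_two (hH : H.index = 2) (x : Fin 4 → G) (hxH : ∀ i, x i ∉ H)
    (hx : Function.Injective (invClass ∘ x)) :
    ∃ w : G → ℕ, IsWeight w ∧ (∀ h ∈ H, h ≠ 1 → w h = 4) ∧ (∀ i, w (x i) = 10 + i) ∧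
      ∀ g ∉ H, ∃ i, w g = w (x i) := by
  classical
  let level : Sym2 G → Fin 4 := Function.extend (invClass ∘ x) id fun _ => 3
  have hlevel (i : Fin 4) : level (invClass (x i)) = i := hx.extend_apply _ _ i
  let w (g : G) : ℕ := if g = 1 then 0 else if g ∈ H then 4 else 10 + level (invClass g)
  have hwT (g : G) (hg : g ∉ H) : w g = 10 + level (invClass g) := by
    simp [w, hg, show g ≠ 1 by rintro rfl; exact hg H.one_mem]
  refine ⟨w, isWeight_of_index_two hH (a := 4) (b := 10) (c := 13) (by simp [w])
    (fun g hg hg1 => by simp [w, hg, hg1]) (fun g hg => by simp only [hwT g hg]; omega)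
    (fun g => by simp [w]) (by norm_num) (by norm_num) (by norm_num),
    fun g hg hg1 => by simp [w, hg, hg1], fun i => by rw [hwT _ (hxH i), hlevel],
    fun g hg => ⟨level (invClass g), by rw [hwT g hg, hwT _ (hxH _), hlevel]⟩⟩

lemma not_gapless_of_index_two (hH : H.index = 2) {w : G → ℕ} (hw : IsWeight w) {a : ℕ}
    (hwH : ∀ h ∈ H, h ≠ 1 → w h = a) (x : Fin 4 → G) (hxH : ∀ i, x i ∉ H)
    (hx : Function.Injective (invClass ∘ x)) (hwx : Function.Injective (w ∘ x))
    (hax : ∀ i, w (x i) ≠ a) (hwT : ∀ g ∉ H, ∃ i, w g = w (x i)) : ¬ Gapless w := by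
  intro hgap
  obtain ⟨hw0, -, hwmul⟩ := hw
  have hmem (g : G) : w g ∈ insert 0 (insert a (univ.image (w ∘ x))) := by
    by_cases hg : g ∈ H
    · rcases eq_or_ne g 1 with rfl | hg1
      · simp [(hw0 1).2 rfl]
      · simp [hwH g hg hg1]
    · obtain ⟨i, hi⟩ := hwT g hg
      simp [hi]
  have hle (g : G) : w g ≤ 5 := by
    have hcard : #(insert 0 (insert a (univ.image (w ∘ x)))) ≤ 6 :=
      (card_insert_le _ _).trans (Nat.succ_le_succ ((card_insert_le _ _).trans
        (Nat.succ_le_succ (card_image_le.trans (by simp)))))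
    have := hgap.lt_card hmem g
    omega
  have hx1 (i : Fin 4) : x i ≠ 1 := fun h => hxH i (h ▸ H.one_mem)
  have hprod {i j : Fin 4} (hij : i ≠ j) : x i * x j ∈ H ∧ x i * x j ≠ 1 :=
    ⟨(Subgroup.mul_mem_iff_of_index_two hH).2 (iff_of_false (hxH i) (hxH j)),
      mul_ne_one_of_invClass_ne (hx.ne hij)⟩
  have hmulH {i j : Fin 4} (hij : i ≠ j) : w (x i * x j) = a := hwH _ (hprod hij).1 (hprod hij).2
  have hdiff (i j : Fin 4) : w (x i) ≤ w (x j) + a := by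
    rcases eq_or_ne i j with rfl | hij
    · omega
    have hmem : (x j)⁻¹ * x i ∈ H := (Subgroup.mul_mem_iff_of_index_two hH).2
      (iff_of_false (fun h => hxH j (inv_mem_iff.1 h)) (hxH i))
    have hne1 : (x j)⁻¹ * x i ≠ 1 := by
      refine mul_ne_one_of_invClass_ne ?_
      simpa only [invClass_inv, Function.comp_apply] using hx.ne hij.symm
    simpa [hwH _ hmem hne1] using hwmul (x j) ((x j)⁻¹ * x i)
  have h01 : (0 : Fin 4) ≠ 1 := by decide
  refine false_of_five_distinct a (w ∘ x) hwx hax ?_ (fun i => ?_) (hmulH h01 ▸ hle _)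
    (fun i => hle _) (fun i j hij => hmulH hij ▸ hwmul _ _) hdiff
  · rw [← hmulH h01]
    exact Nat.pos_of_ne_zero fun h => (hprod h01).2 ((hw0 _).1 h)
  · exact Nat.pos_of_ne_zero fun h => hx1 i ((hw0 _).1 h)

end IndexTwo

/-- If a finite group `G` has a subgroup `H` of index 2 with `k(G) - k(H) ≥ 4`,
then `G` has a weight no `𝒫`-equivalent weight of which is gapless. -/
theorem non_pinterval_of_index_two_subgroup {G : Type*} [Group G] [Finite G]
    (H : Subgroup G) (hidx : H.index = 2) (hk : 4 ≤ kOf G - kOf H) :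
    ∃ w : G → ℕ, IsWeight w ∧
      ∀ w' : G → ℕ, IsWeight w' → PEquivW w w' → ¬ Gapless w' := by
  classical
  have : Fintype G := Fintype.ofFinite G
  obtain ⟨x, hxH, hx⟩ :=
    exists_fin_injective_comp_of_le_card_image (hk.trans (kOf_sub_kOf_le_card_image_invClass H))
  simp only [mem_filter, mem_univ, true_and] at hxH
  obtain ⟨w, hw, hwH, hwx, hwT⟩ := exists_isWeight_of_index_two hidx x hxH hx
  have h01 : x 0 * x 1 ∈ H ∧ x 0 * x 1 ≠ 1 :=
    ⟨(Subgroup.mul_mem_iff_of_index_two hidx).2 (iff_of_false (hxH 0) (hxH 1)),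
      mul_ne_one_of_invClass_ne (hx.ne (by decide))⟩
  refine ⟨w, hw, fun w' hw' hP => not_gapless_of_index_two hidx hw' (a := w' (x 0 * x 1))
    (fun h hh hh1 => (hP _ _).1 ?_) x hxH hx (fun i j hij => ?_) (fun i => ?_) (fun g hg => ?_)⟩
  · rw [hwH h hh hh1, hwH _ h01.1 h01.2]
  · simpa [hwx, Fin.val_inj] using (hP (x i) (x j)).2 hij
  · rw [ne_eq, ← hP, hwx, hwH _ h01.1 h01.2]
    omega
  · obtain ⟨i, hi⟩ := hwT g hg
    exact ⟨i, (hP _ _).1 hi⟩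
end

section
/- Each of the following finite groups admits a weight w such that no weight 𝒫-equivalent to w is gapless (i.e. admits an invariant metric that is not 𝒫-interval): the cyclic group ZMod (2n) for every n ≥ 7; the dihedral group DihedralGroup n for every n ≥ 4; the dicyclic group QuaternionGroup n (of order 4n) for every n ≥ 3; and the symmetric group Equiv.Perm (Fin n) for every n ≥ 4. -/
/-- `G` admits an invariant metric that is not `𝒫`-interval. -/
def HasNonPIntervalWeight (G : Type*) [Group G] : Prop :=
  ∃ w : G → ℕ, IsWeight w ∧
    ∀ w' : G → ℕ, IsWeight w' → PEquivW w w' → ¬ Gapless w'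

/-- Additive version of `HasNonPIntervalWeight`. -/
def HasNonPIntervalAddWeight (G : Type*) [AddGroup G] : Prop :=
  ∃ w : G → ℕ, IsAddWeight w ∧
    ∀ w' : G → ℕ, IsAddWeight w' → PEquivW w w' → ¬ Gapless w'

set_option maxHeartbeats 4000000

lemma key_mul {G : Type*} [Group G] (w : G → ℕ)
    (h0 : ∀ x, w x = 0 ↔ x = 1)
    (hinv : ∀ x, w x⁻¹ = w x)
    (hval : ∀ x, w x = 0 ∨ w x = 4 ∨ w x = 5 ∨ w x = 6 ∨ w x = 7)
    (hmix : ∀ i j l : ℕ, (i = 4 ∨ i = 5 ∨ i = 6 ∨ i = 7) →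
      (j = 4 ∨ j = 5 ∨ j = 6 ∨ j = 7) → (l = 4 ∨ l = 5 ∨ l = 6 ∨ l = 7) →
      i ≠ j → i ≠ l → j ≠ l → ∃ x y : G, w x = i ∧ w y = j ∧ w (x * y) = l) :
    HasNonPIntervalWeight G := by
  refine ⟨w, ⟨h0, hinv, ?_⟩, ?_⟩
  · intro x y
    rcases hval x with hx | hx | hx | hx | hx
    · rw [(h0 x).mp hx, one_mul]; omega
    all_goals rcases hval y with hy | hy | hy | hy | hy
    all_goals try (rw [(h0 y).mp hy, mul_one]; omega)
    all_goals rcases hval (x * y) with hxy | hxy | hxy | hxy | hxy <;> omega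
  · intro w' hw' hP hg
    obtain ⟨h0', hinv', htri'⟩ := hw'
    -- representatives
    obtain ⟨x1, y1, ha, hb, hc⟩ := hmix 4 5 6 (by omega) (by omega) (by omega)
      (by omega) (by omega) (by omega)
    obtain ⟨x2, y2, _, _, hd⟩ := hmix 4 5 7 (by omega) (by omega) (by omega)
      (by omega) (by omega) (by omega)
    set a := x1; set b := y1; set c := x1 * y1; set d := x2 * y2
    -- each w' value is 0 or one of the four class values
    have hclass : ∀ g : G, w' g = 0 ∨ w' g = w' a ∨ w' g = w' b ∨ w' g = w' c ∨ w' g = w' d := by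
      intro g
      rcases hval g with h | h | h | h | h
      · left; exact (h0' g).mpr ((h0 g).mp h)
      · right; left; exact (hP g a).mp (by omega)
      · right; right; left; exact (hP g b).mp (by omega)
      · right; right; right; left; exact (hP g c).mp (by omega)
      · right; right; right; right; exact (hP g d).mp (by omega)
    have hane : w' a ≠ 0 := fun h => by
      have := (h0 a).mpr ((h0' a).mp h); omega
    have hbne : w' b ≠ 0 := fun h => by
      have := (h0 b).mpr ((h0' b).mp h); omega
    have hcne : w' c ≠ 0 := fun h => by
      have := (h0 c).mpr ((h0' c).mp h); omega
    have hdne : w' d ≠ 0 := fun h => by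
      have := (h0 d).mpr ((h0' d).mp h); omega
    have hab : w' a ≠ w' b := fun h => by have := (hP a b).mpr h; omega
    have hac : w' a ≠ w' c := fun h => by have := (hP a c).mpr h; omega
    have had : w' a ≠ w' d := fun h => by have := (hP a d).mpr h; omega
    have hbc : w' b ≠ w' c := fun h => by have := (hP b c).mpr h; omega
    have hbd : w' b ≠ w' d := fun h => by have := (hP b d).mpr h; omega
    have hcd : w' c ≠ w' d := fun h => by have := (hP c d).mpr h; omega
    -- some element has w' value ≥ 4
    have hbig : ∃ g : G, 4 ≤ w' g := by
      rcases (show 4 ≤ w' a ∨ 4 ≤ w' b ∨ 4 ≤ w' c ∨ 4 ≤ w' d by omega) with h | h | h | h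
      exacts [⟨a, h⟩, ⟨b, h⟩, ⟨c, h⟩, ⟨d, h⟩]
    obtain ⟨g, hg4⟩ := hbig
    -- find elements with w' values 1, 2, 4
    have hfind : ∀ m : ℕ, m ≠ 0 → m ≤ 4 →
        ∃ u : G, (w u = 4 ∨ w u = 5 ∨ w u = 6 ∨ w u = 7) ∧ w' u = m := by
      intro m hm hm4
      obtain ⟨u, hu⟩ := hg g m (by omega)
      refine ⟨u, ?_, hu⟩
      rcases hval u with h | h | h | h | h
      · have := (h0' u).mpr ((h0 u).mp h); omega
      all_goals omega
    obtain ⟨u, hu4, hu1⟩ := hfind 1 (by omega) (by omega)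
    obtain ⟨v, hv4, hv2⟩ := hfind 2 (by omega) (by omega)
    obtain ⟨z, hz4, hz4'⟩ := hfind 4 (by omega) (by omega)
    have huv : w u ≠ w v := fun h => by have := (hP u v).mp h; omega
    have huz : w u ≠ w z := fun h => by have := (hP u z).mp h; omega
    have hvz : w v ≠ w z := fun h => by have := (hP v z).mp h; omega
    obtain ⟨x, y, hx, hy, hxy⟩ := hmix (w u) (w v) (w z) hu4 hv4 hz4 huv huz hvz
    have hx1 : w' x = 1 := by rw [(hP x u).mp hx]; exact hu1
    have hy2 : w' y = 2 := by rw [(hP y v).mp hy]; exact hv2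
    have hxy4 : w' (x * y) = 4 := by rw [(hP (x * y) z).mp hxy]; exact hz4'
    have := htri' x y
    omega

lemma key_add {G : Type*} [AddGroup G] (w : G → ℕ)
    (h0 : ∀ x, w x = 0 ↔ x = 0)
    (hinv : ∀ x, w (-x) = w x)
    (hval : ∀ x, w x = 0 ∨ w x = 4 ∨ w x = 5 ∨ w x = 6 ∨ w x = 7)
    (hmix : ∀ i j l : ℕ, (i = 4 ∨ i = 5 ∨ i = 6 ∨ i = 7) →
      (j = 4 ∨ j = 5 ∨ j = 6 ∨ j = 7) → (l = 4 ∨ l = 5 ∨ l = 6 ∨ l = 7) →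
      i ≠ j → i ≠ l → j ≠ l → ∃ x y : G, w x = i ∧ w y = j ∧ w (x + y) = l) :
    HasNonPIntervalAddWeight G := by
  refine ⟨w, ⟨h0, hinv, ?_⟩, ?_⟩
  · intro x y
    rcases hval x with hx | hx | hx | hx | hx
    · rw [(h0 x).mp hx, zero_add]; omega
    all_goals rcases hval y with hy | hy | hy | hy | hy
    all_goals try (rw [(h0 y).mp hy, add_zero]; omega)
    all_goals rcases hval (x + y) with hxy | hxy | hxy | hxy | hxy <;> omega
  · intro w' hw' hP hg
    obtain ⟨h0', hinv', htri'⟩ := hw'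
    -- representatives
    obtain ⟨x1, y1, ha, hb, hc⟩ := hmix 4 5 6 (by omega) (by omega) (by omega)
      (by omega) (by omega) (by omega)
    obtain ⟨x2, y2, _, _, hd⟩ := hmix 4 5 7 (by omega) (by omega) (by omega)
      (by omega) (by omega) (by omega)
    set a := x1; set b := y1; set c := x1 + y1; set d := x2 + y2
    -- each w' value is 0 or one of the four class values
    have hclass : ∀ g : G, w' g = 0 ∨ w' g = w' a ∨ w' g = w' b ∨ w' g = w' c ∨ w' g = w' d := by
      intro g
      rcases hval g with h | h | h | h | h
      · left; exact (h0' g).mpr ((h0 g).mp h)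
      · right; left; exact (hP g a).mp (by omega)
      · right; right; left; exact (hP g b).mp (by omega)
      · right; right; right; left; exact (hP g c).mp (by omega)
      · right; right; right; right; exact (hP g d).mp (by omega)
    have hane : w' a ≠ 0 := fun h => by
      have := (h0 a).mpr ((h0' a).mp h); omega
    have hbne : w' b ≠ 0 := fun h => by
      have := (h0 b).mpr ((h0' b).mp h); omega
    have hcne : w' c ≠ 0 := fun h => by
      have := (h0 c).mpr ((h0' c).mp h); omega
    have hdne : w' d ≠ 0 := fun h => by
      have := (h0 d).mpr ((h0' d).mp h); omega
    have hab : w' a ≠ w' b := fun h => by have := (hP a b).mpr h; omega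
    have hac : w' a ≠ w' c := fun h => by have := (hP a c).mpr h; omega
    have had : w' a ≠ w' d := fun h => by have := (hP a d).mpr h; omega
    have hbc : w' b ≠ w' c := fun h => by have := (hP b c).mpr h; omega
    have hbd : w' b ≠ w' d := fun h => by have := (hP b d).mpr h; omega
    have hcd : w' c ≠ w' d := fun h => by have := (hP c d).mpr h; omega
    -- some element has w' value ≥ 4
    have hbig : ∃ g : G, 4 ≤ w' g := by
      rcases (show 4 ≤ w' a ∨ 4 ≤ w' b ∨ 4 ≤ w' c ∨ 4 ≤ w' d by omega) with h | h | h | h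
      exacts [⟨a, h⟩, ⟨b, h⟩, ⟨c, h⟩, ⟨d, h⟩]
    obtain ⟨g, hg4⟩ := hbig
    -- find elements with w' values 1, 2, 4
    have hfind : ∀ m : ℕ, m ≠ 0 → m ≤ 4 →
        ∃ u : G, (w u = 4 ∨ w u = 5 ∨ w u = 6 ∨ w u = 7) ∧ w' u = m := by
      intro m hm hm4
      obtain ⟨u, hu⟩ := hg g m (by omega)
      refine ⟨u, ?_, hu⟩
      rcases hval u with h | h | h | h | h
      · have := (h0' u).mpr ((h0 u).mp h); omega
      all_goals omega
    obtain ⟨u, hu4, hu1⟩ := hfind 1 (by omega) (by omega)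
    obtain ⟨v, hv4, hv2⟩ := hfind 2 (by omega) (by omega)
    obtain ⟨z, hz4, hz4'⟩ := hfind 4 (by omega) (by omega)
    have huv : w u ≠ w v := fun h => by have := (hP u v).mp h; omega
    have huz : w u ≠ w z := fun h => by have := (hP u z).mp h; omega
    have hvz : w v ≠ w z := fun h => by have := (hP v z).mp h; omega
    obtain ⟨x, y, hx, hy, hxy⟩ := hmix (w u) (w v) (w z) hu4 hv4 hz4 huv huz hvz
    have hx1 : w' x = 1 := by rw [(hP x u).mp hx]; exact hu1
    have hy2 : w' y = 2 := by rw [(hP y v).mp hy]; exact hv2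
    have hxy4 : w' (x + y) = 4 := by rw [(hP (x + y) z).mp hxy]; exact hz4'
    have := htri' x y
    omega

def wgtFun (n d : ℕ) : ℕ :=
  if d = 0 then 0 else if d = 1 ∨ d = n then 4 else if d = 2 ∨ d = n - 2 then 5
  else if d = 3 ∨ d = n - 1 then 6 else 7

theorem zmod_family (n : ℕ) (hn : 7 ≤ n) : HasNonPIntervalAddWeight (ZMod (2 * n)) := by
  haveI : NeZero (2*n) := ⟨by omega⟩
  set w : ZMod (2*n) → ℕ := fun x => wgtFun n (min x.val (2*n - x.val)) with hw
  have hvlt : ∀ x : ZMod (2*n), x.val < 2*n := fun x => ZMod.val_lt x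
  have h0 : ∀ x : ZMod (2*n), w x = 0 ↔ x = 0 := by
    intro x
    rw [hw, ← ZMod.val_eq_zero]
    have := hvlt x
    simp only [wgtFun]
    beta_reduce
    rw [Nat.min_def]
    split_ifs <;> (constructor <;> intro h <;> first | exact h.elim | omega)
  have hinv : ∀ x : ZMod (2*n), w (-x) = w x := by
    intro x
    by_cases hx : x = 0
    · simp [hx]
    · have hv := hvlt x
      have hv0 : x.val ≠ 0 := fun h => hx ((ZMod.val_eq_zero x).mp h)
      rw [hw]
      simp only
      rw [ZMod.neg_val, if_neg hx]
      congr 1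
      rw [Nat.min_def, Nat.min_def]
      split_ifs <;> omega
  have wcast : ∀ k : ℕ, k < 2*n → w (k : ZMod (2*n)) = wgtFun n (min k (2*n - k)) := by
    intro k hk
    rw [hw]
    simp only
    rw [ZMod.val_natCast, Nat.mod_eq_of_lt hk]
  have castred : ∀ k : ℕ, ((2*n + k : ℕ) : ZMod (2*n)) = (k : ZMod (2*n)) := by
    intro k
    rw [Nat.cast_add, ZMod.natCast_self, zero_add]
  have hval : ∀ x : ZMod (2*n), w x = 0 ∨ w x = 4 ∨ w x = 5 ∨ w x = 6 ∨ w x = 7 := by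
    intro x
    rw [hw]
    simp only [wgtFun]
    beta_reduce
    split_ifs <;> omega
  have main : ∀ a b c : ℕ, a < 2*n → b < 2*n → c < 2*n → (a + b = c ∨ a + b = 2*n + c) →
      ∀ i j l : ℕ, wgtFun n (min a (2*n-a)) = i → wgtFun n (min b (2*n-b)) = j →
      wgtFun n (min c (2*n-c)) = l →
      ∃ x y : ZMod (2*n), w x = i ∧ w y = j ∧ w (x+y) = l := by
    intro a b c ha hb hc habc i j l hi hj hl
    refine ⟨(a : ZMod (2*n)), (b : ZMod (2*n)), by rw [wcast a ha]; exact hi,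
      by rw [wcast b hb]; exact hj, ?_⟩
    have hsum : ((a : ℕ) : ZMod (2*n)) + ((b : ℕ) : ZMod (2*n)) = ((c : ℕ) : ZMod (2*n)) := by
      rcases habc with h | h
      · rw [← Nat.cast_add, h]
      · rw [← Nat.cast_add, h, castred]
    rw [hsum, wcast c hc]
    exact hl
  have hmix : ∀ i j l : ℕ, (i = 4 ∨ i = 5 ∨ i = 6 ∨ i = 7) →
      (j = 4 ∨ j = 5 ∨ j = 6 ∨ j = 7) → (l = 4 ∨ l = 5 ∨ l = 6 ∨ l = 7) →
      i ≠ j → i ≠ l → j ≠ l → ∃ x y : ZMod (2*n), w x = i ∧ w y = j ∧ w (x+y) = l := by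
    intro i j l hi hj hl hij hil hjl
    rcases hi with rfl | rfl | rfl | rfl <;> rcases hj with rfl | rfl | rfl | rfl <;>
      rcases hl with rfl | rfl | rfl | rfl <;>
      first
      | exact absurd rfl hij
      | exact absurd rfl hil
      | exact absurd rfl hjl
      | skip
    · exact main (1) (2) (3) (by omega) (by omega) (by omega) (by omega) 4 5 6 (by unfold wgtFun; rw [Nat.min_def]; split_ifs <;> first | omega | tauto) (by unfold wgtFun; rw [Nat.min_def]; split_ifs <;> first | omega | tauto) (by unfold wgtFun; rw [Nat.min_def]; split_ifs <;> first | omega | tauto)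
    · exact main (1) (n+2) (n+3) (by omega) (by omega) (by omega) (by omega) 4 5 7 (by unfold wgtFun; rw [Nat.min_def]; split_ifs <;> first | omega | tauto) (by unfold wgtFun; rw [Nat.min_def]; split_ifs <;> first | omega | tauto) (by unfold wgtFun; rw [Nat.min_def]; split_ifs <;> first | omega | tauto)
    · exact main (2*n-1) (3) (2) (by omega) (by omega) (by omega) (by omega) 4 6 5 (by unfold wgtFun; rw [Nat.min_def]; split_ifs <;> first | omega | tauto) (by unfold wgtFun; rw [Nat.min_def]; split_ifs <;> first | omega | tauto) (by unfold wgtFun; rw [Nat.min_def]; split_ifs <;> first | omega | tauto)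
    · exact main (1) (3) (4) (by omega) (by omega) (by omega) (by omega) 4 6 7 (by unfold wgtFun; rw [Nat.min_def]; split_ifs <;> first | omega | tauto) (by unfold wgtFun; rw [Nat.min_def]; split_ifs <;> first | omega | tauto) (by unfold wgtFun; rw [Nat.min_def]; split_ifs <;> first | omega | tauto)
    · exact main (1) (n-3) (n-2) (by omega) (by omega) (by omega) (by omega) 4 7 5 (by unfold wgtFun; rw [Nat.min_def]; split_ifs <;> first | omega | tauto) (by unfold wgtFun; rw [Nat.min_def]; split_ifs <;> first | omega | tauto) (by unfold wgtFun; rw [Nat.min_def]; split_ifs <;> first | omega | tauto)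
    · exact main (2*n-1) (4) (3) (by omega) (by omega) (by omega) (by omega) 4 7 6 (by unfold wgtFun; rw [Nat.min_def]; split_ifs <;> first | omega | tauto) (by unfold wgtFun; rw [Nat.min_def]; split_ifs <;> first | omega | tauto) (by unfold wgtFun; rw [Nat.min_def]; split_ifs <;> first | omega | tauto)
    · exact main (2) (1) (3) (by omega) (by omega) (by omega) (by omega) 5 4 6 (by unfold wgtFun; rw [Nat.min_def]; split_ifs <;> first | omega | tauto) (by unfold wgtFun; rw [Nat.min_def]; split_ifs <;> first | omega | tauto) (by unfold wgtFun; rw [Nat.min_def]; split_ifs <;> first | omega | tauto)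
    · exact main (n+2) (1) (n+3) (by omega) (by omega) (by omega) (by omega) 5 4 7 (by unfold wgtFun; rw [Nat.min_def]; split_ifs <;> first | omega | tauto) (by unfold wgtFun; rw [Nat.min_def]; split_ifs <;> first | omega | tauto) (by unfold wgtFun; rw [Nat.min_def]; split_ifs <;> first | omega | tauto)
    · exact main (2*n-2) (3) (1) (by omega) (by omega) (by omega) (by omega) 5 6 4 (by unfold wgtFun; rw [Nat.min_def]; split_ifs <;> first | omega | tauto) (by unfold wgtFun; rw [Nat.min_def]; split_ifs <;> first | omega | tauto) (by unfold wgtFun; rw [Nat.min_def]; split_ifs <;> first | omega | tauto)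
    · exact main (2) (n+1) (n+3) (by omega) (by omega) (by omega) (by omega) 5 6 7 (by unfold wgtFun; rw [Nat.min_def]; split_ifs <;> first | omega | tauto) (by unfold wgtFun; rw [Nat.min_def]; split_ifs <;> first | omega | tauto) (by unfold wgtFun; rw [Nat.min_def]; split_ifs <;> first | omega | tauto)
    · exact main (n-2) (n+3) (1) (by omega) (by omega) (by omega) (by omega) 5 7 4 (by unfold wgtFun; rw [Nat.min_def]; split_ifs <;> first | omega | tauto) (by unfold wgtFun; rw [Nat.min_def]; split_ifs <;> first | omega | tauto) (by unfold wgtFun; rw [Nat.min_def]; split_ifs <;> first | omega | tauto)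
    · exact main (2) (n-3) (n-1) (by omega) (by omega) (by omega) (by omega) 5 7 6 (by unfold wgtFun; rw [Nat.min_def]; split_ifs <;> first | omega | tauto) (by unfold wgtFun; rw [Nat.min_def]; split_ifs <;> first | omega | tauto) (by unfold wgtFun; rw [Nat.min_def]; split_ifs <;> first | omega | tauto)
    · exact main (3) (2*n-1) (2) (by omega) (by omega) (by omega) (by omega) 6 4 5 (by unfold wgtFun; rw [Nat.min_def]; split_ifs <;> first | omega | tauto) (by unfold wgtFun; rw [Nat.min_def]; split_ifs <;> first | omega | tauto) (by unfold wgtFun; rw [Nat.min_def]; split_ifs <;> first | omega | tauto)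
    · exact main (3) (1) (4) (by omega) (by omega) (by omega) (by omega) 6 4 7 (by unfold wgtFun; rw [Nat.min_def]; split_ifs <;> first | omega | tauto) (by unfold wgtFun; rw [Nat.min_def]; split_ifs <;> first | omega | tauto) (by unfold wgtFun; rw [Nat.min_def]; split_ifs <;> first | omega | tauto)
    · exact main (3) (2*n-2) (1) (by omega) (by omega) (by omega) (by omega) 6 5 4 (by unfold wgtFun; rw [Nat.min_def]; split_ifs <;> first | omega | tauto) (by unfold wgtFun; rw [Nat.min_def]; split_ifs <;> first | omega | tauto) (by unfold wgtFun; rw [Nat.min_def]; split_ifs <;> first | omega | tauto)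
    · exact main (n+1) (2) (n+3) (by omega) (by omega) (by omega) (by omega) 6 5 7 (by unfold wgtFun; rw [Nat.min_def]; split_ifs <;> first | omega | tauto) (by unfold wgtFun; rw [Nat.min_def]; split_ifs <;> first | omega | tauto) (by unfold wgtFun; rw [Nat.min_def]; split_ifs <;> first | omega | tauto)
    · exact main (2*n-3) (4) (1) (by omega) (by omega) (by omega) (by omega) 6 7 4 (by unfold wgtFun; rw [Nat.min_def]; split_ifs <;> first | omega | tauto) (by unfold wgtFun; rw [Nat.min_def]; split_ifs <;> first | omega | tauto) (by unfold wgtFun; rw [Nat.min_def]; split_ifs <;> first | omega | tauto)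
    · exact main (n+1) (n-3) (2*n-2) (by omega) (by omega) (by omega) (by omega) 6 7 5 (by unfold wgtFun; rw [Nat.min_def]; split_ifs <;> first | omega | tauto) (by unfold wgtFun; rw [Nat.min_def]; split_ifs <;> first | omega | tauto) (by unfold wgtFun; rw [Nat.min_def]; split_ifs <;> first | omega | tauto)
    · exact main (n-3) (1) (n-2) (by omega) (by omega) (by omega) (by omega) 7 4 5 (by unfold wgtFun; rw [Nat.min_def]; split_ifs <;> first | omega | tauto) (by unfold wgtFun; rw [Nat.min_def]; split_ifs <;> first | omega | tauto) (by unfold wgtFun; rw [Nat.min_def]; split_ifs <;> first | omega | tauto)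
    · exact main (4) (2*n-1) (3) (by omega) (by omega) (by omega) (by omega) 7 4 6 (by unfold wgtFun; rw [Nat.min_def]; split_ifs <;> first | omega | tauto) (by unfold wgtFun; rw [Nat.min_def]; split_ifs <;> first | omega | tauto) (by unfold wgtFun; rw [Nat.min_def]; split_ifs <;> first | omega | tauto)
    · exact main (n+3) (n-2) (1) (by omega) (by omega) (by omega) (by omega) 7 5 4 (by unfold wgtFun; rw [Nat.min_def]; split_ifs <;> first | omega | tauto) (by unfold wgtFun; rw [Nat.min_def]; split_ifs <;> first | omega | tauto) (by unfold wgtFun; rw [Nat.min_def]; split_ifs <;> first | omega | tauto)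
    · exact main (n-3) (2) (n-1) (by omega) (by omega) (by omega) (by omega) 7 5 6 (by unfold wgtFun; rw [Nat.min_def]; split_ifs <;> first | omega | tauto) (by unfold wgtFun; rw [Nat.min_def]; split_ifs <;> first | omega | tauto) (by unfold wgtFun; rw [Nat.min_def]; split_ifs <;> first | omega | tauto)
    · exact main (4) (2*n-3) (1) (by omega) (by omega) (by omega) (by omega) 7 6 4 (by unfold wgtFun; rw [Nat.min_def]; split_ifs <;> first | omega | tauto) (by unfold wgtFun; rw [Nat.min_def]; split_ifs <;> first | omega | tauto) (by unfold wgtFun; rw [Nat.min_def]; split_ifs <;> first | omega | tauto)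
    · exact main (n-3) (n+1) (2*n-2) (by omega) (by omega) (by omega) (by omega) 7 6 5 (by unfold wgtFun; rw [Nat.min_def]; split_ifs <;> first | omega | tauto) (by unfold wgtFun; rw [Nat.min_def]; split_ifs <;> first | omega | tauto) (by unfold wgtFun; rw [Nat.min_def]; split_ifs <;> first | omega | tauto)
  exact key_add w h0 hinv hval hmix

def dwt (n : ℕ) : DihedralGroup n → ℕ
  | DihedralGroup.r i => if i = 0 then 0 else if i = 1 ∨ i = -1 then 4 else 7
  | DihedralGroup.sr i => if i = 0 then 5 else if i = 1 ∨ i = 2 then 6 else 7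

open DihedralGroup in
theorem dih_family (n : ℕ) (hn : 4 ≤ n) : HasNonPIntervalWeight (DihedralGroup n) := by
  haveI : NeZero n := ⟨by omega⟩
  -- nat-cast helpers
  have hne : ∀ a b : ℕ, a < n → b < n → a ≠ b → (a : ZMod n) ≠ (b : ZMod n) := by
    intro a b ha hb hab h
    exact hab (by rwa [ZMod.natCast_eq_natCast_iff', Nat.mod_eq_of_lt ha, Nat.mod_eq_of_lt hb] at h)
  have hm1 : ((n - 1 : ℕ) : ZMod n) = -1 := by
    rw [Nat.cast_sub (by omega), ZMod.natCast_self]; ring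
  have hm2 : ((n - 2 : ℕ) : ZMod n) = -2 := by
    rw [Nat.cast_sub (by omega), ZMod.natCast_self]; push_cast; ring
  -- basic inequalities in ZMod n
  have e10 : (1 : ZMod n) ≠ 0 := by
    have := hne 1 0 (by omega) (by omega) (by omega); simpa using this
  have e20 : (2 : ZMod n) ≠ 0 := by
    have := hne 2 0 (by omega) (by omega) (by omega); simpa using this
  have e21 : (2 : ZMod n) ≠ 1 := by
    have := hne 2 1 (by omega) (by omega) (by omega); simpa using this
  have e2m1 : (2 : ZMod n) ≠ -1 := by
    have := hne 2 (n-1) (by omega) (by omega) (by omega); simpa [hm1] using this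
  have e30 : (3 : ZMod n) ≠ 0 := by
    have h4 : n = 4 ∨ 5 ≤ n := by omega
    rcases h4 with rfl | h5
    · decide
    · have := hne 3 0 (by omega) (by omega) (by omega); simpa using this
  have e31 : (3 : ZMod n) ≠ 1 := by
    have h4 : n = 4 ∨ 5 ≤ n := by omega
    rcases h4 with rfl | h5
    · decide
    · have := hne 3 1 (by omega) (by omega) (by omega); simpa using this
  have e32 : (3 : ZMod n) ≠ 2 := by
    have h4 : n = 4 ∨ 5 ≤ n := by omega
    rcases h4 with rfl | h5
    · decide
    · have := hne 3 2 (by omega) (by omega) (by omega); simpa using this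
  have em10 : (-1 : ZMod n) ≠ 0 := by
    rw [← hm1]; have := hne (n-1) 0 (by omega) (by omega) (by omega); simpa using this
  have em11 : (-1 : ZMod n) ≠ 1 := by
    rw [← hm1]; have := hne (n-1) 1 (by omega) (by omega) (by omega); simpa using this
  have em12 : (-1 : ZMod n) ≠ 2 := by
    rw [← hm1]; have := hne (n-1) 2 (by omega) (by omega) (by omega); simpa using this
  have em1m1 : (1 : ZMod n) ≠ -1 := by
    rw [← hm1]; have := hne 1 (n-1) (by omega) (by omega) (by omega); simpa using this
  have em20 : (-2 : ZMod n) ≠ 0 := by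
    rw [← hm2]; have := hne (n-2) 0 (by omega) (by omega) (by omega); simpa using this
  have em21 : (-2 : ZMod n) ≠ 1 := by
    rw [← hm2]; have := hne (n-2) 1 (by omega) (by omega) (by omega); simpa using this
  have em2m1 : (-2 : ZMod n) ≠ -1 := by
    rw [← hm2, ← hm1]
    have := hne (n-2) (n-1) (by omega) (by omega) (by omega); simpa using this
  set w : DihedralGroup n → ℕ := dwt n with hw
  have invr : ∀ i : ZMod n, (r i)⁻¹ = r (-i) := fun i =>
    inv_eq_of_mul_eq_one_right (by rw [r_mul_r, add_neg_cancel]; rfl)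
  have invsr : ∀ i : ZMod n, (sr i)⁻¹ = sr i := fun i =>
    inv_eq_of_mul_eq_one_right (by rw [sr_mul_sr, sub_self]; rfl)
  have vr1 : w (r 1) = 4 := by simp [hw, dwt, e10]
  have vrm1 : w (r (-1)) = 4 := by simp [hw, dwt, em10]
  have vr2 : w (r 2) = 7 := by simp [hw, dwt, e20, e21, e2m1]
  have vrm2 : w (r (-2)) = 7 := by simp [hw, dwt, em20, em21, em2m1]
  have vsr0 : w (sr 0) = 5 := by simp [hw, dwt]
  have vsr1 : w (sr 1) = 6 := by simp [hw, dwt, e10]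
  have vsr2 : w (sr 2) = 6 := by simp [hw, dwt, e20]
  have vsr3 : w (sr 3) = 7 := by simp [hw, dwt, e30, e31, e32]
  have vsrm1 : w (sr (-1)) = 7 := by simp [hw, dwt, em10, em11, em12]
  have h0 : ∀ x : DihedralGroup n, w x = 0 ↔ x = 1 := by
    rintro (i | i) <;> simp only [hw, dwt] <;> split_ifs <;>
      simp_all [DihedralGroup.one_def, -DihedralGroup.r_zero]
  have hinv : ∀ x : DihedralGroup n, w x⁻¹ = w x := by
    rintro (i | i)
    · rw [invr]
      by_cases h : i = 0
      · subst h; simp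
      · have h' : ¬ (-i = 0) := fun hh => h (by rwa [neg_eq_zero] at hh)
        simp only [hw, dwt, if_neg h, if_neg h']
        have : (-i = 1 ∨ -i = -1) ↔ (i = 1 ∨ i = -1) := by
          constructor <;> rintro (h1 | h1)
          · right; rw [← neg_neg i, h1]
          · left; rw [← neg_neg i, h1]; ring
          · right; rw [h1]
          · left; rw [h1]; ring
        simp only [this]
    · rw [invsr]
  have hval : ∀ x : DihedralGroup n, w x = 0 ∨ w x = 4 ∨ w x = 5 ∨ w x = 6 ∨ w x = 7 := by
    rintro (i | i) <;> simp only [hw, dwt] <;> split_ifs <;> omega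
  have hmix : ∀ i j l : ℕ, (i = 4 ∨ i = 5 ∨ i = 6 ∨ i = 7) →
      (j = 4 ∨ j = 5 ∨ j = 6 ∨ j = 7) → (l = 4 ∨ l = 5 ∨ l = 6 ∨ l = 7) →
      i ≠ j → i ≠ l → j ≠ l →
      ∃ x y : DihedralGroup n, w x = i ∧ w y = j ∧ w (x * y) = l := by
    intro i j l hi hj hl hij hil hjl
    rcases hi with rfl | rfl | rfl | rfl <;> rcases hj with rfl | rfl | rfl | rfl <;>
      rcases hl with rfl | rfl | rfl | rfl <;>
      first
      | exact absurd rfl hij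
      | exact absurd rfl hil
      | exact absurd rfl hjl
      | skip
    · exact ⟨r (-1), sr 0, vrm1, vsr0, by rw [r_mul_sr, show (0:ZMod n) - -1 = 1 from by ring]; exact vsr1⟩
    · exact ⟨r 1, sr 0, vr1, vsr0, by rw [r_mul_sr, show (0:ZMod n) - 1 = -1 from by ring]; exact vsrm1⟩
    · exact ⟨r 1, sr 1, vr1, vsr1, by rw [r_mul_sr, show (1:ZMod n) - 1 = 0 from by ring]; exact vsr0⟩
    · exact ⟨r (-1), sr 2, vrm1, vsr2, by rw [r_mul_sr, show (2:ZMod n) - -1 = 3 from by ring]; exact vsr3⟩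
    · exact ⟨r (-1), sr (-1), vrm1, vsrm1, by rw [r_mul_sr, show (-1:ZMod n) - -1 = 0 from by ring]; exact vsr0⟩
    · exact ⟨r 1, sr 3, vr1, vsr3, by rw [r_mul_sr, show (3:ZMod n) - 1 = 2 from by ring]; exact vsr2⟩
    · exact ⟨sr 0, r 1, vsr0, vr1, by rw [sr_mul_r, show (0:ZMod n) + 1 = 1 from by ring]; exact vsr1⟩
    · exact ⟨sr 0, r (-1), vsr0, vrm1, by rw [sr_mul_r, show (0:ZMod n) + -1 = -1 from by ring]; exact vsrm1⟩
    · exact ⟨sr 0, sr 1, vsr0, vsr1, by rw [sr_mul_sr, show (1:ZMod n) - 0 = 1 from by ring]; exact vr1⟩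
    · exact ⟨sr 0, sr 2, vsr0, vsr2, by rw [sr_mul_sr, show (2:ZMod n) - 0 = 2 from by ring]; exact vr2⟩
    · exact ⟨sr 0, sr (-1), vsr0, vsrm1, by rw [sr_mul_sr, show (-1:ZMod n) - 0 = -1 from by ring]; exact vrm1⟩
    · exact ⟨sr 0, r 2, vsr0, vr2, by rw [sr_mul_r, show (0:ZMod n) + 2 = 2 from by ring]; exact vsr2⟩
    · exact ⟨sr 1, r (-1), vsr1, vrm1, by rw [sr_mul_r, show (1:ZMod n) + -1 = 0 from by ring]; exact vsr0⟩
    · exact ⟨sr 2, r 1, vsr2, vr1, by rw [sr_mul_r, show (2:ZMod n) + 1 = 3 from by ring]; exact vsr3⟩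
    · exact ⟨sr 1, sr 0, vsr1, vsr0, by rw [sr_mul_sr, show (0:ZMod n) - 1 = -1 from by ring]; exact vrm1⟩
    · exact ⟨sr 2, sr 0, vsr2, vsr0, by rw [sr_mul_sr, show (0:ZMod n) - 2 = -2 from by ring]; exact vrm2⟩
    · exact ⟨sr 2, sr 3, vsr2, vsr3, by rw [sr_mul_sr, show (3:ZMod n) - 2 = 1 from by ring]; exact vr1⟩
    · exact ⟨sr 2, r (-2), vsr2, vrm2, by rw [sr_mul_r, show (2:ZMod n) + -2 = 0 from by ring]; exact vsr0⟩
    · exact ⟨sr (-1), r 1, vsrm1, vr1, by rw [sr_mul_r, show (-1:ZMod n) + 1 = 0 from by ring]; exact vsr0⟩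
    · exact ⟨sr 3, r (-1), vsr3, vrm1, by rw [sr_mul_r, show (3:ZMod n) + -1 = 2 from by ring]; exact vsr2⟩
    · exact ⟨sr (-1), sr 0, vsrm1, vsr0, by rw [sr_mul_sr, show (0:ZMod n) - -1 = 1 from by ring]; exact vr1⟩
    · exact ⟨r (-2), sr 0, vrm2, vsr0, by rw [r_mul_sr, show (0:ZMod n) - -2 = 2 from by ring]; exact vsr2⟩
    · exact ⟨sr 3, sr 2, vsr3, vsr2, by rw [sr_mul_sr, show (2:ZMod n) - 3 = -1 from by ring]; exact vrm1⟩
    · exact ⟨r 2, sr 2, vr2, vsr2, by rw [r_mul_sr, show (2:ZMod n) - 2 = 0 from by ring]; exact vsr0⟩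
  exact key_mul w h0 hinv hval hmix

def qwt (n : ℕ) : QuaternionGroup n → ℕ
  | QuaternionGroup.a i => if i = 0 then 0 else if i = 1 ∨ i = -1 then 4 else 7
  | QuaternionGroup.xa i => if i = 0 ∨ i = (n : ZMod (2*n)) then 5
      else if i = 1 ∨ i = (n : ZMod (2*n)) + 1 then 6 else 7

open QuaternionGroup in
theorem quat_family (n : ℕ) (hn : 3 ≤ n) : HasNonPIntervalWeight (QuaternionGroup n) := by
  haveI : NeZero (2*n) := ⟨by omega⟩
  set w : QuaternionGroup n → ℕ := qwt n with hw
  have key_ne : ∀ a b : ℕ, a < 2*n → b < 2*n → a ≠ b →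
      (a : ZMod (2*n)) ≠ (b : ZMod (2*n)) := by
    intro a b ha hb hab h
    exact hab (by rwa [ZMod.natCast_eq_natCast_iff', Nat.mod_eq_of_lt ha,
      Nat.mod_eq_of_lt hb] at h)
  have h2n0 : ((2*n : ℕ) : ZMod (2*n)) = 0 := ZMod.natCast_self _
  have h2 : (n : ZMod (2*n)) + (n : ZMod (2*n)) = 0 := by
    rw [← Nat.cast_add, ← two_mul, h2n0]
  have q0 : ((0 : ℕ) : ZMod (2*n)) = 0 := by push_cast; ring
  have q1 : ((1 : ℕ) : ZMod (2*n)) = 1 := by push_cast; ring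
  have q2 : ((2 : ℕ) : ZMod (2*n)) = 2 := by push_cast; ring
  have qn : ((n : ℕ) : ZMod (2*n)) = (n : ZMod (2*n)) := rfl
  have qn1 : ((n+1 : ℕ) : ZMod (2*n)) = (n : ZMod (2*n)) + 1 := by push_cast; ring
  have qn2 : ((n+2 : ℕ) : ZMod (2*n)) = (n : ZMod (2*n)) + 2 := by push_cast; ring
  have qnm1 : ((n-1 : ℕ) : ZMod (2*n)) = (n : ZMod (2*n)) - 1 := by
    rw [Nat.cast_sub (by omega)]; push_cast; ring
  have qm1 : ((2*n-1 : ℕ) : ZMod (2*n)) = -1 := by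
    rw [Nat.cast_sub (by omega), h2n0]; push_cast; ring
  have i10 : (1 : ZMod (2*n)) ≠ (0 : ZMod (2*n)) := by
    rw [← q1, ← q0]
    exact key_ne (1) (0) (by omega) (by omega) (by omega)
  have im10 : (-1 : ZMod (2*n)) ≠ (0 : ZMod (2*n)) := by
    rw [← qm1, ← q0]
    exact key_ne (2*n-1) (0) (by omega) (by omega) (by omega)
  have inp10 : ((n : ZMod (2*n)) + 1) ≠ (0 : ZMod (2*n)) := by
    rw [← qn1, ← q0]
    exact key_ne (n+1) (0) (by omega) (by omega) (by omega)
  have inp11 : ((n : ZMod (2*n)) + 1) ≠ (1 : ZMod (2*n)) := by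
    rw [← qn1, ← q1]
    exact key_ne (n+1) (1) (by omega) (by omega) (by omega)
  have inp1m1 : ((n : ZMod (2*n)) + 1) ≠ (-1 : ZMod (2*n)) := by
    rw [← qn1, ← qm1]
    exact key_ne (n+1) (2*n-1) (by omega) (by omega) (by omega)
  have inm10 : ((n : ZMod (2*n)) - 1) ≠ (0 : ZMod (2*n)) := by
    rw [← qnm1, ← q0]
    exact key_ne (n-1) (0) (by omega) (by omega) (by omega)
  have inm11 : ((n : ZMod (2*n)) - 1) ≠ (1 : ZMod (2*n)) := by
    rw [← qnm1, ← q1]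
    exact key_ne (n-1) (1) (by omega) (by omega) (by omega)
  have inm1m1 : ((n : ZMod (2*n)) - 1) ≠ (-1 : ZMod (2*n)) := by
    rw [← qnm1, ← qm1]
    exact key_ne (n-1) (2*n-1) (by omega) (by omega) (by omega)
  have i1n : (1 : ZMod (2*n)) ≠ ((n : ZMod (2*n))) := by
    rw [← q1, ← qn]
    exact key_ne (1) (n) (by omega) (by omega) (by omega)
  have inp1n : ((n : ZMod (2*n)) + 1) ≠ ((n : ZMod (2*n))) := by
    rw [← qn1, ← qn]
    exact key_ne (n+1) (n) (by omega) (by omega) (by omega)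
  have im1n : (-1 : ZMod (2*n)) ≠ ((n : ZMod (2*n))) := by
    rw [← qm1, ← qn]
    exact key_ne (2*n-1) (n) (by omega) (by omega) (by omega)
  have im11 : (-1 : ZMod (2*n)) ≠ (1 : ZMod (2*n)) := by
    rw [← qm1, ← q1]
    exact key_ne (2*n-1) (1) (by omega) (by omega) (by omega)
  have im1np1 : (-1 : ZMod (2*n)) ≠ ((n : ZMod (2*n)) + 1) := by
    rw [← qm1, ← qn1]
    exact key_ne (2*n-1) (n+1) (by omega) (by omega) (by omega)
  have i20 : (2 : ZMod (2*n)) ≠ (0 : ZMod (2*n)) := by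
    rw [← q2, ← q0]
    exact key_ne (2) (0) (by omega) (by omega) (by omega)
  have i2n : (2 : ZMod (2*n)) ≠ ((n : ZMod (2*n))) := by
    rw [← q2, ← qn]
    exact key_ne (2) (n) (by omega) (by omega) (by omega)
  have i21 : (2 : ZMod (2*n)) ≠ (1 : ZMod (2*n)) := by
    rw [← q2, ← q1]
    exact key_ne (2) (1) (by omega) (by omega) (by omega)
  have i2np1 : (2 : ZMod (2*n)) ≠ ((n : ZMod (2*n)) + 1) := by
    rw [← q2, ← qn1]
    exact key_ne (2) (n+1) (by omega) (by omega) (by omega)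
  have inp20 : ((n : ZMod (2*n)) + 2) ≠ (0 : ZMod (2*n)) := by
    rw [← qn2, ← q0]
    exact key_ne (n+2) (0) (by omega) (by omega) (by omega)
  have inp2n : ((n : ZMod (2*n)) + 2) ≠ ((n : ZMod (2*n))) := by
    rw [← qn2, ← qn]
    exact key_ne (n+2) (n) (by omega) (by omega) (by omega)
  have inp21 : ((n : ZMod (2*n)) + 2) ≠ (1 : ZMod (2*n)) := by
    rw [← qn2, ← q1]
    exact key_ne (n+2) (1) (by omega) (by omega) (by omega)
  have inp2np1 : ((n : ZMod (2*n)) + 2) ≠ ((n : ZMod (2*n)) + 1) := by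
    rw [← qn2, ← qn1]
    exact key_ne (n+2) (n+1) (by omega) (by omega) (by omega)
  have inva : ∀ i : ZMod (2*n), (a i)⁻¹ = a (-i) := fun i =>
    inv_eq_of_mul_eq_one_right (by rw [a_mul_a, add_neg_cancel]; exact one_def.symm)
  have invxa : ∀ i : ZMod (2*n), (xa i)⁻¹ = xa ((n : ZMod (2*n)) + i) := fun i =>
    inv_eq_of_mul_eq_one_right (by
      rw [xa_mul_xa, show (n : ZMod (2*n)) + ((n : ZMod (2*n)) + i) - i = 0 from by
        linear_combination h2]
      exact one_def.symm)
  have va1 : w (a 1) = 4 := by simp [hw, qwt, i10]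
  have vam1 : w (a (-1)) = 4 := by simp [hw, qwt, im10]
  have vanp1 : w (a ((n : ZMod (2*n)) + 1)) = 7 := by simp [hw, qwt, inp10, inp11, inp1m1]
  have vanm1 : w (a ((n : ZMod (2*n)) - 1)) = 7 := by simp [hw, qwt, inm10, inm11, inm1m1]
  have vxa0 : w (xa 0) = 5 := by simp [hw, qwt]
  have vxan : w (xa (n : ZMod (2*n))) = 5 := by simp [hw, qwt]
  have vxa1 : w (xa 1) = 6 := by simp [hw, qwt, i10, i1n]
  have vxanp1 : w (xa ((n : ZMod (2*n)) + 1)) = 6 := by simp [hw, qwt, inp10, inp1n]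
  have vxam1 : w (xa (-1)) = 7 := by simp [hw, qwt, im10, im1n, im11, im1np1]
  have vxa2 : w (xa 2) = 7 := by simp [hw, qwt, i20, i2n, i21, i2np1]
  have vxanp2 : w (xa ((n : ZMod (2*n)) + 2)) = 7 := by
    simp [hw, qwt, inp20, inp2n, inp21, inp2np1]
  have h0 : ∀ x : QuaternionGroup n, w x = 0 ↔ x = 1 := by
    rintro (i | i) <;> simp only [hw, qwt] <;> split_ifs <;>
      simp_all [QuaternionGroup.one_def, -QuaternionGroup.a_zero]
  have hinv : ∀ x : QuaternionGroup n, w x⁻¹ = w x := by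
    rintro (i | i)
    · rw [inva]
      by_cases h : i = 0
      · subst h; simp
      · have h' : ¬ (-i = 0) := fun hh => h (by rwa [neg_eq_zero] at hh)
        simp only [hw, qwt, if_neg h, if_neg h']
        have : (-i = 1 ∨ -i = -1) ↔ (i = 1 ∨ i = -1) := by
          constructor <;> rintro (h1 | h1)
          · right; rw [← neg_neg i, h1]
          · left; rw [← neg_neg i, h1]; ring
          · right; rw [h1]
          · left; rw [h1]; ring
        simp only [this]
    · rw [invxa]
      simp only [hw, qwt]
      have c1 : ((n : ZMod (2*n)) + i = 0 ∨ (n : ZMod (2*n)) + i = (n : ZMod (2*n))) ↔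
          (i = 0 ∨ i = (n : ZMod (2*n))) := by
        constructor <;> rintro (h1 | h1)
        · right; linear_combination h1 - h2
        · left; linear_combination h1
        · right; linear_combination h1
        · left; linear_combination h1 + h2
      have c2 : ((n : ZMod (2*n)) + i = 1 ∨ (n : ZMod (2*n)) + i = (n : ZMod (2*n)) + 1) ↔
          (i = 1 ∨ i = (n : ZMod (2*n)) + 1) := by
        constructor <;> rintro (h1 | h1)
        · right; linear_combination h1 - h2
        · left; linear_combination h1
        · right; linear_combination h1
        · left; linear_combination h1 + h2
      simp only [c1, c2]
  have hval : ∀ x : QuaternionGroup n, w x = 0 ∨ w x = 4 ∨ w x = 5 ∨ w x = 6 ∨ w x = 7 := by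
    rintro (i | i) <;> simp only [hw, qwt] <;> split_ifs <;> omega
  have hmix : ∀ i j l : ℕ, (i = 4 ∨ i = 5 ∨ i = 6 ∨ i = 7) →
      (j = 4 ∨ j = 5 ∨ j = 6 ∨ j = 7) → (l = 4 ∨ l = 5 ∨ l = 6 ∨ l = 7) →
      i ≠ j → i ≠ l → j ≠ l →
      ∃ x y : QuaternionGroup n, w x = i ∧ w y = j ∧ w (x * y) = l := by
    intro i j l hi hj hl hij hil hjl
    rcases hi with rfl | rfl | rfl | rfl <;> rcases hj with rfl | rfl | rfl | rfl <;>
      rcases hl with rfl | rfl | rfl | rfl <;>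
      first
      | exact absurd rfl hij
      | exact absurd rfl hil
      | exact absurd rfl hjl
      | skip
    · exact ⟨a (-1), xa 0, vam1, vxa0, by rw [a_mul_xa, show (0 : ZMod (2*n)) - -1 = 1 from by ring]; exact vxa1⟩
    · exact ⟨a 1, xa 0, va1, vxa0, by rw [a_mul_xa, show (0 : ZMod (2*n)) - 1 = -1 from by ring]; exact vxam1⟩
    · exact ⟨a 1, xa 1, va1, vxa1, by rw [a_mul_xa, show (1 : ZMod (2*n)) - 1 = 0 from by ring]; exact vxa0⟩
    · exact ⟨a (-1), xa 1, vam1, vxa1, by rw [a_mul_xa, show (1 : ZMod (2*n)) - -1 = 2 from by ring]; exact vxa2⟩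
    · exact ⟨a (-1), xa (-1), vam1, vxam1, by rw [a_mul_xa, show (-1 : ZMod (2*n)) - -1 = 0 from by ring]; exact vxa0⟩
    · exact ⟨a 1, xa 2, va1, vxa2, by rw [a_mul_xa, show (2 : ZMod (2*n)) - 1 = 1 from by ring]; exact vxa1⟩
    · exact ⟨xa 0, a 1, vxa0, va1, by rw [xa_mul_a, show (0 : ZMod (2*n)) + 1 = 1 from by ring]; exact vxa1⟩
    · exact ⟨xa 0, a (-1), vxa0, vam1, by rw [xa_mul_a, show (0 : ZMod (2*n)) + -1 = -1 from by ring]; exact vxam1⟩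
    · exact ⟨xa (n : ZMod (2*n)), xa 1, vxan, vxa1, by rw [xa_mul_xa, show (n : ZMod (2*n)) + 1 - (n : ZMod (2*n)) = 1 from by ring]; exact va1⟩
    · exact ⟨xa 0, xa 1, vxa0, vxa1, by rw [xa_mul_xa, show (n : ZMod (2*n)) + 1 - 0 = (n : ZMod (2*n)) + 1 from by ring]; exact vanp1⟩
    · exact ⟨xa (n : ZMod (2*n)), xa (-1), vxan, vxam1, by rw [xa_mul_xa, show (n : ZMod (2*n)) + -1 - (n : ZMod (2*n)) = -1 from by ring]; exact vam1⟩
    · exact ⟨xa 0, a ((n : ZMod (2*n)) + 1), vxa0, vanp1, by rw [xa_mul_a, show (0 : ZMod (2*n)) + ((n : ZMod (2*n)) + 1) = (n : ZMod (2*n)) + 1 from by ring]; exact vxanp1⟩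
    · exact ⟨xa 1, a (-1), vxa1, vam1, by rw [xa_mul_a, show (1 : ZMod (2*n)) + -1 = 0 from by ring]; exact vxa0⟩
    · exact ⟨xa 1, a 1, vxa1, va1, by rw [xa_mul_a, show (1 : ZMod (2*n)) + 1 = 2 from by ring]; exact vxa2⟩
    · exact ⟨xa 1, xa (n : ZMod (2*n)), vxa1, vxan, by rw [xa_mul_xa, show (n : ZMod (2*n)) + (n : ZMod (2*n)) - 1 = -1 from by linear_combination h2]; exact vam1⟩
    · exact ⟨xa 1, xa 0, vxa1, vxa0, by rw [xa_mul_xa, show (n : ZMod (2*n)) + 0 - 1 = (n : ZMod (2*n)) - 1 from by ring]; exact vanm1⟩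
    · exact ⟨xa 1, xa ((n : ZMod (2*n)) + 2), vxa1, vxanp2, by rw [xa_mul_xa, show (n : ZMod (2*n)) + ((n : ZMod (2*n)) + 2) - 1 = 1 from by linear_combination h2]; exact va1⟩
    · exact ⟨xa 1, a ((n : ZMod (2*n)) - 1), vxa1, vanm1, by rw [xa_mul_a, show (1 : ZMod (2*n)) + ((n : ZMod (2*n)) - 1) = (n : ZMod (2*n)) from by ring]; exact vxan⟩
    · exact ⟨xa (-1), a 1, vxam1, va1, by rw [xa_mul_a, show (-1 : ZMod (2*n)) + 1 = 0 from by ring]; exact vxa0⟩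
    · exact ⟨xa 2, a (-1), vxa2, vam1, by rw [xa_mul_a, show (2 : ZMod (2*n)) + -1 = 1 from by ring]; exact vxa1⟩
    · exact ⟨xa (-1), xa (n : ZMod (2*n)), vxam1, vxan, by rw [xa_mul_xa, show (n : ZMod (2*n)) + (n : ZMod (2*n)) - -1 = 1 from by linear_combination h2]; exact va1⟩
    · exact ⟨a ((n : ZMod (2*n)) - 1), xa 0, vanm1, vxa0, by rw [a_mul_xa, show (0 : ZMod (2*n)) - ((n : ZMod (2*n)) - 1) = (n : ZMod (2*n)) + 1 from by linear_combination -h2]; exact vxanp1⟩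
    · exact ⟨xa ((n : ZMod (2*n)) + 2), xa 1, vxanp2, vxa1, by rw [xa_mul_xa, show (n : ZMod (2*n)) + 1 - ((n : ZMod (2*n)) + 2) = -1 from by ring]; exact vam1⟩
    · exact ⟨a ((n : ZMod (2*n)) + 1), xa 1, vanp1, vxa1, by rw [a_mul_xa, show (1 : ZMod (2*n)) - ((n : ZMod (2*n)) + 1) = (n : ZMod (2*n)) from by linear_combination -h2]; exact vxan⟩
  exact key_mul w h0 hinv hval hmix

def swt4 : Equiv.Perm (Fin 4) → ℕ := fun σ =>
  if σ = 1 then 0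
  else if σ = Equiv.swap 2 3 then 4
  else if σ = Equiv.swap 1 2 * Equiv.swap 2 3 ∨ σ = (Equiv.swap 1 2 * Equiv.swap 2 3)⁻¹ then 5
  else if σ = Equiv.swap 1 2 ∨ σ = Equiv.swap 0 1 then 6
  else 7

theorem perm_family (n : ℕ) (hn : 4 ≤ n) : HasNonPIntervalWeight (Equiv.Perm (Fin n)) := by
  set ι : Fin 4 ↪ Fin n := Fin.castLEEmb hn with hι
  set φ : Equiv.Perm (Fin 4) →* Equiv.Perm (Fin n) := Equiv.Perm.viaEmbeddingHom ι with hφ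
  have hinj : Function.Injective φ := Equiv.Perm.viaEmbeddingHom_injective ι
  set w : Equiv.Perm (Fin n) → ℕ := fun σ =>
    if σ = 1 then 0
    else if σ = φ (Equiv.swap 2 3) then 4
    else if σ = φ (Equiv.swap 1 2 * Equiv.swap 2 3) ∨
        σ = φ (Equiv.swap 1 2 * Equiv.swap 2 3)⁻¹ then 5
    else if σ = φ (Equiv.swap 1 2) ∨ σ = φ (Equiv.swap 0 1) then 6
    else 7 with hw
  have wφ : ∀ τ : Equiv.Perm (Fin 4), w (φ τ) = swt4 τ := by
    intro τ
    have h1 : φ τ = 1 ↔ τ = 1 := by rw [← map_one φ, hinj.eq_iff]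
    rw [hw]
    beta_reduce
    simp only [swt4, h1, hinj.eq_iff]
  have h0 : ∀ σ : Equiv.Perm (Fin n), w σ = 0 ↔ σ = 1 := by
    intro σ
    rw [hw]
    beta_reduce
    split_ifs with h <;> simp [h]
  have hval : ∀ σ : Equiv.Perm (Fin n),
      w σ = 0 ∨ w σ = 4 ∨ w σ = 5 ∨ w σ = 6 ∨ w σ = 7 := by
    intro σ; rw [hw]; beta_reduce; split_ifs <;> omega
  have hinv : ∀ σ : Equiv.Perm (Fin n), w σ⁻¹ = w σ := by
    intro σ
    have hgen : ∀ τ : Equiv.Perm (Fin 4), σ⁻¹ = φ τ ↔ σ = φ τ⁻¹ := by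
      intro τ
      rw [map_inv]
      exact inv_eq_iff_eq_inv
    have e1 : σ⁻¹ = 1 ↔ σ = 1 := inv_eq_one
    have e2 : σ⁻¹ = φ (Equiv.swap 2 3) ↔ σ = φ (Equiv.swap 2 3) := by
      rw [hgen, show (Equiv.swap 2 3 : Equiv.Perm (Fin 4))⁻¹ = Equiv.swap 2 3 from by decide]
    have e3 : σ⁻¹ = φ (Equiv.swap 1 2) ↔ σ = φ (Equiv.swap 1 2) := by
      rw [hgen, show (Equiv.swap 1 2 : Equiv.Perm (Fin 4))⁻¹ = Equiv.swap 1 2 from by decide]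
    have e4 : σ⁻¹ = φ (Equiv.swap 0 1) ↔ σ = φ (Equiv.swap 0 1) := by
      rw [hgen, show (Equiv.swap 0 1 : Equiv.Perm (Fin 4))⁻¹ = Equiv.swap 0 1 from by decide]
    have e5 : σ⁻¹ = φ (Equiv.swap 1 2 * Equiv.swap 2 3) ∨
        σ⁻¹ = φ (Equiv.swap 1 2 * Equiv.swap 2 3)⁻¹ ↔
        (σ = φ (Equiv.swap 1 2 * Equiv.swap 2 3) ∨
        σ = φ (Equiv.swap 1 2 * Equiv.swap 2 3)⁻¹) := by
      rw [hgen, hgen, inv_inv]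
      exact or_comm
    rw [hw]
    beta_reduce
    simp only [e1, e2, e3, e4, e5]
  have hmix : ∀ i j l : ℕ, (i = 4 ∨ i = 5 ∨ i = 6 ∨ i = 7) →
      (j = 4 ∨ j = 5 ∨ j = 6 ∨ j = 7) → (l = 4 ∨ l = 5 ∨ l = 6 ∨ l = 7) →
      i ≠ j → i ≠ l → j ≠ l →
      ∃ x y : Equiv.Perm (Fin n), w x = i ∧ w y = j ∧ w (x * y) = l := by
    intro i j l hi hj hl hij hil hjl
    rcases hi with rfl | rfl | rfl | rfl <;> rcases hj with rfl | rfl | rfl | rfl <;>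
      rcases hl with rfl | rfl | rfl | rfl <;>
      first
      | exact absurd rfl hij
      | exact absurd rfl hil
      | exact absurd rfl hjl
      | skip
    · exact ⟨φ (Equiv.swap 2 3), φ (Equiv.swap 1 2 * Equiv.swap 1 3), by rw [wφ]; decide, by rw [wφ]; decide, by rw [← map_mul, wφ]; decide⟩
    · exact ⟨φ (Equiv.swap 2 3), φ (Equiv.swap 1 3 * Equiv.swap 1 2), by rw [wφ]; decide, by rw [wφ]; decide, by rw [← map_mul, wφ]; decide⟩
    · exact ⟨φ (Equiv.swap 2 3), φ (Equiv.swap 1 2), by rw [wφ]; decide, by rw [wφ]; decide, by rw [← map_mul, wφ]; decide⟩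
    · exact ⟨φ (Equiv.swap 2 3), φ (Equiv.swap 0 1), by rw [wφ]; decide, by rw [wφ]; decide, by rw [← map_mul, wφ]; decide⟩
    · exact ⟨φ (Equiv.swap 2 3), φ (Equiv.swap 1 3), by rw [wφ]; decide, by rw [wφ]; decide, by rw [← map_mul, wφ]; decide⟩
    · exact ⟨φ (Equiv.swap 2 3), φ (Equiv.swap 0 1 * Equiv.swap 2 3), by rw [wφ]; decide, by rw [wφ]; decide, by rw [← map_mul, wφ]; decide⟩
    · exact ⟨φ (Equiv.swap 1 3 * Equiv.swap 1 2), φ (Equiv.swap 2 3), by rw [wφ]; decide, by rw [wφ]; decide, by rw [← map_mul, wφ]; decide⟩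
    · exact ⟨φ (Equiv.swap 1 2 * Equiv.swap 1 3), φ (Equiv.swap 2 3), by rw [wφ]; decide, by rw [wφ]; decide, by rw [← map_mul, wφ]; decide⟩
    · exact ⟨φ (Equiv.swap 1 2 * Equiv.swap 1 3), φ (Equiv.swap 1 2), by rw [wφ]; decide, by rw [wφ]; decide, by rw [← map_mul, wφ]; decide⟩
    · exact ⟨φ (Equiv.swap 1 2 * Equiv.swap 1 3), φ (Equiv.swap 0 1), by rw [wφ]; decide, by rw [wφ]; decide, by rw [← map_mul, wφ]; decide⟩
    · exact ⟨φ (Equiv.swap 1 3 * Equiv.swap 1 2), φ (Equiv.swap 1 3), by rw [wφ]; decide, by rw [wφ]; decide, by rw [← map_mul, wφ]; decide⟩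
    · exact ⟨φ (Equiv.swap 1 2 * Equiv.swap 1 3), φ (Equiv.swap 1 3), by rw [wφ]; decide, by rw [wφ]; decide, by rw [← map_mul, wφ]; decide⟩
    · exact ⟨φ (Equiv.swap 1 2), φ (Equiv.swap 2 3), by rw [wφ]; decide, by rw [wφ]; decide, by rw [← map_mul, wφ]; decide⟩
    · exact ⟨φ (Equiv.swap 0 1), φ (Equiv.swap 2 3), by rw [wφ]; decide, by rw [wφ]; decide, by rw [← map_mul, wφ]; decide⟩
    · exact ⟨φ (Equiv.swap 1 2), φ (Equiv.swap 1 3 * Equiv.swap 1 2), by rw [wφ]; decide, by rw [wφ]; decide, by rw [← map_mul, wφ]; decide⟩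
    · exact ⟨φ (Equiv.swap 1 2), φ (Equiv.swap 1 2 * Equiv.swap 1 3), by rw [wφ]; decide, by rw [wφ]; decide, by rw [← map_mul, wφ]; decide⟩
    · exact ⟨φ (Equiv.swap 0 1), φ (Equiv.swap 0 1 * Equiv.swap 2 3), by rw [wφ]; decide, by rw [wφ]; decide, by rw [← map_mul, wφ]; decide⟩
    · exact ⟨φ (Equiv.swap 1 2), φ (Equiv.swap 1 3), by rw [wφ]; decide, by rw [wφ]; decide, by rw [← map_mul, wφ]; decide⟩
    · exact ⟨φ (Equiv.swap 1 3), φ (Equiv.swap 2 3), by rw [wφ]; decide, by rw [wφ]; decide, by rw [← map_mul, wφ]; decide⟩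
    · exact ⟨φ (Equiv.swap 0 1 * Equiv.swap 2 3), φ (Equiv.swap 2 3), by rw [wφ]; decide, by rw [wφ]; decide, by rw [← map_mul, wφ]; decide⟩
    · exact ⟨φ (Equiv.swap 1 3), φ (Equiv.swap 1 2 * Equiv.swap 1 3), by rw [wφ]; decide, by rw [wφ]; decide, by rw [← map_mul, wφ]; decide⟩
    · exact ⟨φ (Equiv.swap 1 3), φ (Equiv.swap 1 3 * Equiv.swap 1 2), by rw [wφ]; decide, by rw [wφ]; decide, by rw [← map_mul, wφ]; decide⟩
    · exact ⟨φ (Equiv.swap 0 1 * Equiv.swap 2 3), φ (Equiv.swap 0 1), by rw [wφ]; decide, by rw [wφ]; decide, by rw [← map_mul, wφ]; decide⟩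
    · exact ⟨φ (Equiv.swap 1 3), φ (Equiv.swap 1 2), by rw [wφ]; decide, by rw [wφ]; decide, by rw [← map_mul, wφ]; decide⟩
  exact key_mul w h0 hinv hval hmix

/-- The cyclic groups `ℤ/2n` (`n ≥ 7`), the dihedral groups `𝔻_n` (`n ≥ 4`),
the dicyclic groups `ℚ_{4n}` (`n ≥ 3`) and the symmetric groups `𝕊_n`
(`n ≥ 4`) all have invariant metrics that are not `𝒫`-interval. -/
theorem families_with_non_pinterval_metrics :
    (∀ n : ℕ, 7 ≤ n → HasNonPIntervalAddWeight (ZMod (2 * n))) ∧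
    (∀ n : ℕ, 4 ≤ n → HasNonPIntervalWeight (DihedralGroup n)) ∧
    (∀ n : ℕ, 3 ≤ n → HasNonPIntervalWeight (QuaternionGroup n)) ∧
    (∀ n : ℕ, 4 ≤ n → HasNonPIntervalWeight (Equiv.Perm (Fin n))) := by
  exact ⟨zmod_family, dih_family, quat_family, perm_family⟩
end

section
/- (i) For every r ≥ 3, the elementary abelian group (ZMod 2)^r admits a weight w such that no weight 𝒫-equivalent to w is gapless. (ii) For every nontrivial finite group G and every r ≥ 2, the group G × (ZMod 2)^r admits a weight w such that no weight 𝒫-equivalent to w is gapless. -/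
section Weights

variable {G H : Type*} [Group G] [Group H]

theorem IsWeight.of_le_two_mul {w : G → ℕ} {m : ℕ} (hm : 0 < m) (h_one : w 1 = 0)
    (h_inv : ∀ x, w x⁻¹ = w x) (h_bound : ∀ x, x ≠ 1 → m ≤ w x ∧ w x ≤ 2 * m) :
    IsWeight w := by
  refine ⟨fun x => ⟨fun hx => ?_, fun hx => hx ▸ h_one⟩, h_inv, fun x y => ?_⟩
  · by_contra h
    have := h_bound x h
    omega
  by_cases hx : x = 1
  · simp [hx]
  by_cases hy : y = 1
  · simp [hy]
  by_cases hxy : x * y = 1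
  · simp [hxy, h_one]
  have := h_bound x hx
  have := h_bound y hy
  have := h_bound (x * y) hxy
  omega

theorem IsWeight.comp_mulEquiv {w : G → ℕ} (hw : IsWeight w) (e : H ≃* G) :
    IsWeight (w ∘ e) :=
  ⟨fun x => by simp [hw.1], fun x => by simp [hw.2.1],
    fun x y => by simpa using hw.2.2 (e x) (e y)⟩

theorem Gapless.comp_surjective {X Y : Type*} {w : X → ℕ} (hw : Gapless w) {f : Y → X}
    (hf : Function.Surjective f) : Gapless (w ∘ f) := by
  intro g m hm
  obtain ⟨h, rfl⟩ := hw (f g) m hm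
  obtain ⟨h', rfl⟩ := hf h
  exact ⟨h', rfl⟩

theorem PEquivW.comp {X Y : Type*} {w w' : X → ℕ} (he : PEquivW w w') (f : Y → X) :
    PEquivW (w ∘ f) (w' ∘ f) :=
  fun g h => he (f g) (f h)

theorem HasNonPIntervalWeight.of_mulEquiv (e : G ≃* H) (hG : HasNonPIntervalWeight G) :
    HasNonPIntervalWeight H := by
  obtain ⟨w, hw, h_not⟩ := hG
  refine ⟨w ∘ e.symm, hw.comp_mulEquiv e.symm, fun w' hw' he hgap => ?_⟩
  refine h_not (w' ∘ e) (hw'.comp_mulEquiv e) ?_ (hgap.comp_surjective e.surjective)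
  simpa [Function.comp_def] using he.comp e

theorem Fin.exists_le_of_injective_of_ne_zero {n : ℕ} {f : Fin (n + 1) → ℕ}
    (hf : Function.Injective f) (h_zero : ∀ i, f i ≠ 0) : ∃ i, n + 1 ≤ f i := by
  by_contra! h
  have := Finset.card_le_card_of_injOn (s := Finset.univ) (t := Finset.Icc 1 n) f
    (fun i _ => by
      have := h_zero i
      have := h i
      simp only [Finset.coe_Icc, Set.mem_Icc]
      omega) hf.injOn
  simp at this

theorem not_gapless_of_mul_realizes_levels {w w' : G → ℕ} (hw' : IsWeight w')
    (he : PEquivW w w') (x : Fin 4 → G) (hx : ∀ i, x i ≠ 1) (hx_inj : Function.Injective (w ∘ x))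
    (h_mul : ∀ a b c, a ≠ 1 → b ≠ 1 → c ≠ 1 → w a ≠ w b → w a ≠ w c → w b ≠ w c →
      ∃ y z, w y = w a ∧ w z = w b ∧ w (y * z) = w c) :
    ¬ Gapless w' := by
  intro hgap
  have ne_one {u : G} {m : ℕ} (hu : w' u = m) (hm : m ≠ 0) : u ≠ 1 :=
    fun h => hm (hu ▸ (hw'.1 u).2 h)
  have ne_of_ne {u v : G} (h : w' u ≠ w' v) : w u ≠ w v := fun h' => h ((he u v).1 h')
  obtain ⟨i, hi : 4 ≤ w' (x i)⟩ := Fin.exists_le_of_injective_of_ne_zero (f := w' ∘ x)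
    (fun i j h => hx_inj ((he _ _).2 h)) (fun i h => hx i ((hw'.1 _).1 h))
  obtain ⟨u₁, hu₁⟩ := hgap (x i) 1 (by omega)
  obtain ⟨u₂, hu₂⟩ := hgap (x i) 2 (by omega)
  obtain ⟨u₄, hu₄⟩ := hgap (x i) 4 hi
  obtain ⟨y, z, hy, hz, hyz⟩ := h_mul u₁ u₂ u₄ (ne_one hu₁ one_ne_zero) (ne_one hu₂ two_ne_zero)
    (ne_one hu₄ four_ne_zero) (ne_of_ne (by omega)) (ne_of_ne (by omega)) (ne_of_ne (by omega))
  have := hw'.2.2 y z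
  rw [(he _ _).1 hy, (he _ _).1 hz, (he _ _).1 hyz, hu₁, hu₂, hu₄] at this
  omega

end Weights

def RealizesAdd {X A : Type*} [Mul X] [Add A] (β : X → A) : Prop :=
  ∀ p q, ∃ x y, β x = p ∧ β y = q ∧ β (x * y) = p + q

theorem RealizesAdd.surjective {X A : Type*} [Mul X] [AddZeroClass A] {β : X → A}
    (hβ : RealizesAdd β) : Function.Surjective β := fun p =>
  let ⟨x, _, hx, _⟩ := hβ p 0
  ⟨x, hx⟩

namespace RealizesAdd

variable {X Y A B : Type*} [Mul X] [Mul Y] [Add A] [Add B]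

theorem prodMap {β : X → A} {γ : Y → B} (hβ : RealizesAdd β) (hγ : RealizesAdd γ) :
    RealizesAdd (Prod.map β γ) := by
  rintro ⟨p, p'⟩ ⟨q, q'⟩
  obtain ⟨x, y, hx, hy, hxy⟩ := hβ p q
  obtain ⟨x', y', hx', hy', hxy'⟩ := hγ p' q'
  exact ⟨(x, x'), (y, y'), by simp [*]⟩

theorem comp_mulHom {F : Type*} [FunLike F Y X] [MulHomClass F Y X] {β : X → A}
    (hβ : RealizesAdd β) (f : F) (hf : Function.Surjective f) : RealizesAdd (β ∘ f) := by
  intro p q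
  obtain ⟨x, y, hx, hy, hxy⟩ := hβ p q
  obtain ⟨x, rfl⟩ := hf x
  obtain ⟨y, rfl⟩ := hf y
  exact ⟨x, y, hx, hy, by simpa [map_mul] using hxy⟩

end RealizesAdd

section NontrivialBit

variable {G : Type*} [Group G]

open Classical in
noncomputable def nontrivialBit (g : G) : ZMod 2 := if g = 1 then 0 else 1

@[simp]
theorem nontrivialBit_one : nontrivialBit (1 : G) = 0 := by simp [nontrivialBit]

@[simp]
theorem nontrivialBit_inv (g : G) : nontrivialBit g⁻¹ = nontrivialBit g := by
  by_cases hg : g = 1 <;> simp [nontrivialBit, hg]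

theorem realizesAdd_nontrivialBit [Nontrivial G] : RealizesAdd (nontrivialBit (G := G)) := by
  obtain ⟨g, hg⟩ := exists_ne (1 : G)
  have hg' : g⁻¹ ≠ 1 := inv_ne_one.2 hg
  have h_cases : ∀ a : ZMod 2, a = 0 ∨ a = 1 := by decide
  intro a b
  rcases h_cases a with rfl | rfl <;> rcases h_cases b with rfl | rfl
  · exact ⟨1, 1, by simp [nontrivialBit]⟩
  · exact ⟨1, g, by simp [nontrivialBit, hg]⟩
  · exact ⟨g, 1, by simp [nontrivialBit, hg]⟩
  · exact ⟨g, g⁻¹, by simp [nontrivialBit, hg, hg']; decide⟩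

end NontrivialBit

def fanoLevel (p : ZMod 2 × ZMod 2 × ZMod 2) : ℕ :=
  if p = (1, 1, 0) then 5
  else if p = (1, 0, 1) ∨ p = (0, 1, 0) then 6
  else if p = (1, 0, 0) ∨ p = (0, 0, 1) then 7
  else 4

theorem fanoLevel_bounds (p : ZMod 2 × ZMod 2 × ZMod 2) :
    4 ≤ fanoLevel p ∧ fanoLevel p ≤ 2 * 4 := by
  revert p; decide

theorem fanoLevel_exists_add (p q r : ZMod 2 × ZMod 2 × ZMod 2) (hpq : fanoLevel p ≠ fanoLevel q)
    (hpr : fanoLevel p ≠ fanoLevel r) (hqr : fanoLevel q ≠ fanoLevel r) :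
    ∃ p' q', p' ≠ 0 ∧ q' ≠ 0 ∧ p' + q' ≠ 0 ∧ fanoLevel p' = fanoLevel p ∧
      fanoLevel q' = fanoLevel q ∧ fanoLevel (p' + q') = fanoLevel r := by
  revert p q r; decide

def fanoLevelRepr : Fin 4 → ZMod 2 × ZMod 2 × ZMod 2 :=
  ![(1, 1, 1), (1, 1, 0), (1, 0, 1), (1, 0, 0)]

theorem fanoLevelRepr_ne_zero (i : Fin 4) : fanoLevelRepr i ≠ 0 := by
  revert i; decide

theorem fanoLevel_comp_fanoLevelRepr_injective :
    Function.Injective (fanoLevel ∘ fanoLevelRepr) := by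
  decide

section FanoWeight

variable {X : Type*} [Group X]

open Classical in
noncomputable def fanoWeight (β : X → ZMod 2 × ZMod 2 × ZMod 2) (x : X) : ℕ :=
  if x = 1 then 0 else fanoLevel (β x)

variable {β : X → ZMod 2 × ZMod 2 × ZMod 2}

theorem fanoWeight_of_ne_one {x : X} (hx : x ≠ 1) : fanoWeight β x = fanoLevel (β x) := by
  simp [fanoWeight, hx]

theorem isWeight_fanoWeight (h_inv : ∀ x, β x⁻¹ = β x) : IsWeight (fanoWeight β) :=
  IsWeight.of_le_two_mul (m := 4) (by norm_num) (by simp [fanoWeight])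
    (fun x => by by_cases hx : x = 1 <;> simp [fanoWeight, hx, h_inv])
    (fun x hx => fanoWeight_of_ne_one (β := β) hx ▸ fanoLevel_bounds (β x))

theorem hasNonPIntervalWeight_of_realizesAdd (h_one : β 1 = 0) (h_inv : ∀ x, β x⁻¹ = β x)
    (hβ : RealizesAdd β) : HasNonPIntervalWeight X := by
  have ne_one {x : X} (hx : β x ≠ 0) : x ≠ 1 := by rintro rfl; exact hx h_one
  choose lift hlift using hβ.surjective
  have lift_ne_one (i : Fin 4) : lift (fanoLevelRepr i) ≠ 1 :=
    ne_one (by simp [hlift, fanoLevelRepr_ne_zero])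
  have h_repr : fanoWeight β ∘ (lift ∘ fanoLevelRepr) = fanoLevel ∘ fanoLevelRepr :=
    funext fun i => by simp [fanoWeight_of_ne_one (lift_ne_one i), hlift]
  refine ⟨fanoWeight β, isWeight_fanoWeight h_inv, fun w' hw' he => ?_⟩
  refine not_gapless_of_mul_realizes_levels hw' he (lift ∘ fanoLevelRepr) lift_ne_one
    (h_repr ▸ fanoLevel_comp_fanoLevelRepr_injective) ?_
  intro a b c ha hb hc hab hac hbc
  simp only [fanoWeight_of_ne_one, ha, hb, hc, ne_eq, not_false_eq_true] at hab hac hbc ⊢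
  obtain ⟨p, q, hp, hq, hpq, h₁, h₂, h₃⟩ := fanoLevel_exists_add _ _ _ hab hac hbc
  obtain ⟨y, z, rfl, rfl, hyz⟩ := hβ p q
  refine ⟨y, z, ?_, ?_, ?_⟩
  · rw [fanoWeight_of_ne_one (ne_one hp), h₁]
  · rw [fanoWeight_of_ne_one (ne_one hq), h₂]
  · rw [fanoWeight_of_ne_one (ne_one (hyz ▸ hpq)), hyz, h₃]

end FanoWeight

def MulEquiv.piFinSucc (n : ℕ) (M : Type*) [Mul M] : M × (Fin n → M) ≃* (Fin (n + 1) → M) :=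
  { Fin.consEquiv fun _ => M with
    map_mul' := fun x y => by
      ext i
      refine Fin.cases ?_ (fun j => ?_) i <;> simp [Fin.consEquiv] }

theorem Pi.evalMonoidHom_prod_surjective {ι M : Type*} [DecidableEq ι] [MulOneClass M]
    {i j : ι} (hij : i ≠ j) :
    Function.Surjective ((Pi.evalMonoidHom (fun _ : ι => M) i).prod (Pi.evalMonoidHom _ j)) :=
  fun ⟨a, b⟩ => ⟨Pi.mulSingle i a * Pi.mulSingle j b, by simp [hij, hij.symm]⟩

theorem hasNonPIntervalWeight_prod_of_surjective {G H K L : Type*} [Group G] [Group H]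
    [Group K] [Group L] [Nontrivial G] [Nontrivial K] [Nontrivial L] (f : H →* K × L)
    (hf : Function.Surjective f) : HasNonPIntervalWeight (G × H) :=
  hasNonPIntervalWeight_of_realizesAdd
    (β := Prod.map nontrivialBit (Prod.map nontrivialBit nontrivialBit ∘ f))
    (by simp [Prod.map]) (by simp [Prod.map])
    (realizesAdd_nontrivialBit.prodMap
      ((realizesAdd_nontrivialBit.prodMap realizesAdd_nontrivialBit).comp_mulHom f hf))

theorem hasNonPIntervalWeight_prod_pi (G : Type*) [Group G] [Nontrivial G] {r : ℕ}
    (hr : 2 ≤ r) : HasNonPIntervalWeight (G × (Fin r → Multiplicative (ZMod 2))) :=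
  hasNonPIntervalWeight_prod_of_surjective _
    (Pi.evalMonoidHom_prod_surjective (i := ⟨0, by omega⟩) (j := ⟨1, by omega⟩)
      (by simp [Fin.ext_iff]))

/-- (i) For `r ≥ 3` the elementary abelian group `(ℤ/2)^r`, and (ii) for any
nontrivial finite group `G` and `r ≥ 2` the group `G × (ℤ/2)^r`, admit weights
no `𝒫`-equivalent weight of which is gapless. -/
theorem elementary_abelian_products_non_pinterval :
    (∀ r : ℕ, 3 ≤ r →
      HasNonPIntervalWeight (Fin r → Multiplicative (ZMod 2))) ∧
    (∀ (G : Type*) [Group G] [Finite G], Nontrivial G → ∀ r : ℕ, 2 ≤ r →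
      HasNonPIntervalWeight (G × (Fin r → Multiplicative (ZMod 2)))) := by
  refine ⟨fun r hr => ?_, fun G _ _ _ r hr => hasNonPIntervalWeight_prod_pi G hr⟩
  obtain ⟨s, rfl⟩ : ∃ s, r = s + 1 := ⟨r - 1, by omega⟩
  exact (hasNonPIntervalWeight_prod_pi (Multiplicative (ZMod 2)) (by omega)).of_mulEquiv
    (MulEquiv.piFinSucc s _)
end

section
/- Let G be a finite group with |G| ≥ 16 that has a subgroup of index 2. Then there exists a weight w on G such that no weight 𝒫-equivalent to w is gapless (i.e. G has an invariant metric that is not 𝒫-interval). In particular, every abelian group of even order 2n with n ≥ 8 has such a weight. -/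
private lemma pair_of_two_aux {G : Type*} [Group G] {E : Finset G} (h : 1 < E.card) :
    ∃ x ∈ E, ∃ y ∈ E, x * y ≠ 1 := by
  obtain ⟨a, ha, b, hb, hab⟩ := Finset.one_lt_card.mp h
  by_cases hab1 : a * b = 1
  · exact ⟨a, ha, a, ha, fun haa => hab (mul_left_cancel (haa.trans hab1.symm))⟩
  · exact ⟨a, ha, b, hb, hab1⟩

private lemma build_class_aux {G : Type*} [Group G] (c c' : G) (hne : c' ≠ c) :
    ∃ C : Finset G, c ∈ C ∧ C.card ≤ 3 ∧
      (∀ x ∈ C, x = c ∨ x = c⁻¹ ∨ x = c' ∨ x = c'⁻¹) ∧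
      (∀ x ∈ C, x⁻¹ ∈ C) ∧ (∃ x ∈ C, ∃ y ∈ C, x * y ≠ 1) := by
  classical
  by_cases h : c * c = 1
  · have hcinv : c⁻¹ = c := inv_eq_of_mul_eq_one_left h
    refine ⟨{c, c', c'⁻¹}, by simp, ?_, ?_, ?_, ?_⟩
    · refine (Finset.card_insert_le _ _).trans ?_
      have := Finset.card_insert_le c' ({c'⁻¹} : Finset G)
      simp at this ⊢
      omega
    · intro x hx
      simp only [Finset.mem_insert, Finset.mem_singleton] at hx
      tauto
    · intro x hx
      simp only [Finset.mem_insert, Finset.mem_singleton] at hx ⊢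
      rcases hx with rfl | rfl | rfl
      · left; exact hcinv
      · right; right; rfl
      · right; left; rw [inv_inv]
    · refine ⟨c, by simp, c', by simp, fun hcc' => hne ?_⟩
      have h2 : c' = c⁻¹ := eq_inv_of_mul_eq_one_right hcc'
      rw [h2, hcinv]
  · refine ⟨{c, c⁻¹}, by simp, ?_, ?_, ?_, ⟨c, by simp, c, by simp, h⟩⟩
    · refine (Finset.card_insert_le _ _).trans (by simp)
    · intro x hx
      simp only [Finset.mem_insert, Finset.mem_singleton] at hx
      tauto
    · intro x hx
      simp only [Finset.mem_insert, Finset.mem_singleton] at hx ⊢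
      rcases hx with rfl | rfl
      · right; rfl
      · left; rw [inv_inv]

private lemma main_aux {G : Type*} [Group G] [Finite G] (hN : 16 ≤ Nat.card G)
    (H : Subgroup G) (hHi : H.index = 2) : HasNonPIntervalWeight G := by
  classical
  have : Fintype G := Fintype.ofFinite G
  have hcardG : Fintype.card G = Nat.card G := (Nat.card_eq_fintype_card).symm
  have hcard : Nat.card H * 2 = Nat.card G := by rw [← hHi]; exact H.card_mul_index
  -- multiplication rules for the index-two subgroup
  have hmul : ∀ {a b : G}, a ∉ H → b ∉ H → a * b ∈ H := by
    intro a b ha hb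
    rw [Subgroup.mul_mem_iff_of_index_two hHi]
    tauto
  have hinvH : ∀ {a : G}, a ∉ H → a⁻¹ ∉ H := by
    intro a ha h
    exact ha (by simpa using H.inv_mem h)
  -- the set of elements outside H
  set S : Finset G := Finset.univ.filter (fun x : G => x ∉ H) with hSdef
  have hmemS : ∀ x : G, x ∈ S ↔ x ∉ H := by
    intro x; simp [hSdef]
  have hScard : 8 ≤ S.card := by
    have h1 : (Finset.univ.filter (fun x : G => x ∈ H)).card = Nat.card H := by
      rw [Nat.card_eq_fintype_card]
      exact (Fintype.card_subtype _).symm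
    have h2 : (Finset.univ.filter (fun x : G => x ∈ H)).card
        + (Finset.univ.filter (fun x : G => ¬ x ∈ H)).card = Fintype.card G :=
      Finset.card_filter_add_card_filter_not _
    have h3 : S.card = (Finset.univ.filter (fun x : G => ¬ x ∈ H)).card := rfl
    omega
  -- choose c, c'
  obtain ⟨c, hcS⟩ : S.Nonempty := Finset.card_pos.mp (by omega)
  obtain ⟨c', hc'⟩ : (S.erase c).Nonempty := Finset.card_pos.mp (by
    rw [Finset.card_erase_of_mem hcS]; omega)
  have hc'ne : c' ≠ c := Finset.ne_of_mem_erase hc'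
  have hc'S : c' ∈ S := Finset.mem_of_mem_erase hc'
  obtain ⟨C, hcC, hCcard, hCmem, hCinv, hCpair⟩ := build_class_aux c c' hc'ne
  have hSinv : ∀ x ∈ S, x⁻¹ ∈ S := by
    intro x hx
    rw [hmemS] at hx ⊢
    exact hinvH hx
  have hCS : ∀ x ∈ C, x ∈ S := by
    intro x hx
    rcases hCmem x hx with rfl | rfl | rfl | rfl
    · exact hcS
    · exact hSinv _ hcS
    · exact hc'S
    · exact hSinv _ hc'S
  -- choose d, d' in S \ C
  set S₂ : Finset G := S \ C with hS2def
  have hS2card : 5 ≤ S₂.card := by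
    have := Finset.le_card_sdiff C S
    have h4 : (S \ C).card = S₂.card := rfl
    omega
  obtain ⟨d, hdS2⟩ : S₂.Nonempty := Finset.card_pos.mp (by omega)
  obtain ⟨d', hd'⟩ : (S₂.erase d).Nonempty := Finset.card_pos.mp (by
    rw [Finset.card_erase_of_mem hdS2]; omega)
  have hd'ne : d' ≠ d := Finset.ne_of_mem_erase hd'
  have hd'S2 : d' ∈ S₂ := Finset.mem_of_mem_erase hd'
  have hS2inv : ∀ x ∈ S₂, x⁻¹ ∈ S₂ := by
    intro x hx
    rw [hS2def, Finset.mem_sdiff] at hx ⊢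
    refine ⟨hSinv _ hx.1, fun h => hx.2 ?_⟩
    have := hCinv _ h
    rwa [inv_inv] at this
  obtain ⟨D, hdD, hDcard, hDmem, hDinv, hDpair⟩ := build_class_aux d d' hd'ne
  have hDS2 : ∀ x ∈ D, x ∈ S₂ := by
    intro x hx
    rcases hDmem x hx with rfl | rfl | rfl | rfl
    · exact hdS2
    · exact hS2inv _ hdS2
    · exact hd'S2
    · exact hS2inv _ hd'S2
  have hDS : ∀ x ∈ D, x ∈ S := fun x hx => (Finset.mem_sdiff.mp (hDS2 x hx)).1
  have hDnC : ∀ x ∈ D, x ∉ C := fun x hx => (Finset.mem_sdiff.mp (hDS2 x hx)).2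
  -- the remaining class E
  set E : Finset G := S \ (C ∪ D) with hEdef
  have hEcard : 2 ≤ E.card := by
    have h5 := Finset.le_card_sdiff (C ∪ D) S
    have h6 : (C ∪ D).card ≤ 6 := (Finset.card_union_le _ _).trans (by omega)
    have h7 : (S \ (C ∪ D)).card = E.card := rfl
    omega
  obtain ⟨e₁, he₁E, e₂, he₂E, hEpair⟩ := pair_of_two_aux (G := G) (E := E) (by omega)
  have hEmem : ∀ x ∈ E, x ∉ H ∧ x ∉ C ∧ x ∉ D := by
    intro x hx
    rw [hEdef, Finset.mem_sdiff, Finset.mem_union] at hx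
    rw [hmemS x] at hx
    tauto
  -- basic facts
  have hCnH : ∀ x ∈ C, x ∉ H := fun x hx => (hmemS x).mp (hCS x hx)
  have hDnH : ∀ x ∈ D, x ∉ H := fun x hx => (hmemS x).mp (hDS x hx)
  have hCne1 : ∀ x ∈ C, x ≠ 1 := fun x hx h => hCnH x hx (h ▸ H.one_mem)
  have hDne1 : ∀ x ∈ D, x ≠ 1 := fun x hx h => hDnH x hx (h ▸ H.one_mem)
  -- a nontrivial element of H
  have hHnt : Nontrivial H := by
    rw [← Finite.one_lt_card_iff_nontrivial]
    omega
  obtain ⟨a₀, ha₀⟩ := exists_ne (1 : H)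
  have haH : (a₀ : G) ∈ H := a₀.2
  have hane : (a₀ : G) ≠ 1 := fun h => ha₀ (Subtype.ext h)
  set a : G := (a₀ : G) with hadef
  -- the weight
  set w : G → ℕ := fun x =>
    if x = 1 then 0 else if x ∈ H then 4 else if x ∈ C then 5 else if x ∈ D then 6 else 7
    with hwdef
  have hw0 : w 1 = 0 := by simp [hwdef]
  have hwH : ∀ x, x ∈ H → x ≠ 1 → w x = 4 := by
    intro x h hn; simp [hwdef, h, hn]
  have hwC : ∀ x ∈ C, w x = 5 := by
    intro x hx
    simp [hwdef, hCne1 x hx, hCnH x hx, hx]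
  have hwD : ∀ x ∈ D, w x = 6 := by
    intro x hx
    simp [hwdef, hDne1 x hx, hDnH x hx, hDnC x hx, hx]
  have hwE : ∀ x, x ∉ H → x ∉ C → x ∉ D → w x = 7 := by
    intro x h1 h2 h3
    have : x ≠ 1 := fun h => h1 (h ▸ H.one_mem)
    simp [hwdef, this, h1, h2, h3]
  have hwge : ∀ z : G, z ≠ 1 → 4 ≤ w z := by
    intro z hz
    simp only [hwdef]
    split_ifs with h1 h2 h3 h4
    · exact absurd h1 hz
    all_goals omega
  have hwle : ∀ z : G, w z ≤ 7 := by
    intro z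
    simp only [hwdef]
    split_ifs <;> omega
  have hwzero : ∀ x : G, w x = 0 ↔ x = 1 := by
    intro x
    constructor
    · intro h
      by_contra hx
      have := hwge x hx
      omega
    · rintro rfl; exact hw0
  have hwweight : IsWeight w := by
    refine ⟨hwzero, ?_, ?_⟩
    · intro x
      by_cases hx1 : x = 1
      · subst hx1; simp [hw0]
      · have hx1' : x⁻¹ ≠ 1 := by simpa using hx1
        by_cases hxH : x ∈ H
        · rw [hwH _ hxH hx1, hwH _ (H.inv_mem hxH) hx1']
        · have hxH' : x⁻¹ ∉ H := hinvH hxH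
          by_cases hxC : x ∈ C
          · rw [hwC _ hxC, hwC _ (hCinv _ hxC)]
          · have hxC' : x⁻¹ ∉ C := fun h => hxC (by simpa using hCinv _ h)
            by_cases hxD : x ∈ D
            · rw [hwD _ hxD, hwD _ (hDinv _ hxD)]
            · have hxD' : x⁻¹ ∉ D := fun h => hxD (by simpa using hDinv _ h)
              rw [hwE _ hxH hxC hxD, hwE _ hxH' hxC' hxD']
    · intro x y
      by_cases hx1 : x = 1
      · subst hx1; simp [hw0]
      by_cases hy1 : y = 1
      · subst hy1; simp [hw0]
      have := hwge x hx1
      have := hwge y hy1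
      have := hwle (x * y)
      omega
  refine ⟨w, hwweight, ?_⟩
  intro w' hw' hPE hgap
  obtain ⟨hw'zero, hw'symm, hw'tri⟩ := hw'
  -- values of the classes
  have hwa : w a = 4 := hwH a haH hane
  have hwc : w c = 5 := hwC c hcC
  have hwd : w d = 6 := hwD d hdD
  have hwe : w e₁ = 7 := by
    obtain ⟨h1, h2, h3⟩ := hEmem e₁ he₁E
    exact hwE e₁ h1 h2 h3
  set p := w' a with hpdef
  set q := w' c with hqdef
  set r := w' d with hrdef
  set s := w' e₁ with hsdef
  have hne1 : ∀ x : G, w' x ≠ 0 → x ≠ 1 := by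
    intro x hx h
    exact hx (h ▸ (hw'zero 1).mpr rfl)
  -- transfer of classes
  have htrans : ∀ x y : G, w x = w y → w' x = w' y := fun x y h => (hPE x y).mp h
  have hmemH : ∀ x : G, x ∈ H → x ≠ 1 → w' x = p := by
    intro x h hn
    exact htrans x a (by rw [hwH x h hn, hwa])
  -- distinctness and positivity
  have hpq : p ≠ q := fun h => by
    have := (hPE a c).mpr h
    rw [hwa, hwc] at this; omega
  have hpr : p ≠ r := fun h => by
    have := (hPE a d).mpr h
    rw [hwa, hwd] at this; omega
  have hps : p ≠ s := fun h => by
    have := (hPE a e₁).mpr h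
    rw [hwa, hwe] at this; omega
  have hqr : q ≠ r := fun h => by
    have := (hPE c d).mpr h
    rw [hwc, hwd] at this; omega
  have hqs : q ≠ s := fun h => by
    have := (hPE c e₁).mpr h
    rw [hwc, hwe] at this; omega
  have hrs : r ≠ s := fun h => by
    have := (hPE d e₁).mpr h
    rw [hwd, hwe] at this; omega
  have hp0 : p ≠ 0 := fun h => hane ((hw'zero a).mp h)
  have hq0 : q ≠ 0 := fun h => hCne1 c hcC ((hw'zero c).mp h)
  have hr0 : r ≠ 0 := fun h => hDne1 d hdD ((hw'zero d).mp h)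
  have hs0 : s ≠ 0 := fun h => (hEmem e₁ he₁E).1 (((hw'zero e₁).mp h) ▸ H.one_mem)
  -- there is an element of w'-value at least 4
  have hbig : ∃ g : G, 4 ≤ w' g := by
    have h4 : 4 ≤ p ∨ 4 ≤ q ∨ 4 ≤ r ∨ 4 ≤ s := by omega
    rcases h4 with h | h | h | h
    exacts [⟨a, h⟩, ⟨c, h⟩, ⟨d, h⟩, ⟨e₁, h⟩]
  obtain ⟨g₀, hg₀⟩ := hbig
  obtain ⟨t₁, ht₁⟩ := hgap g₀ 1 (by omega)
  obtain ⟨t₂, ht₂⟩ := hgap g₀ 2 (by omega)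
  obtain ⟨t₄, ht₄⟩ := hgap g₀ 4 (by omega)
  -- membership facts about the tᵢ
  have houtside : ∀ x : G, ∀ m : ℕ, w' x = m → m ≠ 0 → m ≠ p → x ∉ H := by
    intro x m hx hm hmp hH'
    have hx1 : x ≠ 1 := hne1 x (by omega)
    have := hmemH x hH' hx1
    omega
  have hp123 : p = 1 ∨ p = 2 ∨ 3 ≤ p := by omega
  rcases hp123 with hp | hp | hp
  · -- p = 1 : use t₂ and t₄
    have ht₂H : t₂ ∉ H := houtside t₂ 2 ht₂ (by omega) (by omega)
    have ht₄H : t₄ ∉ H := houtside t₄ 4 ht₄ (by omega) (by omega)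
    have hne24 : t₄ ≠ t₂ := fun h => by rw [h, ht₂] at ht₄; omega
    have hgH : t₄ * t₂⁻¹ ∈ H := hmul ht₄H (hinvH ht₂H)
    have hg1 : t₄ * t₂⁻¹ ≠ 1 := fun h => hne24 (by
      have := congrArg (· * t₂) h
      simpa using this)
    have hgval : w' (t₄ * t₂⁻¹) = p := hmemH _ hgH hg1
    have := hw'tri (t₄ * t₂⁻¹) t₂
    rw [inv_mul_cancel_right] at this
    rw [hgval, ht₂, ht₄, hp] at this
    omega
  · -- p = 2 : use t₁ and t₄
    have ht₁H : t₁ ∉ H := houtside t₁ 1 ht₁ (by omega) (by omega)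
    have ht₄H : t₄ ∉ H := houtside t₄ 4 ht₄ (by omega) (by omega)
    have hne14 : t₁ ≠ t₄ := fun h => by rw [h, ht₄] at ht₁; omega
    have hgH : t₁⁻¹ * t₄ ∈ H := hmul (hinvH ht₁H) ht₄H
    have hg1 : t₁⁻¹ * t₄ ≠ 1 := fun h => hne14 (by
      have := congrArg (t₁ * ·) h
      simpa using this.symm)
    have hgval : w' (t₁⁻¹ * t₄) = p := hmemH _ hgH hg1
    have := hw'tri t₁ (t₁⁻¹ * t₄)
    rw [mul_inv_cancel_left] at this
    rw [hgval, ht₁, ht₄, hp] at this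
    omega
  · -- 3 ≤ p : use t₁ and the pair in its class
    have ht₁H : t₁ ∉ H := houtside t₁ 1 ht₁ (by omega) (by omega)
    have ht₁1 : t₁ ≠ 1 := hne1 t₁ (by omega)
    -- find a pair x, x' with w x = w t₁, w x' = w t₁, x * x' ≠ 1, both outside H
    have hpair : ∃ x x' : G, w x = w t₁ ∧ w x' = w t₁ ∧ x * x' ≠ 1 ∧ x ∉ H ∧ x' ∉ H := by
      by_cases ht₁C : t₁ ∈ C
      · obtain ⟨x, hx, x', hx', hxx'⟩ := hCpair
        exact ⟨x, x', by rw [hwC x hx, hwC t₁ ht₁C], by rw [hwC x' hx', hwC t₁ ht₁C],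
          hxx', hCnH x hx, hCnH x' hx'⟩
      · by_cases ht₁D : t₁ ∈ D
        · obtain ⟨x, hx, x', hx', hxx'⟩ := hDpair
          exact ⟨x, x', by rw [hwD x hx, hwD t₁ ht₁D], by rw [hwD x' hx', hwD t₁ ht₁D],
            hxx', hDnH x hx, hDnH x' hx'⟩
        · refine ⟨e₁, e₂, ?_, ?_, hEpair, (hEmem e₁ he₁E).1, (hEmem e₂ he₂E).1⟩
          · rw [hwe, hwE t₁ ht₁H ht₁C ht₁D]
          · obtain ⟨h1, h2, h3⟩ := hEmem e₂ he₂E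
            rw [hwE e₂ h1 h2 h3, hwE t₁ ht₁H ht₁C ht₁D]
    obtain ⟨x, x', hx, hx', hxx', hxH, hx'H⟩ := hpair
    have hw'x : w' x = 1 := by rw [htrans x t₁ hx, ht₁]
    have hw'x' : w' x' = 1 := by rw [htrans x' t₁ hx', ht₁]
    have hprod : x * x' ∈ H := hmul hxH hx'H
    have hprodval : w' (x * x') = p := hmemH _ hprod hxx'
    have := hw'tri x x'
    rw [hprodval, hw'x, hw'x'] at this
    omega

private lemma abelian_index_two {A : Type*} [CommGroup A] [Finite A]
    (h2 : 2 ∣ Nat.card A) : ∃ H : Subgroup A, H.index = 2 := by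
  classical
  have hfact : Fact (Nat.Prime 2) := ⟨Nat.prime_two⟩
  obtain ⟨g, hg⟩ := exists_prime_orderOf_dvd_card' (G := A) 2 h2
  set f : A →* A := powMonoidHom 2 with hfdef
  set R : Subgroup A := f.range with hRdef
  have hRtop : R ≠ ⊤ := by
    intro h
    have hsurj : Function.Surjective f := MonoidHom.range_eq_top.mp h
    have hinj : Function.Injective f := Finite.injective_iff_surjective.mpr hsurj
    have hg2 : f g = 1 := by
      have := pow_orderOf_eq_one g
      rw [hg] at this
      simpa [hfdef, powMonoidHom_apply] using this
    have : g = 1 := hinj (by rw [hg2, map_one])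
    rw [this, orderOf_one] at hg
    omega
  -- the quotient is a nontrivial 2-group
  have hpQ : IsPGroup 2 (A ⧸ R) := by
    intro x
    refine ⟨1, ?_⟩
    induction x using QuotientGroup.induction_on with
    | H z =>
      rw [pow_one, ← QuotientGroup.mk_pow, QuotientGroup.eq_one_iff]
      exact ⟨z, rfl⟩
  obtain ⟨k, hk⟩ := (IsPGroup.iff_card (p := 2) (G := A ⧸ R)).mp hpQ
  have hk1 : 1 ≤ k := by
    rcases Nat.eq_zero_or_pos k with hk0 | hk0
    · exfalso
      apply hRtop
      have : R.index = 1 := by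
        rw [Subgroup.index_eq_card, hk, hk0, pow_zero]
      exact Subgroup.index_eq_one.mp this
    · exact hk0
  obtain ⟨K, hK⟩ := Sylow.exists_subgroup_card_pow_prime (G := A ⧸ R) 2
    (n := k - 1) (by rw [hk]; exact pow_dvd_pow 2 (by omega))
  have hKindex : K.index = 2 := by
    have := K.card_mul_index
    rw [hK, hk] at this
    have h2k : (2 : ℕ) ^ k = 2 ^ (k - 1) * 2 := by
      rw [← pow_succ]
      congr 1
      omega
    rw [h2k] at this
    have hpos : 0 < (2 : ℕ) ^ (k - 1) := pow_pos (by omega) _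
    exact Nat.eq_of_mul_eq_mul_left hpos this
  refine ⟨K.comap (QuotientGroup.mk' R), ?_⟩
  rw [Subgroup.index_comap_of_surjective _ (QuotientGroup.mk'_surjective R)]
  exact hKindex

/-- A finite group of order at least 16 with a subgroup of index 2 has an
invariant metric that is not `𝒫`-interval; in particular so does every abelian
group of even order `2n` with `n ≥ 8`. -/
theorem non_pinterval_of_big_with_index_two :
    (∀ (G : Type*) [Group G] [Finite G], 16 ≤ Nat.card G →
      (∃ H : Subgroup G, H.index = 2) → HasNonPIntervalWeight G) ∧
    (∀ (A : Type*) [CommGroup A] [Finite A], ∀ n : ℕ, 8 ≤ n →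
      Nat.card A = 2 * n → HasNonPIntervalWeight A) := by
  constructor
  · rintro G _ _ h16 ⟨H, hH⟩
    exact main_aux h16 H hH
  · intro A _ _ n hn hcard
    obtain ⟨H, hH⟩ := abelian_index_two (A := A) (by rw [hcard]; exact Dvd.intro n rfl)
    exact main_aux (by rw [hcard]; omega) H hH
end

section
/- If a group G has a Lee weight, then for every k ≥ 1 the direct product G × (ZMod 2)^k has a Lee weight. -/
/-- A group has a Lee weight (equivalently, a Lee metric) if it has a gapless
weight whose level sets are exactly the sets `{a, a⁻¹}`. -/
def HasLeeWeight (G : Type*) [Group G] : Prop :=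
  ∃ w : G → ℕ, IsWeight w ∧ Gapless w ∧ ∀ g h : G, w g = w h ↔ (g = h ∨ g = h⁻¹)

private lemma divmod_unique {P a b r s : ℕ} (hr : r < P) (hs : s < P)
    (h : P * a + r = P * b + s) : a = b ∧ r = s := by
  have hP : 0 < P := Nat.lt_of_le_of_lt (Nat.zero_le r) hr
  have h1 : (P * a + r) / P = a := by
    rw [Nat.mul_add_div hP, Nat.div_eq_of_lt hr]; omega
  have h2 : (P * b + s) / P = b := by
    rw [Nat.mul_add_div hP, Nat.div_eq_of_lt hs]; omega
  have hab : a = b := by rw [← h1, ← h2, h]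
  refine ⟨hab, ?_⟩
  subst hab
  omega

/-- If `G` has a Lee weight then so does `G × (ℤ/2)^k` for every `k ≥ 1`. -/
theorem hasLeeWeight_prod_two_elementary {G : Type*} [Group G]
    (hG : HasLeeWeight G) (k : ℕ) (hk : 1 ≤ k) :
    HasLeeWeight (G × (Fin k → Multiplicative (ZMod 2))) := by
  obtain ⟨w, ⟨hw0, hwinv, hwadd⟩, hwgap, hwlee⟩ := hG
  set V := Fin k → Multiplicative (ZMod 2) with hV
  -- the equivalence encoding a vector as a number < 2^k
  let e : V ≃ Fin (2^k) :=
    (Equiv.piCongrRight fun _ =>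
      (Multiplicative.toAdd : Multiplicative (ZMod 2) ≃ Fin 2)).trans finFunctionFinEquiv
  let u : V → ℕ := fun v => (e v : ℕ)
  have hu_lt : ∀ v, u v < 2^k := fun v => (e v).isLt
  have hu_inj : Function.Injective u := fun a b h => e.injective (Fin.val_injective h)
  have hu_sum : ∀ v : V, u v = ∑ i : Fin k, (Multiplicative.toAdd (v i)).val * 2 ^ (i : ℕ) := by
    intro v
    simp only [u, e, Equiv.trans_apply, finFunctionFinEquiv_apply]
    rfl
  have hu_one : u (1 : V) = 0 := by
    rw [hu_sum]
    apply Finset.sum_eq_zero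
    intro i _
    rw [Pi.one_apply]
    simp
  have hu_add : ∀ a b : V, u (a * b) ≤ u a + u b := by
    intro a b
    rw [hu_sum, hu_sum, hu_sum, ← Finset.sum_add_distrib]
    apply Finset.sum_le_sum
    intro i _
    rw [← add_mul]
    apply Nat.mul_le_mul_right
    have : Multiplicative.toAdd ((a * b) i)
        = Multiplicative.toAdd (a i) + Multiplicative.toAdd (b i) := rfl
    rw [this, ZMod.val_add]
    exact Nat.mod_le _ _
  have hu_surj : ∀ r : ℕ, r < 2^k → ∃ v : V, u v = r := by
    intro r hr
    exact ⟨e.symm ⟨r, hr⟩, by simp [u]⟩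
  -- every element of V is self-inverse
  have hVinv : ∀ v : V, v⁻¹ = v := by
    intro v
    funext i
    have : Multiplicative.toAdd (v⁻¹ i) = -(Multiplicative.toAdd (v i)) := rfl
    apply Multiplicative.toAdd.injective
    rw [this, CharTwo.neg_eq]
  -- the weight on the product
  refine ⟨fun p => 2^k * w p.1 + u p.2, ⟨?_, ?_, ?_⟩, ?_, ?_⟩
  · rintro ⟨g, v⟩
    constructor
    · intro h
      replace h : 2^k * w g + u v = 0 := h
      obtain ⟨h1, h2⟩ := Nat.add_eq_zero.mp h
      have h2k : 0 < 2^k := Nat.two_pow_pos k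
      have hwg : w g = 0 := by
        rcases Nat.mul_eq_zero.mp h1 with h' | h'
        · omega
        · exact h'
      have hg : g = 1 := (hw0 g).mp hwg
      have hv : v = 1 := hu_inj (by rw [h2, hu_one])
      simp [Prod.ext_iff, hg, hv]
    · intro h
      have hg : g = 1 := congrArg Prod.fst h
      have hv : v = 1 := congrArg Prod.snd h
      show 2^k * w g + u v = 0
      rw [hg, hv, (hw0 1).mpr rfl, hu_one]
      simp
  · rintro ⟨g, v⟩
    show 2^k * w g⁻¹ + u v⁻¹ = 2^k * w g + u v
    rw [hwinv, hVinv]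
  · rintro ⟨g₁, v₁⟩ ⟨g₂, v₂⟩
    show 2^k * w (g₁ * g₂) + u (v₁ * v₂) ≤ _
    calc 2^k * w (g₁ * g₂) + u (v₁ * v₂)
        ≤ 2^k * (w g₁ + w g₂) + (u v₁ + u v₂) :=
          Nat.add_le_add (Nat.mul_le_mul_left _ (hwadd g₁ g₂)) (hu_add v₁ v₂)
      _ = (2^k * w g₁ + u v₁) + (2^k * w g₂ + u v₂) := by ring
  · rintro ⟨g, v⟩ m hm
    have h2k : 0 < 2^k := Nat.two_pow_pos k
    have hlt : m < (w g + 1) * 2^k := by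
      replace hm : m ≤ 2^k * w g + u v := hm
      have h1 := hu_lt v
      calc m ≤ 2^k * w g + u v := hm
        _ < 2^k * w g + 2^k := by omega
        _ = (w g + 1) * 2^k := by ring
    have hq : m / 2^k ≤ w g :=
      Nat.lt_succ_iff.mp ((Nat.div_lt_iff_lt_mul h2k).mpr hlt)
    obtain ⟨h, hh⟩ := hwgap g (m / 2^k) hq
    obtain ⟨v', hv'⟩ := hu_surj (m % 2^k) (Nat.mod_lt _ h2k)
    refine ⟨(h, v'), ?_⟩
    show 2^k * w h + u v' = m
    rw [hh, hv']
    exact Nat.div_add_mod m (2^k)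
  · rintro ⟨g₁, v₁⟩ ⟨g₂, v₂⟩
    constructor
    · intro h
      obtain ⟨hw', hu'⟩ := divmod_unique (hu_lt v₁) (hu_lt v₂) h
      have hv : v₁ = v₂ := hu_inj hu'
      rcases (hwlee g₁ g₂).mp hw' with h1 | h1
      · exact Or.inl (by simp [Prod.ext_iff, h1, hv])
      · refine Or.inr ?_
        rw [Prod.ext_iff]
        exact ⟨h1, by rw [hv]; exact (hVinv v₂).symm⟩
    · rintro (h | h)
      · rw [h]
      · rw [h]
        show 2^k * w g₂⁻¹ + u v₂⁻¹ = _
        rw [hwinv, hVinv]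
end

section
/- Let G be a finite group of odd order. Then G has a Lee weight if and only if G is cyclic. -/
lemma odd_sq_eq_one {G : Type*} [Group G] [Finite G] (hodd : Odd (Nat.card G))
    {x : G} (h : x ^ 2 = 1) : x = 1 := by
  have h1 : orderOf x ∣ 2 := orderOf_dvd_of_pow_eq_one h
  have h2 : Odd (orderOf x) := hodd.of_dvd_nat (orderOf_dvd_natCard x)
  have h3 : orderOf x ≤ 2 := Nat.le_of_dvd two_pos h1
  obtain ⟨t, ht⟩ := h2
  have : orderOf x = 1 := by omega
  exact orderOf_eq_one_iff.mp this

lemma odd_mem_zpowers_sq {G : Type*} [Group G] [Finite G] (hodd : Odd (Nat.card G))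
    (b : G) : b ∈ Subgroup.zpowers (b ^ 2) := by
  have h2 : Odd (orderOf b) := hodd.of_dvd_nat (orderOf_dvd_natCard b)
  obtain ⟨t, ht⟩ := h2
  refine Subgroup.mem_zpowers_iff.mpr ⟨((t + 1 : ℕ) : ℤ), ?_⟩
  rw [zpow_natCast, ← pow_mul]
  have : 2 * (t + 1) = orderOf b + 1 := by omega
  rw [this, pow_succ, pow_orderOf_eq_one, one_mul]

lemma isCyclic_of_hasLeeWeight {G : Type*} [Group G] [Finite G]
    (hodd : Odd (Nat.card G)) (h : HasLeeWeight G) : IsCyclic G := by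
  obtain ⟨w, ⟨hw0, hwinv, hwtri⟩, hgap, hlev⟩ := h
  set n := Nat.card G with hn
  have hw1 : w 1 = 0 := (hw0 1).mpr rfl
  rcases eq_or_ne (Nat.card G) 1 with h1 | h1
  · have : Subsingleton G := (Nat.card_eq_one_iff_unique.mp h1).1
    infer_instance
  have hn1 : 1 < n := by have := Nat.card_pos (α := G); omega
  have : Nontrivial G := Finite.one_lt_card_iff_nontrivial.mp hn1
  obtain ⟨x0, hx0⟩ := exists_ne (1 : G)
  obtain ⟨a, ha⟩ := hgap x0 1 (Nat.one_le_iff_ne_zero.mpr (fun hc => hx0 ((hw0 x0).mp hc)))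
  have hane : a ≠ 1 := fun hc => by rw [hc, hw1] at ha; exact one_ne_zero ha.symm
  have hamem : ∀ j : ℕ, a ^ j ∈ Subgroup.zpowers a := fun j =>
    Subgroup.pow_mem _ (Subgroup.mem_zpowers a) j
  have key : ∀ m : ℕ, 2 * m + 1 ≤ n → ∀ i ≤ m, w (a ^ i) = i := by
    intro m
    induction m with
    | zero => intro _ i hi; interval_cases i; simpa using hw1
    | succ m IH =>
      intro hmn i hi
      have IH' : ∀ i ≤ m, w (a ^ i) = i := IH (by omega)
      rcases Nat.lt_or_ge i (m + 1) with h' | h'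
      · exact IH' i (by omega)
      have hi' : i = m + 1 := by omega
      subst hi'
      rcases Nat.eq_zero_or_pos m with rfl | hm
      · simpa using ha
      set e := orderOf a with he
      have heodd : Odd e := hodd.of_dvd_nat (orderOf_dvd_natCard a)
      have hedvd : e ∣ n := orderOf_dvd_natCard a
      have hepos : 0 < e := orderOf_pos a
      have hpowne : ∀ j, 1 ≤ j → j ≤ m → a ^ j ≠ 1 := by
        intro j hj1 hj2 hc
        have hj := IH' j hj2
        rw [hc, hw1] at hj; omega
      have hem : m < e := by
        by_contra hc
        push_neg at hc
        exact hpowne e hepos hc (pow_orderOf_eq_one a)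
      have he2m : 2 * m + 1 ≤ e := by
        by_contra hc
        push_neg at hc
        have h2 : a ^ (e - m) = (a ^ m)⁻¹ := by
          refine eq_inv_of_mul_eq_one_left ?_
          rw [← pow_add]
          have : e - m + m = e := by omega
          rw [this]; exact pow_orderOf_eq_one a
        have h3 : w (a ^ (e - m)) = e - m := IH' _ (by omega)
        rw [h2, hwinv, IH' m le_rfl] at h3
        obtain ⟨t, ht⟩ := heodd; omega
      have hub : w (a ^ (m + 1)) ≤ m + 1 := by
        calc w (a ^ (m + 1)) = w (a ^ m * a) := by rw [pow_succ]
          _ ≤ w (a ^ m) + w a := hwtri _ _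
          _ = m + 1 := by rw [IH' m le_rfl, ha]
      rcases Nat.lt_or_ge (2 * m + 1) e with hbig | hsmall
      · -- e ≥ 2m+2, direct argument
        by_contra hc
        have hj : w (a ^ (m + 1)) ≤ m := by omega
        have hj' : w (a ^ (m + 1)) = w (a ^ w (a ^ (m + 1))) := (IH' _ hj).symm
        set j := w (a ^ (m + 1)) with hjd
        rcases (hlev _ _).mp hj' with h' | h'
        · have hcc : a ^ (m + 1 - j) * a ^ j = a ^ j := by
            rw [← pow_add]
            have hee : m + 1 - j + j = m + 1 := by omega
            rw [hee]; exact h'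
          have h5 : a ^ (m + 1 - j) = 1 := by
            have h6 : a ^ (m + 1 - j) * a ^ j = 1 * a ^ j := by rw [one_mul]; exact hcc
            exact mul_right_cancel h6
          have := Nat.le_of_dvd (by omega) (orderOf_dvd_of_pow_eq_one h5)
          omega
        · have h5 : a ^ (m + 1 + j) = 1 := by
            rw [pow_add, h', inv_mul_cancel]
          have := Nat.le_of_dvd (by omega) (orderOf_dvd_of_pow_eq_one h5)
          omega
      · -- e = 2m+1 : impossible
        exfalso
        have hee : e = 2 * m + 1 := by omega
        -- every element of zpowers a has weight ≤ m
        have hzw : ∀ y ∈ Subgroup.zpowers a, w y ≤ m := by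
          intro y hy
          have hfin : IsOfFinOrder a := isOfFinOrder_of_finite a
          obtain ⟨k, hk⟩ := hfin.mem_powers_iff_mem_zpowers.mpr hy
          have hk' : a ^ (k % e) = y := by rw [pow_mod_orderOf]; exact hk
          have hlt : k % e < e := Nat.mod_lt _ hepos
          rcases le_or_gt (k % e) m with hle | hgt
          · rw [← hk', IH' _ hle]; exact hle
          · have h2 : a ^ (e - k % e) = y⁻¹ := by
              rw [← hk']
              refine eq_inv_of_mul_eq_one_left ?_
              rw [← pow_add]
              have : e - k % e + k % e = e := by omega
              rw [this]; exact pow_orderOf_eq_one a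
            have h3 : w (a ^ (e - k % e)) = e - k % e := IH' _ (by omega)
            rw [h2, hwinv] at h3
            omega
        -- zpowers a ≠ ⊤
        obtain ⟨x, hx⟩ : ∃ x : G, x ∉ Subgroup.zpowers a := by
          by_contra hc
          push_neg at hc
          have : Subgroup.zpowers a = ⊤ := (Subgroup.eq_top_iff' _).mpr hc
          have hcard : Nat.card (Subgroup.zpowers a) = n := by
            rw [this, Subgroup.card_top]
          rw [Nat.card_zpowers] at hcard
          omega
        have hxw : m + 1 ≤ w x := by
          by_contra hc
          push_neg at hc
          have hj : w x ≤ m := by omega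
          have : w x = w (a ^ w x) := (IH' _ hj).symm
          rcases (hlev _ _).mp this with h' | h'
          · exact hx (h' ▸ hamem _)
          · exact hx (h' ▸ Subgroup.inv_mem _ (hamem _))
        obtain ⟨b, hb⟩ := hgap x (m + 1) hxw
        have hbz : b ∉ Subgroup.zpowers a := fun hc => by
          have := hzw b hc; omega
        have hbne : b ≠ 1 := fun hc => by rw [hc, hw1] at hb; omega
        -- bounds on w (b * a⁻¹) and w (b * a)
        have hp1 : m ≤ w (b * a⁻¹) := by
          have := hwtri (b * a⁻¹) a
          rw [inv_mul_cancel_right, hb, ha] at this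
          omega
        have hp2 : w (b * a⁻¹) ≤ m + 2 := by
          have := hwtri b a⁻¹
          rw [hwinv, hb, ha] at this
          omega
        have hq1 : m ≤ w (b * a) := by
          have := hwtri (b * a) a⁻¹
          rw [mul_inv_cancel_right, hb, hwinv, ha] at this
          omega
        have hq2 : w (b * a) ≤ m + 2 := by
          have := hwtri b a
          rw [hb, ha] at this
          omega
        -- case w (b * a⁻¹) = m
        have hpm : w (b * a⁻¹) ≠ m := by
          intro hp
          have : w (b * a⁻¹) = w (a ^ m) := by rw [hp, IH' m le_rfl]
          rcases (hlev _ _).mp this with h' | h'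
          · have : b = a ^ m * a := by rw [← h', inv_mul_cancel_right]
            exact hbz (this ▸ Subgroup.mul_mem _ (hamem m) (Subgroup.mem_zpowers a))
          · have : b = (a ^ m)⁻¹ * a := by rw [← h', inv_mul_cancel_right]
            exact hbz (this ▸ Subgroup.mul_mem _ (Subgroup.inv_mem _ (hamem m))
              (Subgroup.mem_zpowers a))
        have hqm : w (b * a) ≠ m := by
          intro hq
          have : w (b * a) = w (a ^ m) := by rw [hq, IH' m le_rfl]
          rcases (hlev _ _).mp this with h' | h'
          · have : b = a ^ m * a⁻¹ := by rw [← h', mul_inv_cancel_right]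
            exact hbz (this ▸ Subgroup.mul_mem _ (hamem m)
              (Subgroup.inv_mem _ (Subgroup.mem_zpowers a)))
          · have : b = (a ^ m)⁻¹ * a⁻¹ := by rw [← h', mul_inv_cancel_right]
            exact hbz (this ▸ Subgroup.mul_mem _ (Subgroup.inv_mem _ (hamem m))
              (Subgroup.inv_mem _ (Subgroup.mem_zpowers a)))
        have hpm1 : w (b * a⁻¹) ≠ m + 1 := by
          intro hp
          have : w (b * a⁻¹) = w b := by rw [hp, hb]
          rcases (hlev _ _).mp this with h' | h'
          · have : a = 1 := by
              have := mul_left_cancel (a := b) (b := a⁻¹) (c := 1) (by rw [mul_one, h'])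
              rwa [inv_eq_one] at this
            exact hane this
          · -- b * a⁻¹ = b⁻¹  ⇒  b ^ 2 = a
            have hsq : b ^ 2 = a := by
              have h2 : b ^ 2 * a⁻¹ = 1 := by
                rw [pow_two, mul_assoc, h', mul_inv_cancel]
              exact mul_inv_eq_one.mp h2
            exact hbz (hsq ▸ odd_mem_zpowers_sq hodd b)
        have hqm1 : w (b * a) ≠ m + 1 := by
          intro hq
          have : w (b * a) = w b := by rw [hq, hb]
          rcases (hlev _ _).mp this with h' | h'
          · have : a = 1 := mul_left_cancel (a := b) (by rw [mul_one, h'])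
            exact hane this
          · -- b * a = b⁻¹ ⇒ b ^ 2 = a⁻¹
            have hsq : b ^ 2 = a⁻¹ := by
              have h2 : b ^ 2 * a = 1 := by
                rw [pow_two, mul_assoc, h', mul_inv_cancel]
              exact eq_inv_of_mul_eq_one_left h2
            have : b ∈ Subgroup.zpowers a⁻¹ := hsq ▸ odd_mem_zpowers_sq hodd b
            exact hbz (Subgroup.zpowers_le.mpr
              (Subgroup.inv_mem _ (Subgroup.mem_zpowers a)) this)
        -- remaining: both = m + 2
        have hp : w (b * a⁻¹) = m + 2 := by omega
        have hq : w (b * a) = m + 2 := by omega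
        have : w (b * a⁻¹) = w (b * a) := by rw [hp, hq]
        rcases (hlev _ _).mp this with h' | h'
        · have hia : a⁻¹ = a := mul_left_cancel h'
          have : a ^ 2 = 1 := by
            rw [pow_two]; nth_rewrite 2 [← hia]; exact mul_inv_cancel a
          exact hane (odd_sq_eq_one hodd this)
        · -- b * a⁻¹ = (b * a)⁻¹ = a⁻¹ * b⁻¹ ⇒ a * b * a⁻¹ = b⁻¹
          have hconj : a * b * a⁻¹ = b⁻¹ := by
            rw [mul_inv_rev] at h'
            calc a * b * a⁻¹ = a * (b * a⁻¹) := by rw [mul_assoc]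
              _ = a * (a⁻¹ * b⁻¹) := by rw [h']
              _ = b⁻¹ := by rw [← mul_assoc, mul_inv_cancel, one_mul]
          have hcomm2 : Commute (a ^ 2) b := by
            have hb2 : a ^ 2 * b * (a ^ 2)⁻¹ = b := by
              have h1 : a * b⁻¹ * a⁻¹ = b := by
                have := congrArg (·⁻¹) hconj
                simpa [mul_inv_rev, mul_assoc] using this
              calc a ^ 2 * b * (a ^ 2)⁻¹ = a * (a * b * a⁻¹) * a⁻¹ := by
                    rw [pow_two, mul_inv_rev]; group
                _ = a * b⁻¹ * a⁻¹ := by rw [hconj]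
                _ = b := h1
            have := congrArg (· * a ^ 2) hb2
            exact (by simpa [mul_assoc] using this : a ^ 2 * b = b * a ^ 2)
          have hcomm : Commute a b := by
            have h4 : ((a ^ 2) ^ (m + 1) : G) = a := by
              rw [← pow_mul]
              have : 2 * (m + 1) = e + 1 := by omega
              rw [this, pow_succ, pow_orderOf_eq_one, one_mul]
            have := hcomm2.pow_left (m + 1)
            rwa [h4] at this
          have hib : b⁻¹ = b := by
            rw [← hconj, hcomm.eq, mul_assoc, mul_inv_cancel, mul_one]
          have : b ^ 2 = 1 := by
            rw [pow_two]; nth_rewrite 2 [← hib]; exact mul_inv_cancel b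
          exact hbne (odd_sq_eq_one hodd this)
  -- conclude
  have hodd' := hodd
  obtain ⟨t, ht⟩ := hodd'
  have hkey := key t (by omega)
  -- order of a ≥ n
  have heodd : Odd (orderOf a) := hodd.of_dvd_nat (orderOf_dvd_natCard a)
  have hedvd : orderOf a ∣ n := orderOf_dvd_natCard a
  have hepos : 0 < orderOf a := orderOf_pos a
  have hem : t < orderOf a := by
    by_contra hc
    push_neg at hc
    have := hkey (orderOf a) hc
    rw [pow_orderOf_eq_one, hw1] at this
    omega
  have he2m : 2 * t + 1 ≤ orderOf a := by
    by_contra hc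
    push_neg at hc
    have h2 : a ^ (orderOf a - t) = (a ^ t)⁻¹ := by
      refine eq_inv_of_mul_eq_one_left ?_
      rw [← pow_add]
      have : orderOf a - t + t = orderOf a := by omega
      rw [this]; exact pow_orderOf_eq_one a
    have h3 : w (a ^ (orderOf a - t)) = orderOf a - t := hkey _ (by omega)
    rw [h2, hwinv, hkey t le_rfl] at h3
    obtain ⟨s, hs⟩ := heodd; omega
  have : orderOf a = n := Nat.le_antisymm (Nat.le_of_dvd (by omega) hedvd) (by omega)
  exact isCyclic_of_orderOf_eq_card a this

lemma hasLeeWeight_of_isCyclic {G : Type*} [Group G] [Finite G]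
    (hodd : Odd (Nat.card G)) (hc : IsCyclic G) : HasLeeWeight G := by
  classical
  obtain ⟨g, hg⟩ := hc.exists_generator
  set n := Nat.card G with hn
  obtain ⟨t, ht⟩ := hodd
  have hord : orderOf g = n := orderOf_eq_card_of_forall_mem_zpowers hg
  have hnpos : 0 < n := Nat.card_pos
  have hex : ∀ x : G, ∃ i : ℕ, g ^ i = x := fun x =>
    (Submonoid.mem_powers_iff x g).mp
      ((isOfFinOrder_of_finite g).mem_powers_iff_mem_zpowers.mpr (hg x))
  have hgn : g ^ n = 1 := by rw [← hord]; exact pow_orderOf_eq_one g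
  let L : G → ℕ := fun x => Nat.find (hex x)
  have hLspec : ∀ x, g ^ L x = x := fun x => Nat.find_spec (hex x)
  have hLlt : ∀ x, L x < n := by
    intro x
    obtain ⟨i, hi⟩ := hex x
    have h2 : g ^ (i % n) = x := by
      rw [← hi, ← hord]; exact pow_mod_orderOf g i
    have h3 : L x ≤ i % n := Nat.find_min' (hex x) h2
    have h4 : i % n < n := Nat.mod_lt _ hnpos
    omega
  have hLpow : ∀ i : ℕ, i < n → L (g ^ i) = i := by
    intro i hi
    have h1 : L (g ^ i) ≤ i := Nat.find_min' (hex (g ^ i)) rfl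
    have h2 : g ^ L (g ^ i) = g ^ i := hLspec _
    have h3 : g ^ (i - L (g ^ i)) * g ^ L (g ^ i) = 1 * g ^ L (g ^ i) := by
      rw [← pow_add, one_mul]
      have h4 : i - L (g ^ i) + L (g ^ i) = i := by omega
      rw [h4]; exact h2.symm
    have h5 : g ^ (i - L (g ^ i)) = 1 := mul_right_cancel h3
    have h6 := orderOf_dvd_of_pow_eq_one h5
    rw [hord] at h6
    have h7 := Nat.eq_zero_of_dvd_of_lt h6 (by omega)
    omega
  have hL1 : L 1 = 0 := by
    have h1 : L 1 ≤ 0 := Nat.find_min' (hex 1) (pow_zero g)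
    omega
  have hinvpow : ∀ i : ℕ, i < n → (g ^ i)⁻¹ = g ^ ((n - i) % n) := by
    intro i hi
    symm
    rw [eq_inv_iff_mul_eq_one, ← pow_add]
    rcases Nat.eq_zero_or_pos i with h0 | h0
    · subst h0
      simp [Nat.mod_self]
    · rw [Nat.mod_eq_of_lt (by omega)]
      have : n - i + i = n := by omega
      rw [this]; exact hgn
  have hLinv : ∀ x : G, L x⁻¹ = (n - L x) % n := by
    intro x
    conv_lhs => rw [← hLspec x]
    rw [hinvpow _ (hLlt x)]
    exact hLpow _ (Nat.mod_lt _ hnpos)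
  have hwinv : ∀ x : G, min (L x⁻¹) (n - L x⁻¹) = min (L x) (n - L x) := by
    intro x
    rw [hLinv x]
    have h1 := hLlt x
    rcases Nat.eq_zero_or_pos (L x) with h0 | h0
    · rw [h0]; simp [Nat.mod_self]
    · rw [Nat.mod_eq_of_lt (by omega)]
      omega
  refine ⟨fun x => min (L x) (n - L x), ⟨?_, ?_, ?_⟩, ?_, ?_⟩
  · -- vanishing
    intro x
    show min (L x) (n - L x) = 0 ↔ x = 1
    constructor
    · intro hx
      have := hLlt x
      have hx0 : L x = 0 := by omega
      rw [← hLspec x, hx0, pow_zero]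
    · intro hx
      rw [hx, hL1]
      omega
  · -- symmetry
    intro x
    exact hwinv x
  · -- triangle
    intro x y
    show min (L (x * y)) (n - L (x * y)) ≤ min (L x) (n - L x) + min (L y) (n - L y)
    have hxy : x * y = g ^ ((L x + L y) % n) := by
      rw [← hord, pow_mod_orderOf, pow_add, hLspec, hLspec]
    have hLxy : L (x * y) = (L x + L y) % n := by
      rw [hxy]; exact hLpow _ (Nat.mod_lt _ hnpos)
    have h1 := hLlt x
    have h2 := hLlt y
    have h3 : (L x + L y) % n = L x + L y ∨ (L x + L y) % n + n = L x + L y := by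
      rcases Nat.lt_or_ge (L x + L y) n with h | h
      · left; exact Nat.mod_eq_of_lt h
      · right
        rw [Nat.mod_eq_sub_mod h, Nat.mod_eq_of_lt (by omega)]
        omega
    rw [hLxy]
    omega
  · -- gapless
    intro x m hm
    have hm' : m ≤ min (L x) (n - L x) := hm
    have h1 := hLlt x
    have hmt : m ≤ t := by omega
    refine ⟨g ^ m, ?_⟩
    show min (L (g ^ m)) (n - L (g ^ m)) = m
    rw [hLpow m (by omega)]
    omega
  · -- level sets
    intro x y
    constructor
    · intro hxy
      have hxy' : min (L x) (n - L x) = min (L y) (n - L y) := hxy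
      have h1 := hLlt x
      have h2 := hLlt y
      have h3 : L x = L y ∨ (L x + L y = n ∧ 0 < L x ∧ 0 < L y) := by omega
      rcases h3 with h3 | ⟨h3, h4, h5⟩
      · left
        rw [← hLspec x, ← hLspec y, h3]
      · right
        have h6 : y⁻¹ = g ^ ((n - L y) % n) := by
          conv_lhs => rw [← hLspec y]
          exact hinvpow _ h2
        rw [h6, ← hLspec x, Nat.mod_eq_of_lt (by omega)]
        congr 1
        omega
    · rintro (rfl | rfl)
      · rfl
      · show min (L y⁻¹) (n - L y⁻¹) = min (L y) (n - L y)
        exact hwinv y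

/-- A finite group of odd order has a Lee weight iff it is cyclic. -/
theorem hasLeeWeight_iff_isCyclic_of_odd {G : Type*} [Group G] [Finite G]
    (hodd : Odd (Nat.card G)) : HasLeeWeight G ↔ IsCyclic G := by
  exact ⟨isCyclic_of_hasLeeWeight hodd, hasLeeWeight_of_isCyclic hodd⟩
end

section
/- For every n ≥ 1, the dihedral group DihedralGroup n (of order 2n) has a Lee weight. -/
/-- The explicit Lee weight on the dihedral group. -/
def dihW (n : ℕ) : DihedralGroup n → ℕ
  | .r i => if 2 * i.val ≤ n then 3 * i.val else 3 * (n - i.val)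
  | .sr i => if i.val = 0 then 1 else
      if 2 * i.val ≤ n then 3 * i.val - 1 else 3 * (n - i.val) + 1

@[simp] theorem dihW_r (n : ℕ) (i : ZMod n) :
    dihW n (.r i) = if 2 * i.val ≤ n then 3 * i.val else 3 * (n - i.val) := rfl

@[simp] theorem dihW_sr (n : ℕ) (i : ZMod n) :
    dihW n (.sr i) = if i.val = 0 then 1 else
      if 2 * i.val ≤ n then 3 * i.val - 1 else 3 * (n - i.val) + 1 := rfl

theorem dih_inv_r {n : ℕ} (i : ZMod n) : (DihedralGroup.r i)⁻¹ = .r (-i) := rfl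

theorem dih_inv_sr {n : ℕ} (i : ZMod n) : (DihedralGroup.sr i)⁻¹ = .sr i := rfl

/-- Additivity of `ZMod.val` up to one copy of `n`. -/
theorem zmod_val_add {n : ℕ} [NeZero n] (i j : ZMod n) :
    (i + j).val = i.val + j.val ∨ (i + j).val + n = i.val + j.val := by
  have h1 := ZMod.val_lt i
  have h2 := ZMod.val_lt j
  have h3 := ZMod.val_add i j
  rcases Nat.lt_or_ge (i.val + j.val) n with h | h
  · left; rw [h3, Nat.mod_eq_of_lt h]
  · right; rw [h3, Nat.mod_eq_sub_mod h, Nat.mod_eq_of_lt (by omega)]; omega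

/-- Subtractivity of `ZMod.val` up to one copy of `n`. -/
theorem zmod_val_sub {n : ℕ} [NeZero n] (i j : ZMod n) :
    (i - j).val + j.val = i.val ∨ (i - j).val + j.val = i.val + n := by
  have h := zmod_val_add (i - j) j
  rw [sub_add_cancel] at h
  omega

theorem zmod_eq_iff_val {n : ℕ} [NeZero n] (i j : ZMod n) : i = j ↔ i.val = j.val :=
  ⟨fun h => h ▸ rfl, fun h => ZMod.val_injective n h⟩

theorem zmod_eq_neg_iff_val {n : ℕ} [NeZero n] (i j : ZMod n) :
    i = -j ↔ (i + j).val = 0 := by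
  rw [eq_neg_iff_add_eq_zero, ← ZMod.val_eq_zero]

/-- Every dihedral group `𝔻_n` (of order `2n`, `n ≥ 1`) has a Lee weight. -/
theorem dihedralGroup_hasLeeWeight (n : ℕ) (hn : 1 ≤ n) :
    HasLeeWeight (DihedralGroup n) := by
  haveI : NeZero n := ⟨by omega⟩
  refine ⟨dihW n, ⟨?_, ?_, ?_⟩, ?_, ?_⟩
  · -- vanishing
    rintro (i | i)
    · have h1 := ZMod.val_lt i
      rw [DihedralGroup.one_def, dihW_r]
      constructor
      · intro h
        have : i.val = 0 := by split_ifs at h <;> omega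
        have := (zmod_eq_iff_val i 0).2 (by simp [this])
        simp [this]
      · rintro h
        have : i = 0 := DihedralGroup.r.inj h
        simp [this]
    · have h1 := ZMod.val_lt i
      rw [DihedralGroup.one_def, dihW_sr]
      constructor
      · intro h; split_ifs at h; omega
      · intro h; exact absurd h (by intro h'; cases h')
  · -- symmetry under inversion
    rintro (i | i)
    · rw [dih_inv_r, dihW_r, dihW_r]
      have h1 := ZMod.val_lt i
      have h2 := ZMod.val_lt (-i)
      have h3 : (-i + i).val = 0 := by simp
      have h4 := zmod_val_add (-i) i
      split_ifs <;> omega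
    · rw [dih_inv_sr]
  · -- triangle inequality
    rintro (i | i) (j | j)
    · rw [DihedralGroup.r_mul_r, dihW_r, dihW_r, dihW_r]
      have h1 := ZMod.val_lt i
      have h2 := ZMod.val_lt j
      have h3 := ZMod.val_lt (i + j)
      have h4 := zmod_val_add i j
      split_ifs <;> omega
    · rw [DihedralGroup.r_mul_sr, dihW_r, dihW_sr, dihW_sr]
      have h1 := ZMod.val_lt i
      have h2 := ZMod.val_lt j
      have h3 := ZMod.val_lt (j - i)
      have h4 := zmod_val_sub j i
      split_ifs <;> omega
    · rw [DihedralGroup.sr_mul_r, dihW_r, dihW_sr, dihW_sr]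
      have h1 := ZMod.val_lt i
      have h2 := ZMod.val_lt j
      have h3 := ZMod.val_lt (i + j)
      have h4 := zmod_val_add i j
      split_ifs <;> omega
    · rw [DihedralGroup.sr_mul_sr, dihW_r, dihW_sr, dihW_sr]
      have h1 := ZMod.val_lt i
      have h2 := ZMod.val_lt j
      have h3 := ZMod.val_lt (j - i)
      have h4 := zmod_val_sub j i
      split_ifs <;> omega
  · -- gapless
    intro g m hm
    have hb : 2 * dihW n g ≤ 3 * n := by
      rcases g with i | i
      · have h1 := ZMod.val_lt i
        rw [dihW_r]; split_ifs <;> omega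
      · have h1 := ZMod.val_lt i
        rw [dihW_sr]; split_ifs <;> omega
    have hm3 : 2 * m ≤ 3 * n := by omega
    clear hm hb g
    have hlt3 : m % 3 = 0 ∨ m % 3 = 1 ∨ m % 3 = 2 := by omega
    rcases hlt3 with h | h | h
    · -- m = 3k, use r k
      obtain ⟨k, rfl⟩ : ∃ k, m = 3 * k := ⟨m / 3, by omega⟩
      have hk : k < n := by omega
      refine ⟨.r (k : ZMod n), ?_⟩
      rw [dihW_r, ZMod.val_cast_of_lt hk]
      have : 2 * k ≤ n := by omega
      simp [this]
    · -- m = 3k + 1, use sr 0 or sr (n - k)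
      obtain ⟨k, rfl⟩ : ∃ k, m = 3 * k + 1 := ⟨m / 3, by omega⟩
      rcases Nat.eq_zero_or_pos k with rfl | hk
      · exact ⟨.sr 0, by simp⟩
      · have h2k : 2 * k < n := by omega
        have hlt : n - k < n := by omega
        refine ⟨.sr ((n - k : ℕ) : ZMod n), ?_⟩
        rw [dihW_sr, ZMod.val_cast_of_lt hlt]
        have hne : ¬ (n - k = 0) := by omega
        have hgt : ¬ (2 * (n - k) ≤ n) := by omega
        rw [if_neg hne, if_neg hgt]
        omega
    · -- m = 3k + 2, use sr (k+1)
      obtain ⟨k, rfl⟩ : ∃ k, m = 3 * k + 2 := ⟨m / 3, by omega⟩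
      have h2k : 2 * (k + 1) ≤ n := by omega
      have hlt : k + 1 < n := by omega
      refine ⟨.sr ((k + 1 : ℕ) : ZMod n), ?_⟩
      rw [dihW_sr, ZMod.val_cast_of_lt hlt]
      rw [if_neg (by omega), if_pos h2k]
      omega
  · -- level sets
    rintro (i | i) (j | j)
    · rw [dih_inv_r, dihW_r, dihW_r]
      have hrr : DihedralGroup.r i = .r j ↔ i = j := by
        constructor
        · intro h; injection h
        · rintro rfl; rfl
      have hrn : DihedralGroup.r i = .r (-j) ↔ i = -j := by
        constructor
        · intro h; injection h
        · rintro rfl; rfl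
      rw [hrr, hrn, zmod_eq_iff_val, zmod_eq_neg_iff_val]
      have h1 := ZMod.val_lt i
      have h2 := ZMod.val_lt j
      have h3 := ZMod.val_lt (i + j)
      have h4 := zmod_val_add i j
      split_ifs <;> omega
    · rw [dih_inv_sr, dihW_r, dihW_sr]
      have h1 := ZMod.val_lt i
      have h2 := ZMod.val_lt j
      constructor
      · intro h; split_ifs at h <;> omega
      · rintro (h | h) <;> exact absurd h (by simp)
    · rw [dih_inv_r, dihW_r, dihW_sr]
      have h1 := ZMod.val_lt i
      have h2 := ZMod.val_lt j
      constructor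
      · intro h; split_ifs at h <;> omega
      · rintro (h | h) <;> exact absurd h (by simp)
    · rw [dih_inv_sr, dihW_sr, dihW_sr]
      have hss : DihedralGroup.sr i = .sr j ↔ i = j := by
        constructor
        · intro h; injection h
        · rintro rfl; rfl
      rw [hss, or_self, zmod_eq_iff_val]
      have h1 := ZMod.val_lt i
      have h2 := ZMod.val_lt j
      split_ifs <;> omega
end

section
/- For every n ≥ 2, the dicyclic group QuaternionGroup n (of order 4n, given by the presentation ⟨x, y : x^{2n} = 1, y² = xⁿ, y⁻¹xy = x⁻¹⟩; this family includes the quaternion group Q₈ and the generalized quaternion groups) has a Lee weight. -/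
private lemma modfact2 (m a : ℕ) (hm : 0 < m) (ha : a < 2 * m) :
    ∃ q, a % m = q ∧ q < m ∧ (q = a ∨ q + m = a) := by
  refine ⟨a % m, rfl, Nat.mod_lt _ hm, ?_⟩
  rcases Nat.lt_or_ge a m with h | h
  · exact Or.inl (Nat.mod_eq_of_lt h)
  · refine Or.inr ?_
    rw [Nat.mod_eq_sub_mod h, Nat.mod_eq_of_lt (by omega)]
    omega

private lemma modfact4 (m a : ℕ) (hm : 0 < m) (ha : a < 4 * m) :
    ∃ q, a % m = q ∧ q < m ∧ (q = a ∨ q + m = a ∨ q + 2 * m = a ∨ q + 3 * m = a) := by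
  refine ⟨a % m, rfl, Nat.mod_lt _ hm, ?_⟩
  rcases Nat.lt_or_ge a m with h1 | h1
  · exact Or.inl (Nat.mod_eq_of_lt h1)
  rcases Nat.lt_or_ge a (2 * m) with h2 | h2
  · refine Or.inr (Or.inl ?_)
    rw [Nat.mod_eq_sub_mod h1, Nat.mod_eq_of_lt (by omega)]
    omega
  rcases Nat.lt_or_ge a (3 * m) with h3 | h3
  · refine Or.inr (Or.inr (Or.inl ?_))
    rw [Nat.mod_eq_sub_mod h1, Nat.mod_eq_sub_mod (by omega), Nat.mod_eq_of_lt (by omega)]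
    omega
  · refine Or.inr (Or.inr (Or.inr ?_))
    rw [Nat.mod_eq_sub_mod h1, Nat.mod_eq_sub_mod (by omega),
      Nat.mod_eq_sub_mod (by omega), Nat.mod_eq_of_lt (by omega)]
    omega

/-- weight of `a i` as a function of `i.val`. -/
private def qleeA (n v : ℕ) : ℕ :=
  min (2 * min v (2 * n - v)) (2 * n + 1 - 2 * min v (2 * n - v))

/-- weight of `xa i` as a function of `i.val`. -/
private def qleeX (n v : ℕ) : ℕ :=
  n + min (max 1 (2 * (v % n))) (2 * n + 1 - 2 * (v % n))

/-- The Lee weight on the dicyclic group. -/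
private def qlee (n : ℕ) : QuaternionGroup n → ℕ
  | .a i => qleeA n i.val
  | .xa i => qleeX n i.val

private lemma qlee_a (n : ℕ) (i : ZMod (2 * n)) :
    qlee n (.a i) = qleeA n i.val := rfl

private lemma qlee_xa (n : ℕ) (i : ZMod (2 * n)) :
    qlee n (.xa i) = qleeX n i.val := rfl

private lemma qleeX_mod (n v : ℕ) : qleeX n (v % (2 * n)) = qleeX n v := by
  unfold qleeX
  rw [Nat.mod_mod_of_dvd v (dvd_mul_left n 2)]

private lemma qleeX_addmod (n y t : ℕ) : qleeX n (y + t % (2 * n)) = qleeX n (y + t) := by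
  unfold qleeX
  rw [Nat.add_mod y (t % (2 * n)), Nat.mod_mod_of_dvd t (dvd_mul_left n 2), ← Nat.add_mod]

private lemma qleeA_le (n v : ℕ) : qleeA n v ≤ n := by
  unfold qleeA
  omega

private lemma qleeX_ge (n v : ℕ) (hn : 0 < n) : n + 1 ≤ qleeX n v := by
  unfold qleeX
  have h1 : v % n < n := Nat.mod_lt _ hn
  generalize v % n = s at h1 ⊢
  omega

private lemma qleeX_le (n v : ℕ) (hn : 0 < n) : qleeX n v ≤ 2 * n := by
  unfold qleeX
  have h1 : v % n < n := Nat.mod_lt _ hn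
  generalize v % n = s at h1 ⊢
  omega

set_option maxHeartbeats 1000000 in
/-- Every dicyclic group `ℚ_{4n}` (of order `4n`, `n ≥ 2`) has a Lee weight. -/
theorem quaternionGroup_hasLeeWeight (n : ℕ) (hn : 2 ≤ n) :
    HasLeeWeight (QuaternionGroup n) := by
  have hN : NeZero (2 * n) := ⟨by omega⟩
  have hn2 : n < 2 * n := by omega
  -- explicit inverses
  have inv_a : ∀ i : ZMod (2 * n),
      (QuaternionGroup.a i)⁻¹ = QuaternionGroup.a (-i) := by
    intro i
    have h1 : QuaternionGroup.a (-i) * QuaternionGroup.a i = 1 := by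
      rw [QuaternionGroup.a_mul_a, neg_add_cancel, QuaternionGroup.one_def]
    exact (eq_inv_of_mul_eq_one_left h1).symm
  have inv_xa : ∀ i : ZMod (2 * n),
      (QuaternionGroup.xa i)⁻¹ = QuaternionGroup.xa ((n : ZMod (2 * n)) + i) := by
    intro i
    have h1 : QuaternionGroup.xa ((n : ZMod (2 * n)) + i) * QuaternionGroup.xa i = 1 := by
      rw [QuaternionGroup.xa_mul_xa, sub_self, QuaternionGroup.one_def]
    exact (eq_inv_of_mul_eq_one_left h1).symm
  -- symmetry under inversion
  have hsymm : ∀ x : QuaternionGroup n, qlee n x⁻¹ = qlee n x := by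
    rintro (i | i) <;> have hx := ZMod.val_lt i
    · rw [inv_a, qlee_a, qlee_a, ZMod.neg_val']
      obtain ⟨t, ht, htl, hte⟩ := modfact2 (2 * n) (2 * n - i.val) (by omega) (by omega)
      rw [ht]
      simp only [qleeA]
      omega
    · rw [inv_xa, qlee_xa, qlee_xa, ZMod.val_add, ZMod.val_natCast,
        Nat.mod_eq_of_lt hn2, qleeX_mod]
      simp only [qleeX]
      obtain ⟨s, hs, hsl, hse⟩ := modfact4 n (n + i.val) (by omega) (by omega)
      rw [hs]
      obtain ⟨u, hu, hul, hue⟩ := modfact2 n i.val (by omega) (by omega)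
      rw [hu]
      omega
  refine ⟨qlee n, ⟨?_, hsymm, ?_⟩, ?_, ?_⟩
  · -- vanishing exactly at the identity
    rintro (i | i) <;> have hx := ZMod.val_lt i
    · rw [QuaternionGroup.one_def, qlee_a]
      simp only [qleeA]
      constructor
      · intro h
        have hv : i.val = 0 := by omega
        have h0 : i = 0 := (ZMod.val_eq_zero i).mp hv
        rw [h0]
      · intro h
        have h0 : i = 0 := by injection h
        rw [h0, ZMod.val_zero]
        omega
    · rw [QuaternionGroup.one_def, qlee_xa]
      constructor
      · intro h
        have h1 := qleeX_ge n i.val (by omega)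
        omega
      · intro h
        cases h
  · -- triangle inequality
    rintro (i | i) (j | j) <;> have hx := ZMod.val_lt i <;> have hy := ZMod.val_lt j
    · rw [QuaternionGroup.a_mul_a, qlee_a, qlee_a, qlee_a, ZMod.val_add]
      obtain ⟨r, hr, hrl, hre⟩ := modfact2 (2 * n) (i.val + j.val) (by omega) (by omega)
      rw [hr]
      simp only [qleeA]
      omega
    · rw [QuaternionGroup.a_mul_xa, qlee_a, qlee_xa, qlee_xa, sub_eq_add_neg,
        ZMod.val_add, ZMod.neg_val', qleeX_mod, qleeX_addmod]
      simp only [qleeA, qleeX]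
      obtain ⟨s, hs, hsl, hse⟩ := modfact4 n (j.val + (2 * n - i.val)) (by omega) (by omega)
      rw [hs]
      obtain ⟨v, hv, hvl, hve⟩ := modfact2 n j.val (by omega) (by omega)
      rw [hv]
      omega
    · rw [QuaternionGroup.xa_mul_a, qlee_xa, qlee_xa, qlee_a, ZMod.val_add, qleeX_mod]
      simp only [qleeA, qleeX]
      obtain ⟨s, hs, hsl, hse⟩ := modfact4 n (i.val + j.val) (by omega) (by omega)
      rw [hs]
      obtain ⟨u, hu, hul, hue⟩ := modfact2 n i.val (by omega) (by omega)
      rw [hu]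
      omega
    · rw [QuaternionGroup.xa_mul_xa, qlee_a, qlee_xa, qlee_xa]
      refine le_trans (qleeA_le n _) (le_trans ?_
        (Nat.add_le_add (qleeX_ge n i.val (by omega)) (qleeX_ge n j.val (by omega))))
      omega
  · -- gapless
    intro g m hm
    have hg : qlee n g ≤ 2 * n := by
      rcases g with i | i
      · have hx := ZMod.val_lt i
        rw [qlee_a]
        exact le_trans (qleeA_le n i.val) (by omega)
      · rw [qlee_xa]
        exact qleeX_le n i.val (by omega)
    have hm2 : m ≤ 2 * n := le_trans hm hg
    clear hm hg g
    rcases Nat.lt_or_ge m (n + 1) with h | h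
    · rcases Nat.mod_two_eq_zero_or_one m with he | he
      · refine ⟨.a ((m / 2 : ℕ) : ZMod (2 * n)), ?_⟩
        rw [qlee_a, ZMod.val_natCast, Nat.mod_eq_of_lt (by omega)]
        simp only [qleeA]
        omega
      · refine ⟨.a (((2 * n + 1 - m) / 2 : ℕ) : ZMod (2 * n)), ?_⟩
        rw [qlee_a, ZMod.val_natCast, Nat.mod_eq_of_lt (by omega)]
        simp only [qleeA]
        omega
    · rcases Nat.mod_two_eq_zero_or_one (m - n) with he | he
      · refine ⟨.xa (((m - n) / 2 : ℕ) : ZMod (2 * n)), ?_⟩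
        rw [qlee_xa, ZMod.val_natCast, Nat.mod_eq_of_lt (by omega)]
        simp only [qleeX]
        rw [Nat.mod_eq_of_lt (show (m - n) / 2 < n by omega)]
        omega
      · refine ⟨.xa (((2 * n + 1 - (m - n)) / 2 : ℕ) : ZMod (2 * n)), ?_⟩
        rw [qlee_xa, ZMod.val_natCast, Nat.mod_eq_of_lt (by omega)]
        simp only [qleeX]
        obtain ⟨s, hs, hsl, hse⟩ :=
          modfact2 n ((2 * n + 1 - (m - n)) / 2) (by omega) (by omega)
        rw [hs]
        omega
  · -- level sets are exactly {a, a⁻¹}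
    intro g h
    refine ⟨?_, fun hh => ?_⟩
    swap
    · rcases hh with rfl | rfl
      · rfl
      · exact hsymm h
    rcases g with i | i <;> rcases h with j | j <;>
      have hx := ZMod.val_lt i <;> have hy := ZMod.val_lt j <;> intro hq
    · rw [qlee_a, qlee_a] at hq
      simp only [qleeA] at hq
      have hvv : i.val = j.val ∨ i.val + j.val = 2 * n := by omega
      rcases hvv with hvv | hvv
      · left
        congr 1
        exact ZMod.val_injective _ hvv
      · right
        rw [inv_a]
        congr 1
        apply ZMod.val_injective
        rw [ZMod.neg_val', Nat.mod_eq_of_lt (by omega)]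
        omega
    · rw [qlee_a, qlee_xa] at hq
      exact absurd hq (Nat.ne_of_lt (lt_of_le_of_lt (qleeA_le n i.val)
        (lt_of_lt_of_le (Nat.lt_succ_self n) (qleeX_ge n j.val (by omega)))))
    · rw [qlee_xa, qlee_a] at hq
      exact absurd hq.symm (Nat.ne_of_lt (lt_of_le_of_lt (qleeA_le n j.val)
        (lt_of_lt_of_le (Nat.lt_succ_self n) (qleeX_ge n i.val (by omega)))))
    · rw [qlee_xa, qlee_xa] at hq
      simp only [qleeX] at hq
      obtain ⟨s, hs, hsl, hse⟩ := modfact2 n i.val (by omega) (by omega)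
      obtain ⟨u, hu, hul, hue⟩ := modfact2 n j.val (by omega) (by omega)
      rw [hs, hu] at hq
      have hvv : i.val = j.val ∨ i.val = j.val + n ∨ j.val = i.val + n := by omega
      rcases hvv with hvv | hvv | hvv
      · left
        congr 1
        exact ZMod.val_injective _ hvv
      · right
        rw [inv_xa]
        congr 1
        apply ZMod.val_injective
        rw [ZMod.val_add, ZMod.val_natCast, Nat.mod_eq_of_lt hn2,
          Nat.mod_eq_of_lt (by omega)]
        omega
      · right
        rw [inv_xa]
        congr 1
        apply ZMod.val_injective
        rw [ZMod.val_add, ZMod.val_natCast, Nat.mod_eq_of_lt hn2]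
        obtain ⟨t, ht, htl, hte⟩ := modfact2 (2 * n) (n + j.val) (by omega) (by omega)
        rw [ht]
        omega
end
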